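/- arXiv:1305.4013 — 10 statements merged into one kernel-verified Lean document; each statement's English description precedes it below -/
import Mathlib

section
/- Let 0 < a < 1, N ≥ 1, and Φ_{ij} = a^{|i-j|/N} for 1 ≤ i,j ≤ N+1. Then Φ^{-1}𝟏 = (1/(1 + a^{1/N})) · (1, 1 - a^{1/N}, ..., 1 - a^{1/N}, 1)^T, which in particular has all entries strictly positive. -/
open Matrix Finset

/-- entries of the tridiagonal (un-normalized) inverse of the exponential kernel matrix -/
def tfun (N : ℕ) (r : ℝ) (i j : ℕ) : ℝ :=
  if i = j then (if i = 0 ∨ i = N then 1 else 1 + r ^ 2)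
  else if Nat.dist i j = 1 then -r else 0

lemma ndist (m n : ℕ) : Nat.dist m n = m - n + (n - m) := rfl

lemma tfun_eq_zero (N : ℕ) (r : ℝ) (i j : ℕ) (h1 : i ≠ j) (h2 : Nat.dist i j ≠ 1) :
    tfun N r i j = 0 := by simp [tfun, h1, h2]

lemma tfun_left (N : ℕ) (hN : 1 ≤ N) (r : ℝ) (f : ℕ → ℝ) :
    ∑ j ∈ range (N + 1), tfun N r 0 j * f j = tfun N r 0 0 * f 0 + tfun N r 0 1 * f 1 := by
  have hsub : ∑ j ∈ ({0, 1} : Finset ℕ), tfun N r 0 j * f j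
      = ∑ j ∈ range (N + 1), tfun N r 0 j * f j := by
    apply Finset.sum_subset
    · intro x hx; simp only [Finset.mem_insert, Finset.mem_singleton] at hx
      simp only [Finset.mem_range]; omega
    · intro x hx hx'
      simp only [Finset.mem_insert, Finset.mem_singleton, not_or] at hx'
      rw [tfun_eq_zero _ _ _ _ (by omega) (by rw [ndist]; omega), zero_mul]
  rw [← hsub, Finset.sum_pair (by norm_num)]

lemma tfun_right (N : ℕ) (hN : 1 ≤ N) (r : ℝ) (f : ℕ → ℝ) :
    ∑ j ∈ range (N + 1), tfun N r N j * f j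
      = tfun N r N (N - 1) * f (N - 1) + tfun N r N N * f N := by
  have hsub : ∑ j ∈ ({N - 1, N} : Finset ℕ), tfun N r N j * f j
      = ∑ j ∈ range (N + 1), tfun N r N j * f j := by
    apply Finset.sum_subset
    · intro x hx; simp only [Finset.mem_insert, Finset.mem_singleton] at hx
      simp only [Finset.mem_range]; omega
    · intro x hx hx'
      simp only [Finset.mem_range] at hx
      simp only [Finset.mem_insert, Finset.mem_singleton, not_or] at hx'
      rw [tfun_eq_zero _ _ _ _ (by omega) (by rw [ndist]; omega), zero_mul]
  rw [← hsub, Finset.sum_pair (by omega)]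

lemma tfun_mid (N : ℕ) (r : ℝ) (i : ℕ) (hi1 : 1 ≤ i) (hi2 : i + 1 ≤ N) (f : ℕ → ℝ) :
    ∑ j ∈ range (N + 1), tfun N r i j * f j
      = tfun N r i (i - 1) * f (i - 1) +
        (tfun N r i i * f i + tfun N r i (i + 1) * f (i + 1)) := by
  have hsub : ∑ j ∈ ({i - 1, i, i + 1} : Finset ℕ), tfun N r i j * f j
      = ∑ j ∈ range (N + 1), tfun N r i j * f j := by
    apply Finset.sum_subset
    · intro x hx; simp only [Finset.mem_insert, Finset.mem_singleton] at hx
      simp only [Finset.mem_range]; omega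
    · intro x hx hx'
      simp only [Finset.mem_insert, Finset.mem_singleton, not_or] at hx'
      rw [tfun_eq_zero _ _ _ _ (by omega) (by rw [ndist]; omega), zero_mul]
  rw [← hsub, Finset.sum_insert (by simp only [Finset.mem_insert, Finset.mem_singleton]; omega),
    Finset.sum_insert (by simp only [Finset.mem_singleton]; omega), Finset.sum_singleton]

lemma tfun_diag_end (N : ℕ) (r : ℝ) (i : ℕ) (hi : i = 0 ∨ i = N) : tfun N r i i = 1 := by
  simp [tfun, hi]

lemma tfun_diag_mid (N : ℕ) (r : ℝ) (i : ℕ) (hi : ¬(i = 0 ∨ i = N)) :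
    tfun N r i i = 1 + r ^ 2 := by simp [tfun, hi]

lemma tfun_off (N : ℕ) (r : ℝ) (i j : ℕ) (h1 : i ≠ j) (h2 : Nat.dist i j = 1) :
    tfun N r i j = -r := by simp [tfun, h1, h2]

lemma sum_tfun_mul (N : ℕ) (hN : 1 ≤ N) (r : ℝ) (i k : ℕ) (hi : i ≤ N) (hk : k ≤ N) :
    ∑ j ∈ range (N + 1), tfun N r i j * r ^ Nat.dist j k
      = (1 - r ^ 2) * (if i = k then 1 else 0) := by
  rcases eq_or_ne i 0 with h0 | h0
  · subst h0
    rw [tfun_left N hN, tfun_diag_end N r 0 (Or.inl rfl),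
      tfun_off N r 0 1 (by omega) (by rw [ndist]),
      show Nat.dist 0 k = k from by rw [ndist]; omega]
    rcases eq_or_ne k 0 with rfl | hk0
    · rw [show Nat.dist 1 0 = 1 from by rw [ndist], if_pos rfl]; norm_num; ring
    · obtain ⟨m, rfl⟩ : ∃ m, k = m + 1 := ⟨k - 1, by omega⟩
      rw [show Nat.dist 1 (m + 1) = m from by rw [ndist]; omega, if_neg (by omega), pow_succ]
      ring
  · rcases eq_or_ne i N with hiN | hiN
    · rw [hiN, tfun_right N hN, tfun_diag_end N r N (Or.inr rfl),
        tfun_off N r N (N - 1) (by omega) (by rw [ndist]; omega),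
        show Nat.dist N k = N - k from by rw [ndist]; omega]
      rcases eq_or_ne k N with hkN | hkN
      · rw [hkN, show Nat.dist (N - 1) N = 1 from by rw [ndist]; omega, if_pos rfl,
          show N - N = 0 from by omega]
        norm_num; ring
      · obtain ⟨m, hm⟩ : ∃ m, N - k = m + 1 := ⟨N - k - 1, by omega⟩
        rw [show Nat.dist (N - 1) k = m from by rw [ndist]; omega, hm, if_neg (by omega),
          pow_succ]
        ring
    · have hi1 : 1 ≤ i := by omega
      have hi2 : i + 1 ≤ N := by omega
      rw [tfun_mid N r i hi1 hi2, tfun_diag_mid N r i (by omega),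
        tfun_off N r i (i - 1) (by omega) (by rw [ndist]; omega),
        tfun_off N r i (i + 1) (by omega) (by rw [ndist]; omega)]
      rcases lt_trichotomy k i with hki | hki
      · obtain ⟨m, hm⟩ : ∃ m, i - k = m + 1 := ⟨i - k - 1, by omega⟩
        rw [show Nat.dist (i - 1) k = m from by rw [ndist]; omega,
          show Nat.dist i k = m + 1 from by rw [ndist]; omega,
          show Nat.dist (i + 1) k = m + 2 from by rw [ndist]; omega, if_neg (by omega),
          pow_succ, pow_succ, pow_succ]
        ring
      · rcases hki with rfl | hki
        · rw [show Nat.dist (k - 1) k = 1 from by rw [ndist]; omega,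
            show Nat.dist k k = 0 from by rw [ndist]; omega,
            show Nat.dist (k + 1) k = 1 from by rw [ndist]; omega, if_pos rfl]
          norm_num; ring
        · obtain ⟨m, hm⟩ : ∃ m, k - i = m + 1 := ⟨k - i - 1, by omega⟩
          rw [show Nat.dist (i - 1) k = m + 2 from by rw [ndist]; omega,
            show Nat.dist i k = m + 1 from by rw [ndist]; omega,
            show Nat.dist (i + 1) k = m from by rw [ndist]; omega, if_neg (by omega),
            pow_succ, pow_succ, pow_succ]
          ring

lemma sum_tfun (N : ℕ) (hN : 1 ≤ N) (r : ℝ) (i : ℕ) (hi : i ≤ N) :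
    ∑ j ∈ range (N + 1), tfun N r i j
      = if i = 0 ∨ i = N then 1 - r else 1 - 2 * r + r ^ 2 := by
  have h1 : ∀ j ∈ range (N + 1), tfun N r i j = tfun N r i j * (fun _ => (1:ℝ)) j := by
    intro j _; simp
  rw [Finset.sum_congr rfl h1]
  rcases eq_or_ne i 0 with rfl | h0
  · rw [tfun_left N hN, tfun_diag_end N r 0 (Or.inl rfl),
      tfun_off N r 0 1 (by omega) (by rw [ndist]), if_pos (Or.inl rfl)]
    ring
  · rcases eq_or_ne i N with hiN | hiN
    · rw [hiN, tfun_right N hN, tfun_diag_end N r N (Or.inr rfl),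
        tfun_off N r N (N - 1) (by omega) (by rw [ndist]; omega), if_pos (Or.inr rfl)]
      ring
    · rw [tfun_mid N r i (by omega) (by omega), tfun_diag_mid N r i (by omega),
        tfun_off N r i (i - 1) (by omega) (by rw [ndist]; omega),
        tfun_off N r i (i + 1) (by omega) (by rw [ndist]; omega), if_neg (by omega)]
      ring

theorem Phi_inv_ones (N : ℕ) (hN : 1 ≤ N) (a : ℝ) (ha0 : 0 < a) (ha1 : a < 1)
    (Φ : Matrix (Fin (N + 1)) (Fin (N + 1)) ℝ)
    (hΦ : ∀ i j : Fin (N + 1), Φ i j = a ^ ((|(i : ℝ) - (j : ℝ)|) / (N : ℝ))) :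
    Φ⁻¹.mulVec (fun _ => 1) =
      (1 / (1 + a ^ ((1 : ℝ) / (N : ℝ)))) •
        (fun i : Fin (N + 1) =>
          if i = 0 ∨ i = Fin.last N then 1 else 1 - a ^ ((1 : ℝ) / (N : ℝ))) ∧
    ∀ i : Fin (N + 1), 0 < Φ⁻¹.mulVec (fun _ => 1) i := by
  have hNR : (0 : ℝ) < (N : ℝ) := by exact_mod_cast Nat.lt_of_lt_of_le Nat.zero_lt_one hN
  set r := a ^ ((1 : ℝ) / (N : ℝ)) with hr
  have hr0 : 0 < r := Real.rpow_pos_of_pos ha0 _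
  have hr1 : r < 1 := Real.rpow_lt_one ha0.le ha1 (by positivity)
  have h1r2 : (1 : ℝ) - r ^ 2 ≠ 0 := by nlinarith
  have h1pr : (1 : ℝ) + r ≠ 0 := by nlinarith
  -- Φ in terms of r and Nat.dist
  have hΦ' : ∀ p q : Fin (N + 1), Φ p q = r ^ Nat.dist p.val q.val := by
    intro p q
    rw [hΦ]
    have habs : |(p : ℝ) - (q : ℝ)| = (Nat.dist p.val q.val : ℝ) := by
      rcases le_total (p : ℕ) (q : ℕ) with h | h
      · rw [show Nat.dist p.val q.val = q.val - p.val from by rw [ndist]; omega,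
          abs_sub_comm, abs_of_nonneg (by
            have : ((p : ℕ) : ℝ) ≤ ((q : ℕ) : ℝ) := by exact_mod_cast h
            linarith)]
        push_cast [Nat.cast_sub h]; ring
      · rw [show Nat.dist p.val q.val = p.val - q.val from by rw [ndist]; omega,
          abs_of_nonneg (by
            have : ((q : ℕ) : ℝ) ≤ ((p : ℕ) : ℝ) := by exact_mod_cast h
            linarith)]
        push_cast [Nat.cast_sub h]; ring
    rw [habs]
    rw [show ((Nat.dist p.val q.val : ℝ)) / (N : ℝ)
        = ((1 : ℝ) / (N : ℝ)) * (Nat.dist p.val q.val : ℝ) from by ring,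
      Real.rpow_mul ha0.le, Real.rpow_natCast]
  -- the tridiagonal matrix
  set T : Matrix (Fin (N + 1)) (Fin (N + 1)) ℝ :=
    Matrix.of (fun p q : Fin (N + 1) => tfun N r p.val q.val) with hT
  have hTΦ : T * Φ = (1 - r ^ 2) • (1 : Matrix (Fin (N + 1)) (Fin (N + 1)) ℝ) := by
    ext p q
    rw [Matrix.mul_apply]
    have step : ∀ j : Fin (N + 1), T p j * Φ j q
        = tfun N r p.val j.val * r ^ Nat.dist j.val q.val := by
      intro j; rw [hΦ']; rfl
    rw [Finset.sum_congr rfl (fun j _ => step j),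
      Fin.sum_univ_eq_sum_range (fun m => tfun N r p.val m * r ^ Nat.dist m q.val),
      sum_tfun_mul N hN r p.val q.val (by omega) (by omega)]
    simp only [Matrix.smul_apply, Matrix.one_apply, smul_eq_mul]
    by_cases hpq : p = q
    · rw [if_pos (by rw [hpq]), if_pos hpq]
    · rw [if_neg (fun h => hpq (Fin.ext h)), if_neg hpq]
  have hinv : Φ⁻¹ = (1 - r ^ 2)⁻¹ • T := by
    apply Matrix.inv_eq_left_inv
    rw [Matrix.smul_mul, hTΦ, smul_smul, inv_mul_cancel₀ h1r2, one_smul]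
  have hmv : Φ⁻¹.mulVec (fun _ => 1)
      = fun p : Fin (N + 1) => (1 - r ^ 2)⁻¹ *
          (if p.val = 0 ∨ p.val = N then 1 - r else 1 - 2 * r + r ^ 2) := by
    rw [hinv]
    funext p
    rw [Matrix.smul_mulVec, Pi.smul_apply, smul_eq_mul]
    congr 1
    rw [Matrix.mulVec, dotProduct]
    have step : ∀ j : Fin (N + 1), T p j * (1 : ℝ) = tfun N r p.val j.val := by
      intro j; rw [mul_one]; rfl
    rw [Finset.sum_congr rfl (fun j _ => step j),
      Fin.sum_univ_eq_sum_range (fun m => tfun N r p.val m),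
      sum_tfun N hN r p.val (by omega)]
  have hcond : ∀ p : Fin (N + 1), (p = 0 ∨ p = Fin.last N) ↔ (p.val = 0 ∨ p.val = N) := by
    intro p
    constructor
    · rintro (rfl | rfl) <;> simp [Fin.last]
    · rintro (h | h)
      · exact Or.inl (Fin.ext h)
      · exact Or.inr (Fin.ext (by simp [Fin.last, h]))
  constructor
  · rw [hmv]
    funext p
    simp only [Pi.smul_apply, smul_eq_mul]
    by_cases h : p.val = 0 ∨ p.val = N
    · rw [if_pos h, if_pos ((hcond p).mpr h)]
      have h1mr : (1 : ℝ) - r ≠ 0 := by nlinarith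
      rw [mul_one, inv_mul_eq_div, div_eq_div_iff h1r2 h1pr]
      ring
    · rw [if_neg h, if_neg (fun hh => h ((hcond p).mp hh))]
      rw [inv_mul_eq_div, one_div_mul_eq_div, div_eq_div_iff h1r2 h1pr]
      ring
  · intro p
    rw [hmv]
    have hpos : (0 : ℝ) < (1 - r ^ 2)⁻¹ := by
      apply inv_pos.mpr; nlinarith
    apply mul_pos hpos
    by_cases h : p.val = 0 ∨ p.val = N
    · rw [if_pos h]; linarith
    · rw [if_neg h]; nlinarith
end

section
/- Let 0 < a < 1, κ > 0, N ≥ 1, and let U be the (N+1)×(N+1) upper triangular matrix with U_{ii} = κ, U_{ij} = a^{(j-i)/N} for j > i, and U_{ij} = 0 for j < i. Then U is invertible with inverse V given by V_{ii} = 1/κ, V_{ij} = -a^{(j-i)/N}(κ-1)^{j-i-1}/κ^{j-i+1} for j > i, and V_{ij} = 0 for j < i. -/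
open Matrix

private lemma geom_aux (κ : ℝ) (hκ : κ ≠ 0) (d : ℕ) :
    ∑ e ∈ Finset.range d, (κ - 1) ^ e / κ ^ (e + 2)
      = 1 / κ - (κ - 1) ^ d / κ ^ (d + 1) := by
  induction d with
  | zero => simp
  | succ n ih =>
    rw [Finset.sum_range_succ, ih]
    have h1 : κ ^ (n + 1) ≠ 0 := pow_ne_zero _ hκ
    have h2 : κ ^ (n + 2) ≠ 0 := pow_ne_zero _ hκ
    field_simp
    ring

private lemma mid_sum (κ : ℝ) (hκ : κ ≠ 0) (d : ℕ) (hd : 1 ≤ d) :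
    ∑ t ∈ Finset.range (d - 1), (κ - 1) ^ (d - t - 2) / κ ^ (d - t)
      = 1 / κ - (κ - 1) ^ (d - 1) / κ ^ d := by
  have h := Finset.sum_range_reflect
    (fun e => (κ - 1) ^ e / κ ^ (e + 2)) (d - 1)
  have h2 : ∑ t ∈ Finset.range (d - 1), (κ - 1) ^ (d - t - 2) / κ ^ (d - t)
      = ∑ t ∈ Finset.range (d - 1), (κ - 1) ^ (d - 1 - 1 - t) / κ ^ (d - 1 - 1 - t + 2) := by
    apply Finset.sum_congr rfl
    intro t ht
    have := Finset.mem_range.mp ht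
    have e1 : d - t - 2 = d - 1 - 1 - t := by omega
    have e2 : d - t = d - 1 - 1 - t + 2 := by omega
    rw [e1, e2]
  rw [h2, h, geom_aux κ hκ]
  have h3 : d - 1 + 1 = d := by omega
  rw [h3]

theorem upper_triangular_inverse (N : ℕ) (hN : 1 ≤ N) (a κ : ℝ)
    (ha0 : 0 < a) (ha1 : a < 1) (hκ : 0 < κ)
    (U V : Matrix (Fin (N + 1)) (Fin (N + 1)) ℝ)
    (hU : ∀ i j : Fin (N + 1), U i j =
      if i = j then κ
      else if i < j then a ^ (((j : ℝ) - (i : ℝ)) / (N : ℝ))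
      else 0)
    (hV : ∀ i j : Fin (N + 1), V i j =
      if i = j then 1 / κ
      else if i < j then
        -(a ^ (((j : ℝ) - (i : ℝ)) / (N : ℝ)) * (κ - 1) ^ ((j : ℕ) - (i : ℕ) - 1)
          / κ ^ ((j : ℕ) - (i : ℕ) + 1))
      else 0) :
    IsUnit U.det ∧ U⁻¹ = V := by
  have hκ0 : κ ≠ 0 := ne_of_gt hκ
  have hUV : U * V = 1 := by
    ext i j
    rw [Matrix.mul_apply]
    rcases lt_trichotomy i j with hij | hij | hij
    · -- i < j : entry should be 0
      rw [Matrix.one_apply_ne (ne_of_lt hij)]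
      set d : ℕ := (j : ℕ) - (i : ℕ) with hd
      have hij' : (i : ℕ) < (j : ℕ) := hij
      have hd1 : 1 ≤ d := by omega
      have hjd : (j : ℕ) = (i : ℕ) + d := by omega
      have hjN : (j : ℕ) < N + 1 := j.isLt
      set G : ℕ → ℝ := fun n =>
        (if (i : ℕ) = n then κ
          else if (i : ℕ) < n then a ^ (((n : ℝ) - ((i : ℕ) : ℝ)) / (N : ℝ)) else 0) *
        (if n = (j : ℕ) then 1 / κ
          else if n < (j : ℕ) then
            -(a ^ ((((j : ℕ) : ℝ) - (n : ℝ)) / (N : ℝ)) * (κ - 1) ^ ((j : ℕ) - n - 1)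
              / κ ^ ((j : ℕ) - n + 1))
          else 0) with hG
      have hsum : ∑ k : Fin (N + 1), U i k * V k j = ∑ n ∈ Finset.range (N + 1), G n := by
        rw [← Fin.sum_univ_eq_sum_range]
        apply Finset.sum_congr rfl
        intro k _
        rw [hU, hV, hG]
        simp only [Fin.ext_iff, Fin.lt_def]
      rw [hsum]
      have hsub : Finset.Ico (i : ℕ) ((j : ℕ) + 1) ⊆ Finset.range (N + 1) := by
        intro n hn
        simp only [Finset.mem_Ico] at hn
        simp only [Finset.mem_range]
        omega
      have hzero : ∀ n ∈ Finset.range (N + 1), n ∉ Finset.Ico (i : ℕ) ((j : ℕ) + 1) → G n = 0 := by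
        intro n _ hn
        simp only [Finset.mem_Ico, not_and, not_lt] at hn
        simp only [hG]
        by_cases h1 : n < (i : ℕ)
        · rw [if_neg (show ¬ ((i : ℕ) = n) by omega), if_neg (show ¬ ((i : ℕ) < n) by omega),
            zero_mul]
        · have hge : (j : ℕ) + 1 ≤ n := hn (by omega)
          rw [if_neg (show ¬ (n = (j : ℕ)) by omega), if_neg (show ¬ (n < (j : ℕ)) by omega),
            mul_zero]
      rw [← Finset.sum_subset hsub hzero]
      have hIco : Finset.Ico (i : ℕ) ((j : ℕ) + 1) = Finset.Ico (i : ℕ) ((i : ℕ) + (d + 1)) := by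
        congr 1
        omega
      rw [hIco, Finset.sum_Ico_eq_sum_range]
      have hrange : (i : ℕ) + (d + 1) - (i : ℕ) = d + 1 := by omega
      rw [hrange]
      obtain ⟨m, hm⟩ : ∃ m, d = m + 1 := ⟨d - 1, by omega⟩
      rw [Finset.sum_range_succ, hm, Finset.sum_range_succ']
      have hA : (0:ℝ) < a ^ (((d : ℝ)) / (N : ℝ)) := Real.rpow_pos_of_pos ha0 _
      set A : ℝ := a ^ (((d : ℝ)) / (N : ℝ)) with hAdef
      have hN0 : (N : ℝ) ≠ 0 := by positivity
      have htop : G ((i : ℕ) + (m + 1)) = A * (1 / κ) := by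
        simp only [hG]
        have h3 : (i : ℕ) + (m + 1) = (j : ℕ) := by omega
        rw [if_neg (show ¬ ((i : ℕ) = (i : ℕ) + (m + 1)) by omega),
          if_pos (show (i : ℕ) < (i : ℕ) + (m + 1) by omega), if_pos h3]
        have hc : (((i : ℕ) + (m + 1) : ℕ) : ℝ) - ((i : ℕ) : ℝ) = (d : ℝ) := by
          rw [hm]; push_cast; ring
        rw [hc]
      have hbot : G ((i : ℕ) + 0) = κ * (-(A * (κ - 1) ^ (d - 1) / κ ^ (d + 1))) := by
        simp only [hG]
        simp only [Nat.add_zero]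
        rw [if_pos trivial, if_neg (show ¬ ((i : ℕ) = (j : ℕ)) by omega), if_pos hij']
        have hc : (((j : ℕ) : ℝ)) - ((i : ℕ) : ℝ) = (d : ℝ) := by
          rw [hjd]; push_cast; ring
        rw [hc, ← hd]
      have hmidd : ∀ t ∈ Finset.range m,
          G ((i : ℕ) + (t + 1)) = A * (-((κ - 1) ^ (d - t - 2) / κ ^ (d - t))) := by
        intro t ht
        have htm : t < m := Finset.mem_range.mp ht
        simp only [hG]
        rw [if_neg (show ¬ ((i : ℕ) = (i : ℕ) + (t + 1)) by omega),
          if_pos (show (i : ℕ) < (i : ℕ) + (t + 1) by omega),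
          if_neg (show ¬ ((i : ℕ) + (t + 1) = (j : ℕ)) by omega),
          if_pos (show (i : ℕ) + (t + 1) < (j : ℕ) by omega)]
        have hsub1 : (j : ℕ) - ((i : ℕ) + (t + 1)) - 1 = d - t - 2 := by omega
        have hsub2 : (j : ℕ) - ((i : ℕ) + (t + 1)) + 1 = d - t := by omega
        rw [hsub1, hsub2]
        have hcast1 : ((((i : ℕ) + (t + 1) : ℕ)) : ℝ) - ((i : ℕ) : ℝ) = (t : ℝ) + 1 := by
          push_cast; ring
        have hcast2 : (((j : ℕ) : ℝ)) - ((((i : ℕ) + (t + 1) : ℕ)) : ℝ)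
            = (d : ℝ) - (t : ℝ) - 1 := by
          rw [hjd]; push_cast; ring
        rw [hcast1, hcast2]
        have hexp : a ^ (((t : ℝ) + 1) / (N : ℝ)) * a ^ (((d : ℝ) - (t : ℝ) - 1) / (N : ℝ))
            = A := by
          rw [hAdef, ← Real.rpow_add ha0]
          congr 1
          field_simp
          ring
        calc a ^ (((t : ℝ) + 1) / (N : ℝ)) *
              -(a ^ (((d : ℝ) - (t : ℝ) - 1) / (N : ℝ)) * (κ - 1) ^ (d - t - 2)
                / κ ^ (d - t))
            = (a ^ (((t : ℝ) + 1) / (N : ℝ)) * a ^ (((d : ℝ) - (t : ℝ) - 1) / (N : ℝ))) *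
              (-((κ - 1) ^ (d - t - 2) / κ ^ (d - t))) := by ring
          _ = A * (-((κ - 1) ^ (d - t - 2) / κ ^ (d - t))) := by rw [hexp]
      rw [Finset.sum_congr rfl hmidd, htop, hbot]
      have hmsum : ∑ t ∈ Finset.range m, A * (-((κ - 1) ^ (d - t - 2) / κ ^ (d - t)))
          = A * (-(1 / κ - (κ - 1) ^ (d - 1) / κ ^ d)) := by
        rw [← Finset.mul_sum]
        congr 1
        have : ∑ t ∈ Finset.range m, -((κ - 1) ^ (d - t - 2) / κ ^ (d - t))
            = -(∑ t ∈ Finset.range m, (κ - 1) ^ (d - t - 2) / κ ^ (d - t)) := by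
          rw [Finset.sum_neg_distrib]
        rw [this]
        have hm' : m = d - 1 := by omega
        rw [hm', mid_sum κ hκ0 d hd1]
      rw [hmsum]
      have hpd : κ ^ d ≠ 0 := pow_ne_zero _ hκ0
      have hpd1 : κ ^ (d + 1) ≠ 0 := pow_ne_zero _ hκ0
      have hps : κ ^ (d + 1) = κ ^ d * κ := by rw [pow_succ]
      field_simp
      ring
    · -- i = j : entry is 1
      subst hij
      rw [Matrix.one_apply_eq]
      rw [Finset.sum_eq_single i]
      · rw [hU i i, hV i i, if_pos rfl, if_pos rfl]
        field_simp
      · intro k _ hk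
        rcases lt_or_gt_of_ne hk with h | h
        · rw [hU i k, if_neg (by exact fun he => absurd he.symm (ne_of_lt h)),
            if_neg (not_lt_of_gt h), zero_mul]
        · rw [hV k i, if_neg (ne_of_gt h), if_neg (not_lt_of_gt h), mul_zero]
      · intro h
        exact absurd (Finset.mem_univ i) h
    · -- i > j : entry is 0
      rw [Matrix.one_apply_ne (ne_of_gt hij)]
      apply Finset.sum_eq_zero
      intro k _
      rcases lt_or_ge k i with h | h
      · rw [hU i k, if_neg (by exact fun he => absurd he.symm (ne_of_lt h)),
          if_neg (not_lt_of_gt h), zero_mul]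
      · rw [hV k j]
        have hkj : j < k := lt_of_lt_of_le hij h
        rw [if_neg (ne_of_gt hkj), if_neg (not_lt_of_gt hkj), mul_zero]
  exact ⟨Matrix.isUnit_det_of_right_inverse hUV, Matrix.inv_eq_right_inv hUV⟩
end

section
/- With U as in the previous statement (upper triangular, U_{ii} = κ, U_{ij} = a^{(j-i)/N} for j > i), let u = U^{-1}𝟏. Then the n-th component equals u_n = (1/κ)[1 - b/(κ(1 - a^{1/N}) + a^{1/N}) + (-1)^{N+1-n} (b/(κ(1-a^{1/N}) + a^{1/N})) · (a^{1/N}(1-κ)/κ)^{N+1-n}] where b = a^{1/N}. In particular, u_{N+1} = 1/κ and u_n = u_{n+1} - a^{(N+1-n)/N}(κ-1)^{N-n}/κ^{N+2-n} for 1 ≤ n ≤ N. -/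
open Matrix Finset

private lemma row_sum_aux (N : ℕ) (b κ : ℝ) (hb0 : 0 < b) (hb1 : b < 1) (hκ : 0 < κ)
    (w : ℕ → ℝ)
    (hw : ∀ n, w n = (1/κ) * (1 - b/(κ*(1-b)+b) + (b*(κ-1)/κ)^(N-n) * (b/(κ*(1-b)+b)))) :
    ∀ k i, i ≤ N → N - i = k →
      ∑ j ∈ Finset.Icc i N, (if i = j then κ else b^(j-i)) * w j = 1 := by
  have hD : κ*(1-b)+b ≠ 0 := by nlinarith
  have hκ' : κ ≠ 0 := ne_of_gt hκ
  intro k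
  induction k with
  | zero =>
    intro i hi hk
    have : i = N := by omega
    subst this
    rw [Finset.Icc_self, Finset.sum_singleton, if_pos rfl, hw]
    simp only [Nat.sub_self, pow_zero, one_mul]
    field_simp
    ring
  | succ k ih =>
    intro i hi hk
    have hiN : i + 1 ≤ N := by omega
    have hins : Finset.Icc i N = insert i (Finset.Icc (i+1) N) := by
      rw [Finset.Icc_add_one_left_eq_Ioc, Finset.Ioc_insert_left (by omega)]
    rw [hins, Finset.sum_insert (by simp)]
    have hIH := ih (i+1) hiN (by omega)
    have hkey : ∑ j ∈ Finset.Icc (i+1) N, b^(j-(i+1)) * w j = (1-κ)*w (i+1) + 1 := by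
      have hsub : ∑ j ∈ Finset.Icc (i+1) N,
          (b^(j-(i+1)) * w j - (if i+1 = j then κ else b^(j-(i+1))) * w j)
          = (1-κ)*w (i+1) := by
        rw [Finset.sum_eq_single (i+1)]
        · simp only [Nat.sub_self, pow_zero, one_mul, if_pos rfl, if_true]
          ring
        · intro j hj hne
          rw [if_neg (fun h => hne h.symm)]
          ring
        · intro h
          exact absurd (Finset.mem_Icc.mpr ⟨le_refl _, hiN⟩) h
      rw [Finset.sum_sub_distrib, hIH] at hsub
      linarith
    have hcong : ∑ j ∈ Finset.Icc (i+1) N, (if i = j then κ else b^(j-i)) * w j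
        = b * ∑ j ∈ Finset.Icc (i+1) N, b^(j-(i+1)) * w j := by
      rw [Finset.mul_sum]
      refine Finset.sum_congr rfl fun j hj => ?_
      have hj' := (Finset.mem_Icc.mp hj).1
      rw [if_neg (by omega)]
      have hji : j - i = (j - (i+1)) + 1 := by omega
      rw [hji, pow_succ]
      ring
    rw [hcong, hkey, if_pos rfl, hw i, hw (i+1)]
    have hNi : N - i = (N - (i+1)) + 1 := by omega
    rw [hNi, pow_succ]
    field_simp
    ring

theorem u_explicit_formula (N : ℕ) (hN : 1 ≤ N) (a κ : ℝ)
    (ha0 : 0 < a) (ha1 : a < 1) (hκ : 0 < κ)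
    (U : Matrix (Fin (N + 1)) (Fin (N + 1)) ℝ)
    (hU : ∀ i j : Fin (N + 1), U i j =
      if i = j then κ
      else if i < j then a ^ (((j : ℝ) - (i : ℝ)) / (N : ℝ))
      else 0)
    (u : Fin (N + 1) → ℝ) (hu : u = U⁻¹.mulVec (fun _ => 1)) :
    (∀ n : Fin (N + 1), u n =
      (1 / κ) * (1 - a ^ ((1 : ℝ) / (N : ℝ)) /
          (κ * (1 - a ^ ((1 : ℝ) / (N : ℝ))) + a ^ ((1 : ℝ) / (N : ℝ)))
        + (-1 : ℝ) ^ (N - (n : ℕ)) *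
          (a ^ ((1 : ℝ) / (N : ℝ)) /
            (κ * (1 - a ^ ((1 : ℝ) / (N : ℝ))) + a ^ ((1 : ℝ) / (N : ℝ)))) *
          (a ^ ((1 : ℝ) / (N : ℝ)) * (1 - κ) / κ) ^ (N - (n : ℕ)))) ∧
    u (Fin.last N) = 1 / κ ∧
    ∀ (n : ℕ) (hn : n < N),
      u ⟨n, by omega⟩ = u ⟨n + 1, by omega⟩ -
        a ^ (((N : ℝ) - (n : ℝ)) / (N : ℝ)) * (κ - 1) ^ (N - 1 - n) / κ ^ (N + 1 - n) := by
  have hκ' : κ ≠ 0 := ne_of_gt hκ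
  have hNR : (0:ℝ) < (N:ℝ) := by exact_mod_cast Nat.pos_of_ne_zero (by omega)
  set b := a ^ ((1:ℝ)/(N:ℝ)) with hb
  have hb0 : 0 < b := Real.rpow_pos_of_pos ha0 _
  have hb1 : b < 1 := Real.rpow_lt_one ha0.le ha1 (by positivity)
  have hD : κ*(1-b)+b ≠ 0 := by nlinarith
  have hpow : ∀ m : ℕ, a ^ ((m:ℝ)/(N:ℝ)) = b ^ m := by
    intro m
    rw [show (m:ℝ)/(N:ℝ) = ((1:ℝ)/(N:ℝ)) * (m:ℝ) by ring, Real.rpow_mul ha0.le,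
      Real.rpow_natCast]
  set w : ℕ → ℝ := fun n =>
    (1/κ) * (1 - b/(κ*(1-b)+b) + (b*(κ-1)/κ)^(N-n) * (b/(κ*(1-b)+b))) with hwdef
  have hw : ∀ n, w n = (1/κ) * (1 - b/(κ*(1-b)+b) + (b*(κ-1)/κ)^(N-n) * (b/(κ*(1-b)+b))) :=
    fun n => rfl
  set v : Fin (N+1) → ℝ := fun n => w (n : ℕ) with hvdef
  -- U * v = 1
  have hUv : U.mulVec v = fun _ => 1 := by
    funext i
    have hrow := row_sum_aux N b κ hb0 hb1 hκ w hw (N - (i:ℕ)) (i:ℕ) (by omega) rfl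
    show U.mulVec v i = 1
    have h1 : U.mulVec v i = ∑ j : Fin (N+1), U i j * v j := by
      simp [Matrix.mulVec, dotProduct]
    have hterm : ∀ j : Fin (N+1), U i j * v j =
        (fun j : ℕ => (if (i:ℕ) = j then κ else if (i:ℕ) < j then b^(j-(i:ℕ)) else 0) * w j)
          (j : ℕ) := by
      intro j
      simp only [hU i j]
      show _ = (if (i:ℕ) = (j:ℕ) then κ else if (i:ℕ) < (j:ℕ) then b^((j:ℕ)-(i:ℕ)) else 0) * w (j:ℕ)
      congr 1
      by_cases h1 : i = j
      · rw [if_pos h1, if_pos (congrArg Fin.val h1)]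
      · rw [if_neg h1, if_neg (fun h => h1 (Fin.ext h))]
        by_cases h2 : i < j
        · rw [if_pos h2, if_pos (by exact_mod_cast h2)]
          have hle : (i:ℕ) ≤ (j:ℕ) := le_of_lt (by exact_mod_cast h2)
          rw [show ((j : Fin (N+1)) : ℝ) - ((i : Fin (N+1)) : ℝ) = (((j:ℕ) - (i:ℕ) : ℕ):ℝ) by
            push_cast [Nat.cast_sub hle]; ring]
          exact hpow _
        · rw [if_neg h2, if_neg (fun h => h2 (by exact_mod_cast h))]
    have h2 : ∑ j : Fin (N+1), U i j * v j = ∑ j ∈ Finset.range (N+1),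
        (if (i:ℕ) = j then κ else if (i:ℕ) < j then b^(j-(i:ℕ)) else 0) * w j := by
      rw [← Fin.sum_univ_eq_sum_range]
      exact Finset.sum_congr rfl fun j _ => hterm j
    have h3 : ∑ j ∈ Finset.range (N+1),
        (if (i:ℕ) = j then κ else if (i:ℕ) < j then b^(j-(i:ℕ)) else 0) * w j
        = ∑ j ∈ Finset.Icc (i:ℕ) N,
        (if (i:ℕ) = j then κ else if (i:ℕ) < j then b^(j-(i:ℕ)) else 0) * w j := by
      refine (Finset.sum_subset ?_ ?_).symm
      · intro x hx
        simp only [Finset.mem_Icc] at hx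
        exact Finset.mem_range.mpr (by omega)
      · intro x hx hnx
        simp only [Finset.mem_range] at hx
        simp only [Finset.mem_Icc] at hnx
        rw [if_neg (by omega), if_neg (by omega), zero_mul]
    have h4 : ∑ j ∈ Finset.Icc (i:ℕ) N,
        (if (i:ℕ) = j then κ else if (i:ℕ) < j then b^(j-(i:ℕ)) else 0) * w j
        = ∑ j ∈ Finset.Icc (i:ℕ) N, (if (i:ℕ) = j then κ else b^(j-(i:ℕ))) * w j := by
      refine Finset.sum_congr rfl fun j hj => ?_
      have hj' := (Finset.mem_Icc.mp hj).1
      by_cases h : (i:ℕ) = j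
      · rw [if_pos h, if_pos h]
      · rw [if_neg h, if_neg h, if_pos (by omega)]
    rw [h1, h2, h3, h4, hrow]
  -- invertibility and u = v
  have hBT : U.BlockTriangular id := by
    intro i j hij
    have hij' : j < i := hij
    rw [hU, if_neg (ne_of_gt hij'), if_neg (asymm hij')]
  have hdet : IsUnit U.det := by
    rw [Matrix.det_of_upperTriangular hBT]
    have : ∀ i : Fin (N+1), U i i = κ := fun i => by rw [hU, if_pos rfl]
    rw [Finset.prod_congr rfl fun i _ => this i, Finset.prod_const]
    exact isUnit_iff_ne_zero.mpr (pow_ne_zero _ hκ')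
  have huv : u = v := by
    rw [hu, ← hUv, Matrix.mulVec_mulVec, Matrix.nonsing_inv_mul U hdet, Matrix.one_mulVec]
  -- helper : rewrite sign
  have hsign : ∀ k : ℕ, (-1:ℝ)^k * (b/(κ*(1-b)+b)) * (b*(1-κ)/κ)^k
      = (b*(κ-1)/κ)^k * (b/(κ*(1-b)+b)) := by
    intro k
    have h : ((-1:ℝ) * (b*(1-κ)/κ)) = b*(κ-1)/κ := by ring
    rw [show (-1:ℝ)^k * (b/(κ*(1-b)+b)) * (b*(1-κ)/κ)^k
        = ((-1:ℝ)^k * (b*(1-κ)/κ)^k) * (b/(κ*(1-b)+b)) from by ring, ← mul_pow, h]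
  refine ⟨?_, ?_, ?_⟩
  · intro n
    rw [huv]
    show w (n:ℕ) = _
    rw [hw, ← hsign]
  · rw [huv]
    show w ((Fin.last N : Fin (N+1)):ℕ) = 1/κ
    rw [Fin.val_last, hw, Nat.sub_self, pow_zero]
    field_simp
    ring
  · intro n hn
    rw [huv]
    show w n = w (n+1) - _
    have hcast : ((N:ℝ) - (n:ℝ))/(N:ℝ) = (((N - n : ℕ)):ℝ)/(N:ℝ) := by
      rw [Nat.cast_sub (by omega)]
    rw [hcast, hpow, hw n, hw (n+1)]
    have e1 : N - n = (N - (n+1)) + 1 := by omega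
    have e2 : N - 1 - n = N - (n+1) := by omega
    have e3 : N + 1 - n = (N - (n+1)) + 2 := by omega
    rw [e1, e2, e3, pow_succ]
    rw [div_pow, mul_pow]
    field_simp
    ring
end

section
/- Fix T > 0 and 0 < a = e^{-ρT} < 1, and for N ≥ 1 let u^{(N)} = U_N^{-1}𝟏 where U_N is the (N+1)×(N+1) upper triangular matrix with diagonal entries 1/2 and entries a^{(j-i)/N} for j > i (the case κ = 1/2, i.e. θ = 0). Then there exists N_0 such that for all N ≥ N_0 the entries of u^{(N)} are nonzero with alternating signs. Consequently the Nash equilibrium vector w has alternating signs for θ = 0 and N large. -/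
open Matrix
open Finset

lemma aux_sum (b : ℝ) (n i k : ℕ) (hk : k ≤ n) :
    ∑ j ∈ Finset.range (n+1),
      ((if i = j then (1/2:ℝ) else if i < j then b^(j-i) else 0) *
       (if j = k then (2:ℝ) else if j < k then 4*(-b)^(k-j) else 0))
    = if i = k then 1 else 0 := by
  rcases lt_trichotomy i k with h | h | h
  · rw [if_neg (by omega)]
    have hsub : Finset.Icc i k ⊆ Finset.range (n+1) := by
      intro j hj; simp at hj ⊢; omega
    rw [← Finset.sum_subset hsub (by
      intro j _ hj
      simp only [Finset.mem_Icc, not_and_or, not_le] at hj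
      split_ifs <;> first | omega | ring)]
    have hik : Finset.Icc i k = Finset.Ico i (k+1) := by rw [Finset.Ico_add_one_right_eq_Icc]
    rw [hik, Finset.sum_Ico_eq_sum_range]
    set d := k - i with hd
    have hd1 : 1 ≤ d := by omega
    have hkd : k + 1 - i = d + 1 := by omega
    rw [hkd]
    have hcong : ∀ m ∈ Finset.range (d+1),
        ((if i = i + m then (1/2:ℝ) else if i < i + m then b^(i+m-i) else 0) *
         (if i + m = k then (2:ℝ) else if i + m < k then 4*(-b)^(k-(i+m)) else 0))
        = (if m = 0 then 2*(-b)^d else if m = d then 2*b^d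
            else 4*(-1)^(d-m)*b^d) := by
      intro m hm
      simp only [Finset.mem_range] at hm
      rcases Nat.eq_zero_or_pos m with hm0 | hm0
      · subst hm0
        rw [if_pos (by omega), if_neg (by omega), if_pos (by omega), if_pos rfl]
        have : k - (i + 0) = d := by omega
        rw [this]; ring
      · rcases eq_or_lt_of_le (Nat.succ_le_of_lt (by omega : m - 1 < d)) with hmd | hmd
        · have hmd' : m = d := by omega
          rw [if_neg (by omega), if_pos (by omega), if_pos (by omega),
            if_neg (by omega), if_pos hmd']
          have : i + m - i = d := by omega
          rw [this]; ring
        · have hmd' : m < d := by omega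
          rw [if_neg (by omega), if_pos (by omega), if_neg (by omega),
            if_pos (by omega), if_neg (by omega), if_neg (by omega)]
          have e1 : i + m - i = m := by omega
          rw [e1, neg_pow b (k - (i+m))]
          have e2 : k - (i + m) = d - m := by omega
          rw [e2]
          have e3 : b ^ m * (4 * ((-1:ℝ)^(d-m) * b^(d-m))) = 4 * ((-1)^(d-m) * b^(m + (d-m))) := by
            rw [pow_add]; ring
          have e4 : m + (d - m) = d := by omega
          rw [e3, e4]; ring
    rw [Finset.sum_congr rfl hcong]
    have hsplit : Finset.range (d+1) = insert 0 (insert d (Finset.Ioo 0 d)) := by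
      ext x; simp only [Finset.mem_range, Finset.mem_insert, Finset.mem_Ioo]; omega
    rw [hsplit, Finset.sum_insert (by simp only [Finset.mem_insert, Finset.mem_Ioo]; omega),
      Finset.sum_insert (by simp only [Finset.mem_Ioo]; omega)]
    rw [if_pos rfl, if_neg (by omega), if_pos rfl]
    have hmid : ∑ m ∈ Finset.Ioo 0 d,
        (if m = 0 then 2*(-b)^d else if m = d then 2*b^d else 4*(-1:ℝ)^(d-m)*b^d)
        = ∑ m ∈ Finset.Ioo 0 d, 4*(-1:ℝ)^(d-m)*b^d := by
      apply Finset.sum_congr rfl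
      intro m hm
      simp only [Finset.mem_Ioo] at hm
      rw [if_neg (by omega), if_neg (by omega)]
    rw [hmid, ← Finset.Ico_add_one_left_eq_Ioo, Finset.sum_Ico_eq_sum_range,
      show d - (0+1) = d - 1 from rfl]
    have h1 : ∑ t ∈ Finset.range (d - 1), 4*(-1:ℝ)^(d-(0+1+t))*b^d
        = ∑ t ∈ Finset.range (d-1), 4*(-1:ℝ)^(t+1)*b^d := by
      rw [← Finset.sum_range_reflect (fun s => 4*(-1:ℝ)^(s+1)*b^d) (d-1)]
      apply Finset.sum_congr rfl
      intro t ht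
      simp only [Finset.mem_range] at ht
      have : d - (0+1+t) = (d-1) - 1 - t + 1 := by omega
      rw [this]
    rw [h1]
    have h2 : ∑ t ∈ Finset.range (d-1), 4*(-1:ℝ)^(t+1)*b^d
        = (∑ t ∈ Finset.range (d-1), (-1:ℝ)^t) * (-4*b^d) := by
      rw [Finset.sum_mul]
      apply Finset.sum_congr rfl
      intro t _
      ring
    rw [h2, neg_one_geom_sum]
    rcases Nat.even_or_odd d with he | ho
    · have hne : ¬ Even (d-1) := by
        have hdd : d - 1 + 1 = d := by omega
        rw [← hdd] at he
        exact Nat.even_add_one.mp he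
      rw [if_neg hne, Even.neg_pow he]
      ring
    · have hev : Even (d-1) := Nat.Odd.sub_odd ho odd_one
      rw [if_pos hev, Odd.neg_pow ho]
      ring
  · rw [if_pos h]
    rw [Finset.sum_eq_single_of_mem i (by simp; omega)]
    · simp [h]
    · intro j _ hj
      split_ifs <;> first | omega | ring
  · rw [if_neg (by omega)]
    apply Finset.sum_eq_zero
    intro j _
    split_ifs <;> first | omega | ring

lemma aux_row (b : ℝ) (n i : ℕ) (hi : i ≤ n) :
    ∑ j ∈ Finset.range (n+1), (if i = j then (2:ℝ) else if i < j then 4*(-b)^(j-i) else 0)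
    = 2 + 4 * ∑ t ∈ Finset.range (n - i), (-b)^(t+1) := by
  have hsub : Finset.Icc i n ⊆ Finset.range (n+1) := by
    intro j hj; simp at hj ⊢; omega
  rw [← Finset.sum_subset hsub (by
    intro j hjr hj
    simp only [Finset.mem_range] at hjr
    simp only [Finset.mem_Icc, not_and_or, not_le] at hj
    split_ifs <;> first | omega | ring)]
  rw [show Finset.Icc i n = Finset.Ico i (n+1) from (Finset.Ico_add_one_right_eq_Icc i n).symm]
  rw [Finset.sum_Ico_eq_sum_range]
  rw [show n + 1 - i = (n - i) + 1 from by omega]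
  rw [Finset.sum_range_succ']
  rw [if_pos (by omega : i = i + 0)]
  have hcong : ∀ t ∈ Finset.range (n - i),
      (if i = i + (t+1) then (2:ℝ) else if i < i + (t+1) then 4*(-b)^(i+(t+1)-i) else 0)
      = 4 * (-b)^(t+1) := by
    intro t _
    rw [if_neg (by omega), if_pos (by omega)]
    congr 2
    omega
  rw [Finset.sum_congr rfl hcong, ← Finset.mul_sum]
  ring

lemma sign_E (b : ℝ) (hb0 : 0 < b) (hb1 : b < 1) (N d : ℕ) (hd : d ≤ N)
    (hbig : 1 - b < 2 * b^(N+1)) :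
    (Even d → 0 < 2 + 4 * ∑ t ∈ Finset.range d, (-b)^(t+1)) ∧
    (¬ Even d → 2 + 4 * ∑ t ∈ Finset.range d, (-b)^(t+1) < 0) := by
  have hbne : (-b) ≠ 1 := by nlinarith
  have hs : ∑ t ∈ Finset.range d, (-b)^(t+1) = (-b) * (((-b)^d - 1)/(-b-1)) := by
    rw [← geom_sum_eq hbne d, Finset.mul_sum]
    exact Finset.sum_congr rfl (fun t _ => by ring)
  have hnp : (-b:ℝ)^d = (-1)^d * b^d := by rw [neg_pow]
  have hden : (-b:ℝ) - 1 ≠ 0 := by nlinarith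
  have hE : (2 + 4 * ∑ t ∈ Finset.range d, (-b)^(t+1)) * (1+b)
      = 2*(1-b) + 4*(-1)^d*b^(d+1) := by
    rw [hs, hnp]
    field_simp
    ring
  have h1b : (0:ℝ) < 1 + b := by linarith
  have hpow : b^(N+1) ≤ b^(d+1) :=
    pow_le_pow_of_le_one (le_of_lt hb0) (le_of_lt hb1) (by omega)
  constructor
  · intro he
    have hne : ((-1:ℝ))^d = 1 := Even.neg_one_pow he
    rw [hne] at hE
    nlinarith [pow_pos hb0 (d+1)]
  · intro ho
    have ho' : Odd d := Nat.not_even_iff_odd.mp ho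
    have hne : ((-1:ℝ))^d = -1 := Odd.neg_one_pow ho'
    rw [hne] at hE
    nlinarith [pow_pos hb0 (d+1)]

theorem alternating_signs_theta_zero (ρ T : ℝ) (hρ : 0 < ρ) (hT : 0 < T)
    (a : ℝ) (ha : a = Real.exp (-(ρ * T)))
    (U : (N : ℕ) → Matrix (Fin (N + 1)) (Fin (N + 1)) ℝ)
    (hU : ∀ (N : ℕ) (i j : Fin (N + 1)), U N i j =
      if i = j then (1 / 2 : ℝ)
      else if i < j then a ^ (((j : ℝ) - (i : ℝ)) / (N : ℝ))
      else 0)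
    (u : (N : ℕ) → Fin (N + 1) → ℝ)
    (hu : ∀ N : ℕ, u N = (U N)⁻¹.mulVec (fun _ => 1)) :
    ∃ N₀ : ℕ, ∀ N ≥ N₀,
      (∀ i : Fin (N + 1), u N i ≠ 0) ∧
      (∀ i : Fin N, u N i.castSucc * u N i.succ < 0) := by
  have ha0 : 0 < a := by rw [ha]; exact Real.exp_pos _
  have ha1 : a < 1 := by rw [ha]; exact Real.exp_lt_one_iff.mpr (by nlinarith)
  refine ⟨⌈ρ*T/(2*a^2)⌉₊ + 1, fun N hN => ?_⟩
  have hN1 : 1 ≤ N := by omega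
  have hNpos : (0:ℝ) < N := by exact_mod_cast Nat.pos_of_ne_zero (by omega)
  set b := a ^ ((1:ℝ)/(N:ℝ)) with hbdef
  have hb0 : 0 < b := Real.rpow_pos_of_pos ha0 _
  have hb1 : b < 1 := Real.rpow_lt_one (le_of_lt ha0) ha1 (by positivity)
  -- the key inequality 1 - b < 2 b^(N+1)
  have hexp : b = Real.exp (-(ρ*T)/N) := by
    rw [hbdef, ha, Real.rpow_def_of_pos (Real.exp_pos _), Real.log_exp]
    congr 1
    ring
  have h1 : 1 - b < ρ*T/N := by
    have hxneg : -(ρ*T)/N < 0 := div_neg_of_neg_of_pos (by nlinarith) hNpos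
    have h2 := Real.add_one_lt_exp (ne_of_lt hxneg)
    rw [← hexp] at h2
    have he : -(ρ*T)/N = -(ρ*T/N) := by ring
    rw [he] at h2
    linarith
  have h2 : ρ*T/N < 2*a^2 := by
    have hceil : ρ*T/(2*a^2) < (N:ℝ) := by
      calc ρ*T/(2*a^2) ≤ (⌈ρ*T/(2*a^2)⌉₊ : ℝ) := Nat.le_ceil _
        _ < (N:ℝ) := by exact_mod_cast Nat.lt_of_lt_of_le (Nat.lt_succ_self _) hN
    rw [div_lt_iff₀ hNpos]
    have := (div_lt_iff₀ (by positivity : (0:ℝ) < 2*a^2)).mp hceil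
    nlinarith
  have h3 : 2*a^2 ≤ 2*b^(N+1) := by
    have e : b^(N+1) = a ^ (((N:ℝ)+1)/N) := by
      rw [hbdef, ← Real.rpow_natCast (a ^ ((1:ℝ)/(N:ℝ))) (N+1),
        ← Real.rpow_mul (le_of_lt ha0)]
      congr 1
      push_cast
      field_simp
    have e2 : a^(2:ℕ) = a ^ ((2:ℝ)) := (Real.rpow_natCast a 2).symm
    have hle : a ^ ((2:ℝ)) ≤ a ^ (((N:ℝ)+1)/N) := by
      apply Real.rpow_le_rpow_of_exponent_ge ha0 (le_of_lt ha1)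
      rw [div_le_iff₀ hNpos]
      have : (1:ℝ) ≤ (N:ℝ) := by exact_mod_cast hN1
      nlinarith
    rw [e, e2]
    linarith
  have hbig : 1 - b < 2 * b^(N+1) := by linarith
  -- the explicit inverse
  set V : Matrix (Fin (N+1)) (Fin (N+1)) ℝ :=
    fun i j => if i = j then 2 else if i < j then 4*(-b)^((j:ℕ)-(i:ℕ)) else 0 with hV
  have hUb : ∀ i j : Fin (N+1), U N i j =
      (if (i:ℕ) = (j:ℕ) then (1/2:ℝ) else if (i:ℕ) < (j:ℕ) then b^((j:ℕ)-(i:ℕ)) else 0) := by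
    intro i j
    rw [hU]
    by_cases heq : i = j
    · rw [if_pos heq, if_pos (by rw [heq])]
    · have hne : ¬ (i:ℕ) = (j:ℕ) := fun hc => heq (Fin.ext hc)
      rw [if_neg heq, if_neg hne]
      by_cases hlt : i < j
      · have hlt' : (i:ℕ) < (j:ℕ) := hlt
        rw [if_pos hlt, if_pos hlt']
        have hc : ((j:ℕ):ℝ) - ((i:ℕ):ℝ) = (((j:ℕ) - (i:ℕ) : ℕ):ℝ) := by
          rw [Nat.cast_sub (le_of_lt hlt')]
        rw [hc, show ((((j:ℕ) - (i:ℕ) : ℕ)):ℝ)/(N:ℝ) = (1/(N:ℝ)) * (((j:ℕ) - (i:ℕ) : ℕ):ℝ) from by ring,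
          Real.rpow_mul (le_of_lt ha0), Real.rpow_natCast]
      · have hlt' : ¬ (i:ℕ) < (j:ℕ) := hlt
        rw [if_neg hlt, if_neg hlt']
  have hUV : U N * V = 1 := by
    ext i k
    rw [Matrix.mul_apply, Matrix.one_apply]
    have A := aux_sum b N (i:ℕ) (k:ℕ) (by omega)
    rw [← Fin.sum_univ_eq_sum_range (fun jj =>
      ((if (i:ℕ) = jj then (1/2:ℝ) else if (i:ℕ) < jj then b^(jj-(i:ℕ)) else 0) *
       (if jj = (k:ℕ) then (2:ℝ) else if jj < (k:ℕ) then 4*(-b)^((k:ℕ)-jj) else 0))) (N+1)] at A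
    have hcong : ∀ j : Fin (N+1), U N i j * V j k =
        ((if (i:ℕ) = (j:ℕ) then (1/2:ℝ) else if (i:ℕ) < (j:ℕ) then b^((j:ℕ)-(i:ℕ)) else 0) *
         (if (j:ℕ) = (k:ℕ) then (2:ℝ) else if (j:ℕ) < (k:ℕ) then 4*(-b)^((k:ℕ)-(j:ℕ)) else 0)) := by
      intro j
      rw [hUb]
      congr 1
      simp only [hV, Fin.ext_iff, Fin.lt_def]
    rw [Finset.sum_congr rfl (fun j _ => hcong j), A]
    by_cases hik : i = k
    · rw [if_pos hik, if_pos (by rw [hik])]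
    · rw [if_neg hik, if_neg (fun hc => hik (Fin.ext hc))]
  have hVinv : (U N)⁻¹ = V := Matrix.inv_eq_right_inv hUV
  have huN : ∀ i : Fin (N+1), u N i = 2 + 4 * ∑ t ∈ Finset.range (N - (i:ℕ)), (-b)^(t+1) := by
    intro i
    rw [hu, hVinv]
    have hrow := aux_row b N (i:ℕ) (by omega)
    rw [← Fin.sum_univ_eq_sum_range (fun jj =>
      (if (i:ℕ) = jj then (2:ℝ) else if (i:ℕ) < jj then 4*(-b)^(jj-(i:ℕ)) else 0)) (N+1)] at hrow
    rw [← hrow]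
    simp only [Matrix.mulVec, dotProduct, mul_one]
    apply Finset.sum_congr rfl
    intro j _
    simp only [hV, Fin.ext_iff, Fin.lt_def]
  have hsign : ∀ i : Fin (N+1),
      (Even (N - (i:ℕ)) → 0 < u N i) ∧ (¬ Even (N - (i:ℕ)) → u N i < 0) := by
    intro i
    rw [huN i]
    exact sign_E b hb0 hb1 N (N - (i:ℕ)) (by omega) hbig
  refine ⟨fun i => ?_, fun i => ?_⟩
  · rcases Nat.even_or_odd (N - (i:ℕ)) with he | ho
    · exact ne_of_gt ((hsign i).1 he)
    · exact ne_of_lt ((hsign i).2 (Nat.not_even_iff_odd.mpr ho))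
  · have hci : (i.castSucc : ℕ) = (i:ℕ) := rfl
    have hsi : (i.succ : ℕ) = (i:ℕ)+1 := rfl
    have hi : (i:ℕ) < N := i.isLt
    rcases Nat.even_or_odd (N - ((i:ℕ)+1)) with he | ho
    · have h4 : 0 < u N i.succ := (hsign i.succ).1 (by rw [hsi]; exact he)
      have h5 : u N i.castSucc < 0 := (hsign i.castSucc).2 (by
        rw [hci, show N - (i:ℕ) = (N - ((i:ℕ)+1)) + 1 from by omega, Nat.even_add_one]
        simpa using he)
      exact mul_neg_of_neg_of_pos h5 h4
    · have h4 : u N i.succ < 0 := (hsign i.succ).2 (by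
        rw [hsi]; exact Nat.not_even_iff_odd.mpr ho)
      have h5 : 0 < u N i.castSucc := (hsign i.castSucc).1 (by
        rw [hci, show N - (i:ℕ) = (N - ((i:ℕ)+1)) + 1 from by omega]
        exact Odd.add_one ho)
      exact mul_neg_of_pos_of_neg h5 h4
end

section
/- With u^{(N)} as the solution of U_N u^{(N)} = 𝟏 for the upper triangular matrix U_N with diagonal κ > 1/2 and superdiagonal structure U_{ij} = a^{(j-i)/N} (j > i), 0 < a < 1, the partial sums satisfy: for every fixed n, Σ_{m=1}^{n} u^{(N)}_m → 0 as N → ∞ when κ > 1/2. -/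
open Matrix

open Finset in
private lemma key_row (r q c κ : ℝ) (hκ : κ ≠ 0) (hq : q = r * (κ - 1) / κ)
    (hc : c = (1 - r) / κ) (N : ℕ) (w : ℕ → ℝ)
    (hw : ∀ k, w k = c * (∑ t ∈ Finset.range (N - k), q ^ t) + q ^ (N - k) / κ) :
    ∀ k i, i ≤ N → N - i = k →
      κ * w i + ∑ j ∈ Finset.Ico (i + 1) (N + 1), r ^ (j - i) * w j = 1 := by
  intro k
  induction k with
  | zero =>
    intro i hi h0
    have hiN : i = N := le_antisymm hi (by omega)
    subst hiN
    rw [show Finset.Ico (i + 1) (i + 1) = ∅ from Finset.Ico_self _]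
    simp only [Finset.sum_empty, add_zero, hw, Nat.sub_self, Finset.range_zero,
      Finset.sum_empty, mul_zero, pow_zero, zero_add]
    field_simp
  | succ k ih =>
    intro i hiN hk
    have hiN' : i < N := by omega
    rw [Finset.sum_eq_sum_Ico_succ_bot (by omega : i + 1 < N + 1)]
    have hsplit : ∑ j ∈ Finset.Ico (i + 1 + 1) (N + 1), r ^ (j - i) * w j
        = r * ∑ j ∈ Finset.Ico (i + 1 + 1) (N + 1), r ^ (j - (i + 1)) * w j := by
      rw [Finset.mul_sum]
      refine Finset.sum_congr rfl fun j hj => ?_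
      rw [Finset.mem_Ico] at hj
      rw [show j - i = (j - (i + 1)) + 1 by omega, pow_succ]
      ring
    have hIH := ih (i + 1) (by omega) (by omega)
    have hrest : ∑ j ∈ Finset.Ico (i + 1 + 1) (N + 1), r ^ (j - (i + 1)) * w j
        = 1 - κ * w (i + 1) := by linarith
    rw [hsplit, hrest]
    have h1 : N - i = k + 1 := hk
    have h2 : N - (i + 1) = k := by omega
    rw [hw i, hw (i + 1), h1, h2, geom_sum_succ, hq, hc, pow_succ]
    have hii : i + 1 - i = 1 := by omega
    rw [hii, pow_one]
    field_simp
    ring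

open Finset in
private lemma solve_u (a κ : ℝ) (ha0 : 0 < a) (hκ0 : κ ≠ 0) (N : ℕ)
    (U : Matrix (Fin (N + 1)) (Fin (N + 1)) ℝ)
    (hU : ∀ (i j : Fin (N + 1)), U i j =
      if i = j then κ
      else if i < j then a ^ (((j : ℝ) - (i : ℝ)) / (N : ℝ))
      else 0) :
    U⁻¹.mulVec (fun _ => 1) = fun i : Fin (N + 1) =>
      (1 - a ^ ((1 : ℝ) / (N : ℝ))) / κ *
        (∑ t ∈ Finset.range (N - (i : ℕ)), (a ^ ((1 : ℝ) / (N : ℝ)) * (κ - 1) / κ) ^ t)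
      + (a ^ ((1 : ℝ) / (N : ℝ)) * (κ - 1) / κ) ^ (N - (i : ℕ)) / κ := by
  set r : ℝ := a ^ ((1 : ℝ) / (N : ℝ)) with hr
  set q : ℝ := r * (κ - 1) / κ with hq
  set c : ℝ := (1 - r) / κ with hc
  set w : ℕ → ℝ := fun k => c * (∑ t ∈ Finset.range (N - k), q ^ t) + q ^ (N - k) / κ
    with hwdef
  have hw : ∀ k, w k = c * (∑ t ∈ Finset.range (N - k), q ^ t) + q ^ (N - k) / κ :=
    fun k => rfl
  -- entries above diagonal are powers of r
  have hpow : ∀ i j : ℕ, i ≤ j → a ^ (((j : ℝ) - (i : ℝ)) / (N : ℝ)) = r ^ (j - i) := by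
    intro i j hij
    rw [hr, ← Real.rpow_natCast (a ^ ((1 : ℝ) / (N : ℝ))) (j - i), ← Real.rpow_mul ha0.le]
    congr 1
    rw [Nat.cast_sub hij]
    ring
  -- the key identity : U.mulVec w = 1
  have hmv : U.mulVec (fun i : Fin (N + 1) => w (i : ℕ)) = fun _ => 1 := by
    funext i
    have hiN : (i : ℕ) ≤ N := by omega
    set g : ℕ → ℝ := fun k =>
      (if (i : ℕ) = k then κ else if (i : ℕ) < k then r ^ (k - (i : ℕ)) else 0) * w k
      with hg
    have hsum : U.mulVec (fun i : Fin (N + 1) => w (i : ℕ)) i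
        = ∑ k ∈ Finset.range (N + 1), g k := by
      rw [← Fin.sum_univ_eq_sum_range g (N + 1)]
      simp only [Matrix.mulVec, dotProduct]
      refine Finset.sum_congr rfl fun j _ => ?_
      rw [hU, hg]
      congr 1
      by_cases h1 : i = j
      · rw [if_pos h1, if_pos (by rw [h1])]
      · rw [if_neg h1, if_neg (fun h => h1 (Fin.ext h))]
        by_cases h2 : i < j
        · rw [if_pos h2, if_pos (Fin.lt_def.mp h2), hpow _ _ (le_of_lt (Fin.lt_def.mp h2))]
        · rw [if_neg h2, if_neg (fun h => h2 (Fin.lt_def.mpr h))]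
    rw [hsum]
    have hsplit : ∑ k ∈ Finset.range (N + 1), g k
        = ∑ k ∈ Finset.range ((i : ℕ) + 1), g k
          + ∑ k ∈ Finset.Ico ((i : ℕ) + 1) (N + 1), g k := by
      have := Finset.sum_Ico_consecutive g (Nat.zero_le ((i : ℕ) + 1))
        (by omega : (i : ℕ) + 1 ≤ N + 1)
      simp only [Finset.range_eq_Ico]
      exact this.symm
    have hlow : ∑ k ∈ Finset.range ((i : ℕ) + 1), g k = κ * w (i : ℕ) := by
      rw [Finset.sum_range_succ]
      have : ∑ k ∈ Finset.range (i : ℕ), g k = 0 := by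
        refine Finset.sum_eq_zero fun k hk => ?_
        rw [Finset.mem_range] at hk
        rw [hg]
        simp only
        rw [if_neg (by omega), if_neg (by omega), zero_mul]
      rw [this, zero_add, hg]
      simp
    have hhigh : ∑ k ∈ Finset.Ico ((i : ℕ) + 1) (N + 1), g k
        = ∑ k ∈ Finset.Ico ((i : ℕ) + 1) (N + 1), r ^ (k - (i : ℕ)) * w k := by
      refine Finset.sum_congr rfl fun k hk => ?_
      rw [Finset.mem_Ico] at hk
      rw [hg]
      simp only
      rw [if_neg (by omega), if_pos (by omega)]
    rw [hsplit, hlow, hhigh]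
    exact key_row r q c κ hκ0 hq hc N w hw (N - (i : ℕ)) (i : ℕ) hiN rfl
  -- invertibility
  have hbt : U.BlockTriangular id := by
    intro p j hpj
    have hjp : j < p := hpj
    have h1 : p ≠ j := fun h => by subst h; exact lt_irrefl _ hjp
    have h2 : ¬ p < j := not_lt_of_gt hjp
    rw [hU, if_neg h1, if_neg h2]
  have hdet : IsUnit U.det := by
    rw [Matrix.det_of_upperTriangular hbt]
    have : ∀ i : Fin (N + 1), U i i = κ := by
      intro i; rw [hU, if_pos rfl]
    rw [Finset.prod_congr rfl (fun i _ => this i), Finset.prod_const]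
    exact (isUnit_iff_ne_zero.mpr (pow_ne_zero _ hκ0))
  -- conclude
  have : U⁻¹.mulVec (fun _ => 1)
      = U⁻¹.mulVec (U.mulVec (fun i : Fin (N + 1) => w (i : ℕ))) := by rw [hmv]
  rw [this, Matrix.mulVec_mulVec, Matrix.nonsing_inv_mul U hdet, Matrix.one_mulVec]

theorem partial_sums_tendsto_zero (a κ : ℝ) (ha0 : 0 < a) (ha1 : a < 1)
    (hκ : 1 / 2 < κ) (n : ℕ)
    (U : (N : ℕ) → Matrix (Fin (N + 1)) (Fin (N + 1)) ℝ)
    (hU : ∀ (N : ℕ) (i j : Fin (N + 1)), U N i j =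
      if i = j then κ
      else if i < j then a ^ (((j : ℝ) - (i : ℝ)) / (N : ℝ))
      else 0)
    (u : (N : ℕ) → Fin (N + 1) → ℝ)
    (hu : ∀ N : ℕ, u N = (U N)⁻¹.mulVec (fun _ => 1)) :
    Filter.Tendsto
      (fun N : ℕ => ∑ m : Fin (N + 1), if (m : ℕ) < n then u N m else 0)
      Filter.atTop (nhds 0) := by
  have hκ0 : (0 : ℝ) < κ := lt_trans (by norm_num) hκ
  set r : ℕ → ℝ := fun N => a ^ ((1 : ℝ) / (N : ℝ)) with hrdef
  set q : ℕ → ℝ := fun N => r N * (κ - 1) / κ with hqdef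
  set c : ℕ → ℝ := fun N => (1 - r N) / κ with hcdef
  set ρ : ℝ := |κ - 1| / κ with hρdef
  have hρ0 : 0 ≤ ρ := div_nonneg (abs_nonneg _) hκ0.le
  have hρ1 : ρ < 1 := by
    rw [hρdef, div_lt_one hκ0, abs_lt]
    constructor <;> linarith
  have hr_pos : ∀ N, 0 < r N := fun N => Real.rpow_pos_of_pos ha0 _
  have hr_le1 : ∀ N, r N ≤ 1 := fun N =>
    Real.rpow_le_one ha0.le ha1.le (by positivity)
  have hq_le : ∀ N, |q N| ≤ ρ := by
    intro N
    rw [hqdef, hρdef]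
    simp only
    rw [abs_div, abs_mul, abs_of_pos hκ0]
    gcongr
    calc |r N| * |κ - 1| ≤ 1 * |κ - 1| := by
          apply mul_le_mul_of_nonneg_right _ (abs_nonneg _)
          rw [abs_of_pos (hr_pos N)]; exact hr_le1 N
      _ = |κ - 1| := one_mul _
  -- limit of r and c
  have hr_tendsto : Filter.Tendsto r Filter.atTop (nhds 1) := by
    have h1 : Filter.Tendsto (fun N : ℕ => (1 : ℝ) / (N : ℝ)) Filter.atTop (nhds 0) :=
      tendsto_one_div_atTop_nhds_zero_nat
    have h2 : ContinuousAt (fun x : ℝ => a ^ x) 0 := Real.continuousAt_const_rpow ha0.ne'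
    have := h2.tendsto.comp h1
    rwa [Real.rpow_zero] at this
  have hc_tendsto : Filter.Tendsto c Filter.atTop (nhds 0) := by
    have := (Filter.Tendsto.const_sub (1 : ℝ) hr_tendsto).div_const κ
    simpa using this
  -- explicit formula for u
  have hu_eq : ∀ N (i : Fin (N + 1)), u N i =
      c N * (∑ t ∈ Finset.range (N - (i : ℕ)), (q N) ^ t) + (q N) ^ (N - (i : ℕ)) / κ := by
    intro N i
    rw [hu N, solve_u a κ ha0 hκ0.ne' N (U N) (hU N)]
  set w : ℕ → ℕ → ℝ := fun N k =>
    c N * (∑ t ∈ Finset.range (N - k), (q N) ^ t) + (q N) ^ (N - k) / κ with hwdef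
  -- the partial sum eventually equals a fixed finite sum
  have heq : ∀ᶠ N in Filter.atTop,
      (∑ m : Fin (N + 1), if (m : ℕ) < n then u N m else 0)
        = ∑ k ∈ Finset.range n, w N k := by
    filter_upwards [Filter.eventually_ge_atTop n] with N hN
    have h1 : (∑ m : Fin (N + 1), if (m : ℕ) < n then u N m else 0)
        = ∑ k ∈ Finset.range (N + 1), (if k < n then w N k else 0) := by
      rw [← Fin.sum_univ_eq_sum_range (fun k => if k < n then w N k else 0) (N + 1)]
      refine Finset.sum_congr rfl fun m _ => ?_
      by_cases h : (m : ℕ) < n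
      · rw [if_pos h, if_pos h, hu_eq N m]
      · rw [if_neg h, if_neg h]
    rw [h1]
    rw [← Finset.sum_subset (Finset.range_subset_range.mpr (by omega : n ≤ N + 1))
      (fun x _ hx => by rw [if_neg (by simpa using hx)])]
    exact Finset.sum_congr rfl fun k hk => if_pos (Finset.mem_range.mp hk)
  -- each term tends to 0
  have hterm : ∀ k : ℕ, Filter.Tendsto (fun N => w N k) Filter.atTop (nhds 0) := by
    intro k
    apply squeeze_zero_norm (a := fun N => |c N| * (1 / (1 - ρ)) + ρ ^ (N - k) / κ)
    · intro N
      have hb1 : |c N * (∑ t ∈ Finset.range (N - k), (q N) ^ t)| ≤ |c N| * (1 / (1 - ρ)) := by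
        rw [abs_mul]
        apply mul_le_mul_of_nonneg_left _ (abs_nonneg _)
        calc |∑ t ∈ Finset.range (N - k), (q N) ^ t|
            ≤ ∑ t ∈ Finset.range (N - k), |(q N) ^ t| := Finset.abs_sum_le_sum_abs _ _
          _ ≤ ∑ t ∈ Finset.range (N - k), ρ ^ t := by
              refine Finset.sum_le_sum fun t _ => ?_
              rw [abs_pow]
              exact pow_le_pow_left₀ (abs_nonneg _) (hq_le N) t
          _ ≤ 1 / (1 - ρ) := by
              have hes : (∑ t ∈ Finset.range (N - k), ρ ^ t) * (1 - ρ) = 1 - ρ ^ (N - k) := by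
                have := geom_sum_mul ρ (N - k)
                linarith [this]
              rw [le_div_iff₀ (by linarith : (0:ℝ) < 1 - ρ), hes]
              have : (0:ℝ) ≤ ρ ^ (N - k) := pow_nonneg hρ0 _
              linarith
      have hb2 : |(q N) ^ (N - k) / κ| ≤ ρ ^ (N - k) / κ := by
        rw [abs_div, abs_pow, abs_of_pos hκ0]
        exact (div_le_div_iff_of_pos_right hκ0).mpr (pow_le_pow_left₀ (abs_nonneg _) (hq_le N) _)
      calc ‖w N k‖ ≤ |c N * (∑ t ∈ Finset.range (N - k), (q N) ^ t)|
            + |(q N) ^ (N - k) / κ| := abs_add_le _ _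
        _ ≤ |c N| * (1 / (1 - ρ)) + ρ ^ (N - k) / κ := add_le_add hb1 hb2
    · have h1 : Filter.Tendsto (fun N => |c N| * (1 / (1 - ρ))) Filter.atTop (nhds 0) := by
        have : Filter.Tendsto (fun N => |c N|) Filter.atTop (nhds 0) := by
          have := hc_tendsto.abs
          rwa [abs_zero] at this
        simpa using this.mul_const (1 / (1 - ρ))
      have h2 : Filter.Tendsto (fun N : ℕ => ρ ^ (N - k) / κ) Filter.atTop (nhds 0) := by
        have hp : Filter.Tendsto (fun m : ℕ => ρ ^ m) Filter.atTop (nhds 0) :=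
          tendsto_pow_atTop_nhds_zero_of_lt_one hρ0 hρ1
        have := (hp.comp (Filter.tendsto_sub_atTop_nat k)).div_const κ
        simpa using this
      simpa using h1.add h2
  have hsum : Filter.Tendsto (fun N => ∑ k ∈ Finset.range n, w N k)
      Filter.atTop (nhds 0) := by
    have := tendsto_finset_sum (Finset.range n) (fun k _ => hterm k)
    simpa using this
  exact hsum.congr' (Filter.EventuallyEq.symm heq)
end

section
/- Let κ > 1/2, a = e^{-ρT} ∈ (0,1), and W^{(N)}_t = 1 - (Σ_{k=1}^{⌈Nt/T⌉} u^{(N)}_k)/(𝟏^T u^{(N)}) where u^{(N)} = U_N^{-1}𝟏 for the upper triangular matrix U_N with diagonal κ and entries a^{(j-i)/N} for j > i. Then for every 0 ≤ t < T, W^{(N)}_t → (ρ(T-t) + 1)/(ρT + 1) as N → ∞. -/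
open Matrix Finset Filter

lemma aux_row_s13 (κ b A B : ℝ) (hκ : κ ≠ 0)
    (hAB : κ * (A + B) = 1)
    (hA : κ * A * (1 - b * (κ - 1) / κ) = 1 - b) :
    ∀ K : ℕ, κ * (A + (b * (κ - 1) / κ) ^ K * B)
      + ∑ m ∈ range K, b ^ (m + 1) * (A + (b * (κ - 1) / κ) ^ (K - m - 1) * B) = 1 := by
  set r : ℝ := b * (κ - 1) / κ with hr
  have hbr : b * (κ - 1) = κ * r := by rw [hr]; field_simp
  intro K
  induction K with
  | zero => simpa using hAB
  | succ K ih =>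
    have hsum : ∑ m ∈ range (K + 1), b ^ (m + 1) * (A + r ^ (K + 1 - m - 1) * B)
        = b * (∑ m ∈ range K, b ^ (m + 1) * (A + r ^ (K - m - 1) * B))
          + b * (A + r ^ K * B) := by
      rw [Finset.sum_range_succ' (fun m => b ^ (m + 1) * (A + r ^ (K + 1 - m - 1) * B)) K]
      rw [Finset.mul_sum]
      congr 1
      · apply Finset.sum_congr rfl
        intro m hm
        have : K + 1 - (m + 1) - 1 = K - m - 1 := by omega
        rw [this]; ring
      · simp
    rw [hsum]
    have hih : ∑ m ∈ range K, b ^ (m + 1) * (A + r ^ (K - m - 1) * B)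
        = 1 - (κ * (A + r ^ K * B)) := by linarith [ih]
    rw [hih]
    have hkey : κ * (A + r ^ (K + 1) * B) = 1 - b + κ * r * (A + r ^ K * B) := by
      linear_combination hA
    linear_combination hkey - (A + r ^ K * B) * hbr
open Matrix Finset

lemma u_eq (ρ T : ℝ) (hρ : 0 < ρ) (hT : 0 < T) (a κ : ℝ)
    (ha : a = Real.exp (-(ρ * T))) (hκ : 1/2 < κ)
    (N : ℕ) (hN : 1 ≤ N)
    (U : Matrix (Fin (N+1)) (Fin (N+1)) ℝ)
    (hU : ∀ i j, U i j = if i = j then κ else if i < j then a ^ (((j:ℝ) - (i:ℝ))/(N:ℝ)) else 0)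
    (A B : ℝ) (hAB : κ * (A + B) = 1)
    (hA : κ * A * (1 - Real.exp (-(ρ*T/N)) * (κ-1)/κ) = 1 - Real.exp (-(ρ*T/N))) :
    U⁻¹.mulVec (fun _ => 1) = fun j : Fin (N+1) =>
      A + (Real.exp (-(ρ*T/N)) * (κ-1)/κ) ^ (N - (j:ℕ)) * B := by
  have hκ0 : (0:ℝ) < κ := by linarith
  set b : ℝ := Real.exp (-(ρ*T/N)) with hb
  set r : ℝ := b * (κ-1)/κ with hrdef
  set v : Fin (N+1) → ℝ := fun j => A + r ^ (N - (j:ℕ)) * B with hv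
  -- entry formula for strict upper part
  have hpow : ∀ (m : ℕ), a ^ (((m:ℝ)) / (N:ℝ)) = b ^ m := by
    intro m
    rw [ha, Real.rpow_def_of_pos (Real.exp_pos _), Real.log_exp, hb]
    rw [← Real.exp_nat_mul]
    congr 1
    have hN0 : (N:ℝ) ≠ 0 := by positivity
    push_cast
    ring
  -- each row sums to 1
  have hrow : ∀ i : Fin (N+1), U.mulVec v i = 1 := by
    intro i
    have hterm : ∀ j : Fin (N+1), U i j * v j =
        (fun n : ℕ => (if (i:ℕ) = n then κ else if (i:ℕ) < n then b ^ (n - (i:ℕ)) else 0)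
          * (A + r ^ (N - n) * B)) (j:ℕ) := by
      intro j
      simp only [hU, hv]
      by_cases h1 : i = j
      · simp [h1]
      · have h1' : ¬ ((i:ℕ) = (j:ℕ)) := fun h => h1 (Fin.ext h)
        by_cases h2 : i < j
        · have h2' : (i:ℕ) < (j:ℕ)  := h2
          have hc : ((j:ℝ) - (i:ℝ)) = (((j:ℕ) - (i:ℕ) : ℕ) : ℝ) := by
            have : (i:ℕ) ≤ (j:ℕ) := le_of_lt h2'
            push_cast [this]; ring
          simp only [h1, h1', h2, h2', if_false, if_true]
          rw [hc, hpow]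
        · have h2' : ¬ ((i:ℕ) < (j:ℕ)) := h2
          simp [h1, h1', h2, h2']
    have : U.mulVec v i = ∑ j : Fin (N+1), U i j * v j := by
      simp [Matrix.mulVec, dotProduct]
    rw [this]
    calc ∑ j : Fin (N+1), U i j * v j
        = ∑ n ∈ range (N+1), (if (i:ℕ) = n then κ else if (i:ℕ) < n then b ^ (n - (i:ℕ)) else 0)
            * (A + r ^ (N - n) * B) := by
          rw [← Fin.sum_univ_eq_sum_range]
          exact Finset.sum_congr rfl (fun j _ => hterm j)
      _ = ∑ n ∈ Ico (i:ℕ) (N+1), (if (i:ℕ) = n then κ else if (i:ℕ) < n then b ^ (n - (i:ℕ)) else 0)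
            * (A + r ^ (N - n) * B) := by
          rw [← Finset.sum_range_add_sum_Ico _ (by omega : (i:ℕ) ≤ N+1)]
          have : ∑ n ∈ range (i:ℕ), (if (i:ℕ) = n then κ else if (i:ℕ) < n then b ^ (n - (i:ℕ)) else 0)
            * (A + r ^ (N - n) * B) = 0 := by
            apply Finset.sum_eq_zero
            intro n hn
            rw [Finset.mem_range] at hn
            have h1 : ¬ ((i:ℕ) = n) := by omega
            have h2 : ¬ ((i:ℕ) < n) := by omega
            simp [h1, h2]
          rw [this, zero_add]
      _ = ∑ m ∈ range (N + 1 - (i:ℕ)), (if (i:ℕ) = (i:ℕ) + m then κ else if (i:ℕ) < (i:ℕ) + m then b ^ ((i:ℕ) + m - (i:ℕ)) else 0)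
            * (A + r ^ (N - ((i:ℕ) + m)) * B) := Finset.sum_Ico_eq_sum_range _ _ _
      _ = κ * (A + r ^ (N - (i:ℕ)) * B)
          + ∑ m ∈ range (N - (i:ℕ)), b ^ (m+1) * (A + r ^ ((N - (i:ℕ)) - m - 1) * B) := by
          have hK : N + 1 - (i:ℕ) = (N - (i:ℕ)) + 1 := by omega
          rw [hK, Finset.sum_range_succ' _ (N - (i:ℕ))]
          rw [add_comm]
          congr 1
          · simp
          · apply Finset.sum_congr rfl
            intro m hm
            rw [Finset.mem_range] at hm
            have h1 : ¬ ((i:ℕ) = (i:ℕ) + (m+1)) := by omega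
            have h2 : (i:ℕ) < (i:ℕ) + (m+1) := by omega
            have h3 : (i:ℕ) + (m+1) - (i:ℕ) = m + 1 := by omega
            have h4 : N - ((i:ℕ) + (m+1)) = N - (i:ℕ) - m - 1 := by omega
            simp only [h1, h2, h3, h4, if_false, if_true]
      _ = 1 := aux_row_s13 κ b A B (ne_of_gt hκ0) hAB hA (N - (i:ℕ))
  -- U is invertible
  have hdet : IsUnit U.det := by
    have htri : U.BlockTriangular id := by
      intro i j hij
      have h1 : ¬ (i = j) := by
        intro h; rw [h] at hij; exact lt_irrefl _ hij
      have h2 : ¬ (i < j) := not_lt.mpr (le_of_lt hij)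
      rw [hU]; simp [h1, h2]
    rw [Matrix.det_of_upperTriangular htri]
    have : ∏ i : Fin (N+1), U i i = κ ^ (N+1) := by
      simp [hU]
    rw [this]
    exact (isUnit_iff_ne_zero).mpr (pow_ne_zero _ (ne_of_gt hκ0))
  have h1 : U.mulVec v = fun _ => 1 := funext hrow
  calc U⁻¹.mulVec (fun _ => 1) = U⁻¹.mulVec (U.mulVec v) := by rw [h1]
    _ = (U⁻¹ * U).mulVec v := Matrix.mulVec_mulVec v U⁻¹ U
    _ = v := by rw [Matrix.nonsing_inv_mul U hdet, Matrix.one_mulVec]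

theorem inventory_high_frequency_limit (ρ T : ℝ) (hρ : 0 < ρ) (hT : 0 < T)
    (a κ : ℝ) (ha : a = Real.exp (-(ρ * T))) (hκ : 1 / 2 < κ)
    (U : (N : ℕ) → Matrix (Fin (N + 1)) (Fin (N + 1)) ℝ)
    (hU : ∀ (N : ℕ) (i j : Fin (N + 1)), U N i j =
      if i = j then κ
      else if i < j then a ^ (((j : ℝ) - (i : ℝ)) / (N : ℝ))
      else 0)
    (u : (N : ℕ) → Fin (N + 1) → ℝ)
    (hu : ∀ N : ℕ, u N = (U N)⁻¹.mulVec (fun _ => 1))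
    (W : (N : ℕ) → ℝ → ℝ)
    (hW : ∀ (N : ℕ) (t : ℝ), W N t =
      1 - (∑ m : Fin (N + 1), if (m : ℕ) < ⌈(N : ℝ) * t / T⌉₊ then u N m else 0)
            / ∑ j, u N j)
    (t : ℝ) (ht0 : 0 ≤ t) (htT : t < T) :
    Filter.Tendsto (fun N : ℕ => W N t) Filter.atTop
      (nhds ((ρ * (T - t) + 1) / (ρ * T + 1))) := by
  have hκ0 : (0:ℝ) < κ := by linarith
  have hsT : (0:ℝ) < ρ * T := mul_pos hρ hT
  set b : ℕ → ℝ := fun N => Real.exp (-(ρ * T / (N:ℝ))) with hbdef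
  set r : ℕ → ℝ := fun N => b N * (κ - 1) / κ with hrdef
  set A : ℕ → ℝ := fun N => (1 - b N) / (κ * (1 - r N)) with hAdef
  set B : ℕ → ℝ := fun N => 1/κ - A N with hBdef
  set M : ℕ → ℕ := fun N => ⌈(N:ℝ) * t / T⌉₊ with hMdef
  set q : ℝ := |κ - 1| / κ with hqdef
  -- basic bounds
  have hb_pos : ∀ N, 0 < b N := fun N => Real.exp_pos _
  have hb_le : ∀ N, b N ≤ 1 := by
    intro N
    apply Real.exp_le_one_iff.mpr
    have : (0:ℝ) ≤ ρ * T / (N:ℝ) := div_nonneg hsT.le (Nat.cast_nonneg N)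
    linarith
  have hq0 : 0 ≤ q := div_nonneg (abs_nonneg _) hκ0.le
  have hq1 : q < 1 := by
    rw [hqdef, div_lt_one hκ0]
    exact abs_lt.mpr ⟨by linarith, by linarith⟩
  have hr_abs : ∀ N, |r N| ≤ q := by
    intro N
    rw [hrdef, hqdef]
    simp only
    rw [abs_div, abs_mul, abs_of_pos hκ0, abs_of_pos (hb_pos N)]
    gcongr
    exact mul_le_of_le_one_left (abs_nonneg _) (hb_le N)
  have h1r : ∀ N, 0 < 1 - r N := by
    intro N
    have := le_abs_self (r N)
    have := hr_abs N
    linarith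
  have hr_ne1 : ∀ N, r N ≠ 1 := by
    intro N
    have := le_abs_self (r N); have := hr_abs N
    exact ne_of_lt (by linarith)
  have hA_nonneg : ∀ N, 0 ≤ A N := by
    intro N
    apply div_nonneg (by linarith [hb_le N])
    exact (mul_pos hκ0 (h1r N)).le
  have hAB : ∀ N, κ * (A N + B N) = 1 := by
    intro N
    rw [hBdef]
    simp only
    field_simp
    ring
  have hA_id : ∀ N, κ * A N * (1 - r N) = 1 - b N := by
    intro N
    rw [hAdef]
    simp only
    have h1 : (1 - r N) ≠ 0 := ne_of_gt (h1r N)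
    field_simp
  have hM_le : ∀ N, M N ≤ N := by
    intro N
    apply Nat.ceil_le.mpr
    rw [div_le_iff₀ hT]
    exact mul_le_mul_of_nonneg_left htT.le (Nat.cast_nonneg N)
  have hM_lb : ∀ N : ℕ, (N:ℝ) * t / T ≤ (M N : ℝ) := fun N => Nat.le_ceil _
  have hM_ub : ∀ N : ℕ, (M N : ℝ) < (N:ℝ) * t / T + 1 := by
    intro N
    exact Nat.ceil_lt_add_one (by positivity)
  -- limits
  have hb_lim : Tendsto b atTop (nhds 1) := by
    have h0 : Tendsto (fun N : ℕ => -(ρ * T / (N:ℝ))) atTop (nhds 0) := by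
      simpa using (tendsto_const_div_atTop_nhds_zero_nat (ρ*T)).neg
    have := (Real.continuous_exp.tendsto 0).comp h0
    simpa [hbdef, Function.comp_def] using this
  have hxN : Tendsto (fun N : ℕ => -(ρ * T / (N:ℝ))) atTop (nhdsWithin 0 {(0:ℝ)}ᶜ) := by
    rw [tendsto_nhdsWithin_iff]
    constructor
    · simpa using (tendsto_const_div_atTop_nhds_zero_nat (ρ*T)).neg
    · filter_upwards [eventually_ge_atTop 1] with N hN
      have hN0 : (0:ℝ) < (N:ℝ) := by exact_mod_cast hN
      have : (0:ℝ) < ρ * T / (N:ℝ) := div_pos hsT hN0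
      simp only [Set.mem_compl_iff, Set.mem_singleton_iff]
      intro h
      rw [neg_eq_zero] at h
      linarith
  have hexp_slope : Tendsto (fun x : ℝ => (Real.exp x - 1)/x) (nhdsWithin 0 {(0:ℝ)}ᶜ) (nhds 1) := by
    have h := Real.hasDerivAt_exp 0
    rw [hasDerivAt_iff_tendsto_slope] at h
    rw [Real.exp_zero] at h
    refine h.congr fun x => ?_
    simp [slope_def_field]
  have hNb : Tendsto (fun N : ℕ => (N:ℝ) * (1 - b N)) atTop (nhds (ρ*T)) := by
    have hcomp := hexp_slope.comp hxN
    have h2 := hcomp.const_mul (ρ*T)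
    rw [mul_one] at h2
    refine Tendsto.congr' ?_ h2
    filter_upwards [eventually_ge_atTop 1] with N hN
    have hN0 : ((N:ℝ)) ≠ 0 := Nat.cast_ne_zero.mpr (by omega)
    have hsT0 : ρ * T ≠ 0 := ne_of_gt hsT
    show ρ * T * ((Real.exp (-(ρ * T / (N:ℝ))) - 1) / (-(ρ * T / (N:ℝ)))) = (N:ℝ) * (1 - b N)
    rw [hbdef]
    field_simp
    ring
  have hr_lim : Tendsto r atTop (nhds ((κ-1)/κ)) := by
    have := (hb_lim.mul_const (κ-1)).div_const κ
    simpa [hrdef] using this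
  have hden : Tendsto (fun N => κ * (1 - r N)) atTop (nhds 1) := by
    have h := ((tendsto_const_nhds (x := (1:ℝ))).sub hr_lim).const_mul κ
    have hval : κ * (1 - (κ-1)/κ) = 1 := by field_simp; ring
    rwa [hval] at h
  have hA0 : Tendsto A atTop (nhds 0) := by
    have h := ((tendsto_const_nhds (x := (1:ℝ))).sub hb_lim).div hden one_ne_zero
    simpa [hAdef, Pi.div_def] using h
  have hNA : Tendsto (fun N : ℕ => (N:ℝ) * A N) atTop (nhds (ρ*T)) := by
    have h := hNb.div hden one_ne_zero
    rw [div_one] at h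
    refine Tendsto.congr (fun N => ?_) h
    exact mul_div_assoc _ _ _
  have hB_lim : Tendsto B atTop (nhds (1/κ)) := by
    have := (tendsto_const_nhds (x := 1/κ)).sub hA0
    simpa [hBdef] using this
  have hMA : Tendsto (fun N : ℕ => (M N : ℝ) * A N) atTop (nhds (ρ*t)) := by
    have hlow : Tendsto (fun N : ℕ => ((N:ℝ) * t / T) * A N) atTop (nhds (ρ*t)) := by
      have h := hNA.const_mul (t/T)
      have hval : t/T * (ρ*T) = ρ*t := by field_simp
      rw [hval] at h
      refine Tendsto.congr (fun N => ?_) h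
      ring
    have hhigh : Tendsto (fun N : ℕ => ((N:ℝ) * t / T + 1) * A N) atTop (nhds (ρ*t)) := by
      have h := hlow.add hA0
      rw [add_zero] at h
      refine Tendsto.congr (fun N => ?_) h
      ring
    apply tendsto_of_tendsto_of_tendsto_of_le_of_le hlow hhigh
    · intro N
      exact mul_le_mul_of_nonneg_right (hM_lb N) (hA_nonneg N)
    · intro N
      exact mul_le_mul_of_nonneg_right (hM_ub N).le (hA_nonneg N)
  have hK : Tendsto (fun N => N - M N + 1) atTop atTop := by
    rw [← tendsto_natCast_atTop_iff (R := ℝ)]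
    have hlb : Tendsto (fun N : ℕ => (N:ℝ) * ((T-t)/T) - 1) atTop atTop := by
      apply tendsto_atTop_add_const_right
      exact tendsto_natCast_atTop_atTop.atTop_mul_const (div_pos (by linarith) hT)
    apply tendsto_atTop_mono ?_ hlb
    intro N
    have hcast : ((N - M N + 1 : ℕ) : ℝ) = (N:ℝ) - (M N : ℝ) + 1 := by
      push_cast [hM_le N]; ring
    rw [hcast]
    have hub := hM_ub N
    have : (N:ℝ) * ((T-t)/T) = (N:ℝ) - (N:ℝ)*t/T := by field_simp
    linarith
  have hgeom : ∀ g : ℕ → ℕ, Tendsto g atTop atTop →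
      Tendsto (fun N => r N ^ g N) atTop (nhds 0) := by
    intro g hg
    apply squeeze_zero_norm (fun N => ?_)
      ((tendsto_pow_atTop_nhds_zero_of_lt_one hq0 hq1).comp hg)
    show ‖r N ^ g N‖ ≤ q ^ g N
    rw [Real.norm_eq_abs, abs_pow]
    exact pow_le_pow_left₀ (abs_nonneg _) (hr_abs N) _
  -- closed form for partial sums
  have hclosed : ∀ N n : ℕ, ∑ k ∈ range n, (A N + r N ^ k * B N)
      = (n:ℝ) * A N + B N * ((r N ^ n - 1)/(r N - 1)) := by
    intro N n
    rw [Finset.sum_add_distrib, Finset.sum_const, Finset.card_range, nsmul_eq_mul]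
    congr 1
    rw [← Finset.sum_mul, geom_sum_eq (hr_ne1 N), mul_comm]
  set Qc : ℕ → ℝ := fun N => ((N+1:ℕ):ℝ) * A N + B N * ((r N ^ (N+1) - 1)/(r N - 1)) with hQcdef
  set Pc : ℕ → ℝ := fun N => ((N - M N + 1:ℕ):ℝ) * A N
      + B N * ((r N ^ (N - M N + 1) - 1)/(r N - 1)) with hPcdef
  have hrden : Tendsto (fun N => r N - 1) atTop (nhds ((κ-1)/κ - 1)) :=
    hr_lim.sub_const 1
  have hrden_ne : (κ-1)/κ - 1 ≠ 0 := by
    have : (κ-1)/κ - 1 = -(1/κ) := by field_simp; ring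
    rw [this]
    simp only [ne_eq, neg_eq_zero]
    positivity
  have hgeom_term : ∀ g : ℕ → ℕ, Tendsto g atTop atTop →
      Tendsto (fun N => B N * ((r N ^ g N - 1)/(r N - 1))) atTop (nhds 1) := by
    intro g hg
    have h := hB_lim.mul ((((hgeom g hg).sub_const 1)).div hrden hrden_ne)
    have hval : 1/κ * ((0 - 1)/((κ-1)/κ - 1)) = 1 := by
      rw [show (κ-1)/κ - 1 = -(1/κ) by field_simp; ring]
      field_simp
      ring
    rwa [hval] at h
  have hQlim : Tendsto Qc atTop (nhds (ρ*T + 1)) := by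
    have h1 : Tendsto (fun N : ℕ => ((N+1:ℕ):ℝ) * A N) atTop (nhds (ρ*T)) := by
      have h := hNA.add hA0
      rw [add_zero] at h
      refine Tendsto.congr (fun N => ?_) h
      push_cast
      ring
    have := h1.add (hgeom_term _ (tendsto_add_atTop_nat 1))
    exact this
  have hPlim : Tendsto Pc atTop (nhds (ρ*(T-t) + 1)) := by
    have h1 : Tendsto (fun N : ℕ => ((N - M N + 1:ℕ):ℝ) * A N) atTop (nhds (ρ*(T-t))) := by
      have h := (hNA.sub hMA).add hA0
      rw [add_zero] at h
      have hval : ρ*T - ρ*t = ρ*(T-t) := by ring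
      rw [hval] at h
      refine Tendsto.congr (fun N => ?_) h
      have hcast : ((N - M N + 1:ℕ):ℝ) = (N:ℝ) - (M N:ℝ) + 1 := by
        push_cast [hM_le N]; ring
      rw [hcast]
      ring
    exact h1.add (hgeom_term _ hK)
  -- eventual equality of W with Pc/Qc
  have hQpos : ∀ᶠ N in atTop, 0 < Qc N :=
    hQlim.eventually (eventually_gt_nhds (by positivity))
  have hfinal : ∀ᶠ N in atTop, W N t = Pc N / Qc N := by
    filter_upwards [eventually_ge_atTop 1, hQpos] with N hN1 hQp
    have huv : u N = fun j : Fin (N+1) => A N + r N ^ (N - (j:ℕ)) * B N := by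
      rw [hu]
      exact u_eq ρ T hρ hT a κ ha hκ N hN1 (U N) (hU N) (A N) (B N) (hAB N) (hA_id N)
    have htot : (∑ j : Fin (N+1), u N j) = Qc N := by
      rw [huv]
      rw [Fin.sum_univ_eq_sum_range (fun n => A N + r N ^ (N - n) * B N) (N+1)]
      have hrefl : ∑ n ∈ range (N+1), (A N + r N ^ (N - n) * B N)
          = ∑ k ∈ range (N+1), (A N + r N ^ k * B N) := by
        have := Finset.sum_range_reflect (fun k => A N + r N ^ k * B N) (N+1)
        simpa using this
      rw [hrefl, hclosed]
    have hIco : ∑ n ∈ Ico (M N) (N+1), (A N + r N ^ (N - n) * B N) = Pc N := by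
      rw [Finset.sum_Ico_eq_sum_range]
      have hc1 : N + 1 - M N = (N - M N) + 1 := by
        have := hM_le N; omega
      rw [hc1]
      have hcong : ∀ m ∈ range ((N - M N) + 1),
          (A N + r N ^ (N - (M N + m)) * B N)
            = (fun k => A N + r N ^ k * B N) ((N - M N + 1) - 1 - m) := by
        intro m hm
        rw [Finset.mem_range] at hm
        have hMN := hM_le N
        show A N + r N ^ (N - (M N + m)) * B N
            = A N + r N ^ ((N - M N + 1) - 1 - m) * B N
        have h5 : N - (M N + m) = (N - M N + 1) - 1 - m := by omega
        rw [h5]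
      rw [Finset.sum_congr rfl hcong,
        Finset.sum_range_reflect (fun k => A N + r N ^ k * B N) ((N - M N) + 1)]
      rw [hclosed]
    have hnum : (∑ m : Fin (N+1), if (m:ℕ) < M N then u N m else 0) = Qc N - Pc N := by
      rw [huv]
      rw [Fin.sum_univ_eq_sum_range
        (fun n => if n < M N then A N + r N ^ (N - n) * B N else 0) (N+1)]
      rw [← Finset.sum_filter]
      have hfil : (range (N+1)).filter (fun n => n < M N) = range (M N) := by
        have hMN := hM_le N
        ext x
        simp only [Finset.mem_filter, Finset.mem_range]
        omega
      rw [hfil]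
      have hsplit := Finset.sum_range_add_sum_Ico
        (fun n => A N + r N ^ (N - n) * B N) (show M N ≤ N + 1 by have := hM_le N; omega)
      have htot2 : ∑ n ∈ range (N+1), (A N + r N ^ (N - n) * B N) = Qc N := by
        have hrefl := Finset.sum_range_reflect (fun k => A N + r N ^ k * B N) (N+1)
        simp only [Nat.add_sub_cancel] at hrefl
        rw [hrefl, hclosed]
      rw [hIco, htot2] at hsplit
      linarith
    rw [hW, htot, hnum]
    field_simp
    ring
  -- conclude
  have hPQ : Tendsto (fun N => Pc N / Qc N) atTop (nhds ((ρ*(T-t)+1)/(ρ*T+1))) :=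
    hPlim.div hQlim (by positivity)
  exact Tendsto.congr' (hfinal.mono fun N h => h.symm) hPQ
end

section
/- Let 0 < a < 1, N ≥ 1, and consider the (N+1)×(N+1) matrices Φ_{ij} = a^{|i-j|/N}, Φ̂ = Φ~ + (1/2)Id where Φ~ is the strict lower triangular part of Φ plus half its diagonal, Ψ̂ = Ψ~^T - (1/2)Id where Ψ~ is the strict lower triangular all-ones part plus half the diagonal of the all-ones matrix. Then for any c ≥ 0 the matrix Φ^{-1}(Φ̂ - c Ψ̂) is an upper triangular Z-matrix with positive diagonal, hence a nonsingular M-matrix. -/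
open Matrix

/-- A nonsingular M-matrix: `A = s • 1 - B` with `B` entrywise nonnegative and `s`
strictly larger than the spectral radius of `B`. -/
def IsNonsingularMMatrix {n : ℕ} (A : Matrix (Fin n) (Fin n) ℝ) : Prop :=
  ∃ (s : ℝ) (B : Matrix (Fin n) (Fin n) ℝ),
    (∀ i j, 0 ≤ B i j) ∧
    A = s • (1 : Matrix (Fin n) (Fin n) ℝ) - B ∧
    ∀ μ ∈ spectrum ℂ (B.map (algebraMap ℝ ℂ)), ‖μ‖ < s

/-! ### Auxiliary material -/

lemma sum_indicator_mul (N : ℕ) (m : ℕ) (co : ℝ) (f : Fin (N + 1) → ℝ) :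
    ∑ k : Fin (N + 1), (if (k : ℕ) = m then co else 0) * f k =
      if h : m < N + 1 then co * f ⟨m, h⟩ else 0 := by
  split_ifs with h
  · rw [Finset.sum_eq_single (⟨m, h⟩ : Fin (N + 1))]
    · simp
    · intro k _ hk
      have hkm : (k : ℕ) ≠ m := fun hh => hk (Fin.ext hh)
      simp [hkm]
    · simp
  · apply Finset.sum_eq_zero
    intro k _
    have hk := k.isLt
    have hkm : (k : ℕ) ≠ m := by omega
    simp [hkm]

/-- The tridiagonal matrix `(1-r²)·Φ⁻¹`. -/
def gmat (N : ℕ) (r : ℝ) : Matrix (Fin (N + 1)) (Fin (N + 1)) ℝ :=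
  Matrix.of fun i k =>
    (if (k : ℕ) = (i : ℕ) then (if (i : ℕ) = 0 ∨ (i : ℕ) = N then 1 else 1 + r ^ 2) else 0)
    + (if (k : ℕ) = (i : ℕ) + 1 then -r else 0)
    + (if (k : ℕ) + 1 = (i : ℕ) then -r else 0)

lemma gmat_mul_apply (N : ℕ) (r : ℝ) (X : Matrix (Fin (N + 1)) (Fin (N + 1)) ℝ)
    (i j : Fin (N + 1)) :
    (gmat N r * X) i j =
      (if (i : ℕ) = 0 ∨ (i : ℕ) = N then 1 else 1 + r ^ 2) * X i j
      + (if h : (i : ℕ) < N then (-r) * X ⟨(i : ℕ) + 1, by omega⟩ j else 0)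
      + (if h : 0 < (i : ℕ) then (-r) * X ⟨(i : ℕ) - 1, by omega⟩ j else 0) := by
  rw [Matrix.mul_apply]
  simp only [gmat, Matrix.of_apply, add_mul]
  rw [Finset.sum_add_distrib, Finset.sum_add_distrib]
  have hi := i.isLt
  congr 1
  · congr 1
    · rw [sum_indicator_mul, dif_pos hi, Fin.eta]
    · rw [sum_indicator_mul]
      by_cases h : (i : ℕ) < N
      · rw [dif_pos (by omega : (i : ℕ) + 1 < N + 1), dif_pos h]
      · rw [dif_neg (by omega), dif_neg h]
  · by_cases h : 0 < (i : ℕ)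
    · have hs : ∀ k : Fin (N + 1),
          (if (k : ℕ) + 1 = (i : ℕ) then -r else 0) * X k j
            = (if (k : ℕ) = (i : ℕ) - 1 then -r else 0) * X k j := by
        intro k
        by_cases hk : (k : ℕ) + 1 = (i : ℕ)
        · rw [if_pos hk, if_pos (by omega)]
        · rw [if_neg hk, if_neg (by omega)]
      have hrw : ∑ k : Fin (N + 1), (if (k : ℕ) + 1 = (i : ℕ) then -r else 0) * X k j
          = ∑ k : Fin (N + 1), (if (k : ℕ) = (i : ℕ) - 1 then -r else 0) * X k j :=
        Finset.sum_congr rfl (fun k _ => hs k)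
      rw [hrw, sum_indicator_mul, dif_pos (by omega : (i : ℕ) - 1 < N + 1), dif_pos h]
    · have hrw : ∑ k : Fin (N + 1), (if (k : ℕ) + 1 = (i : ℕ) then -r else 0) * X k j = 0 := by
        apply Finset.sum_eq_zero
        intro k _
        have hk : ¬ ((k : ℕ) + 1 = (i : ℕ)) := by omega
        simp [hk]
      rw [hrw, dif_neg h]

lemma gmat_mul_phi (N : ℕ) (hN : 1 ≤ N) (r : ℝ)
    (Φ : Matrix (Fin (N + 1)) (Fin (N + 1)) ℝ)
    (hΦ : ∀ i j : Fin (N + 1),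
      Φ i j = r ^ ((i : ℕ) - (j : ℕ)) * r ^ ((j : ℕ) - (i : ℕ))) :
    gmat N r * Φ = (1 - r ^ 2) • (1 : Matrix (Fin (N + 1)) (Fin (N + 1)) ℝ) := by
  ext i j
  rw [gmat_mul_apply, Matrix.smul_apply, Matrix.one_apply, smul_eq_mul]
  have hiN : (i : ℕ) < N + 1 := i.isLt
  have hjN : (j : ℕ) < N + 1 := j.isLt
  rcases lt_trichotomy ((j : ℕ)) ((i : ℕ)) with hlt | heq | hgt
  · -- j < i : entry is 0
    have hij : i ≠ j := Fin.ne_of_val_ne (by omega)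
    obtain ⟨d, hd⟩ : ∃ d, (i : ℕ) = (j : ℕ) + d + 1 := ⟨(i : ℕ) - (j : ℕ) - 1, by omega⟩
    rw [if_neg hij, dif_pos (by omega : 0 < (i : ℕ))]
    by_cases hN' : (i : ℕ) < N
    · rw [dif_pos hN', if_neg (by omega : ¬ ((i : ℕ) = 0 ∨ (i : ℕ) = N))]
      simp only [hΦ]
      rw [show (i : ℕ) - (j : ℕ) = d + 1 by omega, show (j : ℕ) - (i : ℕ) = 0 by omega,
        show ((⟨(i : ℕ) + 1, by omega⟩ : Fin (N + 1)) : ℕ) - (j : ℕ) = d + 2 by simp; omega,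
        show (j : ℕ) - ((⟨(i : ℕ) + 1, by omega⟩ : Fin (N + 1)) : ℕ) = 0 by simp; omega,
        show ((⟨(i : ℕ) - 1, by omega⟩ : Fin (N + 1)) : ℕ) - (j : ℕ) = d by simp; omega,
        show (j : ℕ) - ((⟨(i : ℕ) - 1, by omega⟩ : Fin (N + 1)) : ℕ) = 0 by simp; omega]
      ring
    · rw [dif_neg hN', if_pos (by omega : (i : ℕ) = 0 ∨ (i : ℕ) = N)]
      simp only [hΦ]
      rw [show (i : ℕ) - (j : ℕ) = d + 1 by omega, show (j : ℕ) - (i : ℕ) = 0 by omega,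
        show ((⟨(i : ℕ) - 1, by omega⟩ : Fin (N + 1)) : ℕ) - (j : ℕ) = d by simp; omega,
        show (j : ℕ) - ((⟨(i : ℕ) - 1, by omega⟩ : Fin (N + 1)) : ℕ) = 0 by simp; omega]
      ring
  · -- j = i : entry is 1 - r²
    have hij : i = j := Fin.ext (by omega)
    rw [if_pos hij]
    by_cases h0 : (i : ℕ) = 0
    · rw [dif_pos (by omega : (i : ℕ) < N), dif_neg (by omega : ¬ 0 < (i : ℕ)),
        if_pos (Or.inl h0)]
      simp only [hΦ]
      rw [show (i : ℕ) - (j : ℕ) = 0 by omega, show (j : ℕ) - (i : ℕ) = 0 by omega,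
        show ((⟨(i : ℕ) + 1, by omega⟩ : Fin (N + 1)) : ℕ) - (j : ℕ) = 1 by simp; omega,
        show (j : ℕ) - ((⟨(i : ℕ) + 1, by omega⟩ : Fin (N + 1)) : ℕ) = 0 by simp; omega]
      ring
    · by_cases hN' : (i : ℕ) < N
      · rw [dif_pos hN', dif_pos (by omega : 0 < (i : ℕ)),
          if_neg (by omega : ¬ ((i : ℕ) = 0 ∨ (i : ℕ) = N))]
        simp only [hΦ]
        rw [show (i : ℕ) - (j : ℕ) = 0 by omega, show (j : ℕ) - (i : ℕ) = 0 by omega,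
          show ((⟨(i : ℕ) + 1, by omega⟩ : Fin (N + 1)) : ℕ) - (j : ℕ) = 1 by simp; omega,
          show (j : ℕ) - ((⟨(i : ℕ) + 1, by omega⟩ : Fin (N + 1)) : ℕ) = 0 by simp; omega,
          show ((⟨(i : ℕ) - 1, by omega⟩ : Fin (N + 1)) : ℕ) - (j : ℕ) = 0 by simp; omega,
          show (j : ℕ) - ((⟨(i : ℕ) - 1, by omega⟩ : Fin (N + 1)) : ℕ) = 1 by simp; omega]
        ring
      · rw [dif_neg hN', dif_pos (by omega : 0 < (i : ℕ)),
          if_pos (by omega : (i : ℕ) = 0 ∨ (i : ℕ) = N)]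
        simp only [hΦ]
        rw [show (i : ℕ) - (j : ℕ) = 0 by omega, show (j : ℕ) - (i : ℕ) = 0 by omega,
          show ((⟨(i : ℕ) - 1, by omega⟩ : Fin (N + 1)) : ℕ) - (j : ℕ) = 0 by simp; omega,
          show (j : ℕ) - ((⟨(i : ℕ) - 1, by omega⟩ : Fin (N + 1)) : ℕ) = 1 by simp; omega]
        ring
  · -- i < j : entry is 0
    have hij : i ≠ j := Fin.ne_of_val_ne (by omega)
    obtain ⟨d, hd⟩ : ∃ d, (j : ℕ) = (i : ℕ) + d + 1 := ⟨(j : ℕ) - (i : ℕ) - 1, by omega⟩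
    have hiNlt : (i : ℕ) < N := by omega
    rw [if_neg hij, dif_pos hiNlt]
    by_cases h0 : 0 < (i : ℕ)
    · rw [dif_pos h0, if_neg (by omega : ¬ ((i : ℕ) = 0 ∨ (i : ℕ) = N))]
      simp only [hΦ]
      rw [show (i : ℕ) - (j : ℕ) = 0 by omega, show (j : ℕ) - (i : ℕ) = d + 1 by omega,
        show ((⟨(i : ℕ) + 1, by omega⟩ : Fin (N + 1)) : ℕ) - (j : ℕ) = 0 by simp; omega,
        show (j : ℕ) - ((⟨(i : ℕ) + 1, by omega⟩ : Fin (N + 1)) : ℕ) = d by simp; omega,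
        show ((⟨(i : ℕ) - 1, by omega⟩ : Fin (N + 1)) : ℕ) - (j : ℕ) = 0 by simp; omega,
        show (j : ℕ) - ((⟨(i : ℕ) - 1, by omega⟩ : Fin (N + 1)) : ℕ) = d + 2 by simp; omega]
      ring
    · rw [dif_neg h0, if_pos (by omega : (i : ℕ) = 0 ∨ (i : ℕ) = N)]
      simp only [hΦ]
      rw [show (i : ℕ) - (j : ℕ) = 0 by omega, show (j : ℕ) - (i : ℕ) = d + 1 by omega,
        show ((⟨(i : ℕ) + 1, by omega⟩ : Fin (N + 1)) : ℕ) - (j : ℕ) = 0 by simp; omega,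
        show (j : ℕ) - ((⟨(i : ℕ) + 1, by omega⟩ : Fin (N + 1)) : ℕ) = d by simp; omega]
      ring

lemma spectrum_upper_triangular {n : ℕ} (B : Matrix (Fin n) (Fin n) ℝ)
    (hB : ∀ i j : Fin n, j < i → B i j = 0) (μ : ℂ)
    (hμ : μ ∈ spectrum ℂ (B.map (algebraMap ℝ ℂ))) : ∃ i, μ = (B i i : ℂ) := by
  rw [spectrum.mem_iff, Matrix.isUnit_iff_isUnit_det] at hμ
  have htri : (algebraMap ℂ (Matrix (Fin n) (Fin n) ℂ) μ
      - B.map (algebraMap ℝ ℂ)).BlockTriangular id := by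
    intro i j hij
    have hij' : j < i := hij
    simp [Matrix.sub_apply, Matrix.algebraMap_matrix_apply, Matrix.map_apply,
      hB i j hij', (ne_of_gt hij' : i ≠ j)]
  rw [Matrix.det_of_upperTriangular htri] at hμ
  rw [isUnit_iff_ne_zero, not_not, Finset.prod_eq_zero_iff] at hμ
  obtain ⟨i, _, hi⟩ := hμ
  refine ⟨i, ?_⟩
  have : (algebraMap ℂ (Matrix (Fin n) (Fin n) ℂ)) μ i i - (B.map (algebraMap ℝ ℂ)) i i = 0 := by
    simpa [Matrix.sub_apply] using hi
  simp only [Matrix.algebraMap_matrix_apply, if_pos rfl, Matrix.map_apply,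
    Algebra.algebraMap_self_apply] at this
  have h2 : μ = algebraMap ℝ ℂ (B i i) := sub_eq_zero.mp this
  simpa using h2

theorem PhiInv_PhiHat_minus_cPsiHat_Mmatrix (N : ℕ) (hN : 1 ≤ N)
    (a c : ℝ) (ha0 : 0 < a) (ha1 : a < 1) (hc : 0 ≤ c)
    (Φ Φhat Ψhat : Matrix (Fin (N + 1)) (Fin (N + 1)) ℝ)
    (hΦ : ∀ i j : Fin (N + 1), Φ i j = a ^ ((|(i : ℝ) - (j : ℝ)|) / (N : ℝ)))
    (hΦhat : ∀ i j : Fin (N + 1),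
      Φhat i j = if j < i then Φ i j else if i = j then 1 else 0)
    (hΨhat : ∀ i j : Fin (N + 1), Ψhat i j = if i < j then 1 else 0) :
    (∀ i j : Fin (N + 1), j < i → (Φ⁻¹ * (Φhat - c • Ψhat)) i j = 0) ∧
    (∀ i j : Fin (N + 1), i ≠ j → (Φ⁻¹ * (Φhat - c • Ψhat)) i j ≤ 0) ∧
    (∀ i : Fin (N + 1), 0 < (Φ⁻¹ * (Φhat - c • Ψhat)) i i) ∧
    IsNonsingularMMatrix (Φ⁻¹ * (Φhat - c • Ψhat)) := by
  set r : ℝ := a ^ ((N : ℝ))⁻¹ with hr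
  have hNpos : (0 : ℝ) < (N : ℝ) := by exact_mod_cast Nat.lt_of_lt_of_le Nat.zero_lt_one hN
  have hr0 : 0 < r := Real.rpow_pos_of_pos ha0 _
  have hr1 : r < 1 := Real.rpow_lt_one ha0.le ha1 (by positivity)
  have hdet : (1 : ℝ) - r ^ 2 ≠ 0 := by nlinarith
  have hdetpos : (0 : ℝ) < 1 - r ^ 2 := by nlinarith
  -- rewrite Φ in terms of r
  have hpow : ∀ d : ℕ, a ^ (((d : ℕ) : ℝ) / (N : ℝ)) = r ^ d := by
    intro d
    rw [div_eq_mul_inv, mul_comm, Real.rpow_mul ha0.le, Real.rpow_natCast]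
  have hΦ' : ∀ i j : Fin (N + 1),
      Φ i j = r ^ ((i : ℕ) - (j : ℕ)) * r ^ ((j : ℕ) - (i : ℕ)) := by
    intro i j
    rw [hΦ]
    have habs : |(i : ℝ) - (j : ℝ)| = ((((i : ℕ) - (j : ℕ)) + ((j : ℕ) - (i : ℕ)) : ℕ) : ℝ) := by
      rcases le_total ((i : ℕ)) ((j : ℕ)) with h | h
      · rw [Nat.sub_eq_zero_of_le h, zero_add, Nat.cast_sub h,
          abs_of_nonpos (by simp; exact_mod_cast h), neg_sub]
      · rw [Nat.sub_eq_zero_of_le h, add_zero, Nat.cast_sub h,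
          abs_of_nonneg (by simp; exact_mod_cast h)]
    rw [habs, hpow, pow_add]
  -- the inverse of Φ
  have hinv : Φ⁻¹ = (1 - r ^ 2)⁻¹ • gmat N r := by
    apply Matrix.inv_eq_left_inv
    rw [Matrix.smul_mul, gmat_mul_phi N hN r Φ hΦ', smul_smul, inv_mul_cancel₀ hdet, one_smul]
  -- explicit entries of X := Φhat - c • Ψhat
  set X : Matrix (Fin (N + 1)) (Fin (N + 1)) ℝ := Φhat - c • Ψhat with hXdef
  have hX : ∀ i j : Fin (N + 1),
      X i j = if (j : ℕ) < (i : ℕ) then r ^ ((i : ℕ) - (j : ℕ))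
        else if (i : ℕ) = (j : ℕ) then 1 else -c := by
    intro i j
    rw [hXdef, Matrix.sub_apply, Matrix.smul_apply, hΦhat, hΨhat, smul_eq_mul, hΦ' i j]
    simp only [Fin.lt_def, Fin.ext_iff]
    rcases lt_trichotomy ((j : ℕ)) ((i : ℕ)) with h | h | h
    · rw [if_pos h, if_pos h, if_neg (show ¬ (i : ℕ) < (j : ℕ) by omega),
        show (j : ℕ) - (i : ℕ) = 0 by omega, pow_zero, mul_one, mul_zero, sub_zero]
    · rw [if_neg (show ¬ (j : ℕ) < (i : ℕ) by omega), if_neg (show ¬ (j : ℕ) < (i : ℕ) by omega),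
        if_pos (show (i : ℕ) = (j : ℕ) by omega), if_pos (show (i : ℕ) = (j : ℕ) by omega),
        if_neg (show ¬ (i : ℕ) < (j : ℕ) by omega), mul_zero, sub_zero]
    · rw [if_neg (show ¬ (j : ℕ) < (i : ℕ) by omega), if_neg (show ¬ (j : ℕ) < (i : ℕ) by omega),
        if_neg (show ¬ (i : ℕ) = (j : ℕ) by omega), if_neg (show ¬ (i : ℕ) = (j : ℕ) by omega),
        if_pos (show (i : ℕ) < (j : ℕ) by omega), mul_one, zero_sub]
  -- entries of M' := gmat N r * X
  set M : Matrix (Fin (N + 1)) (Fin (N + 1)) ℝ := gmat N r * X with hMdef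
  have hMlow : ∀ i j : Fin (N + 1), (j : ℕ) < (i : ℕ) → M i j = 0 := by
    intro i j hlt
    have hiN : (i : ℕ) < N + 1 := i.isLt
    rw [hMdef, gmat_mul_apply, dif_pos (by omega : 0 < (i : ℕ))]
    by_cases hN' : (i : ℕ) < N
    · rw [dif_pos hN', if_neg (by omega : ¬ ((i : ℕ) = 0 ∨ (i : ℕ) = N))]
      simp only [hX]
      by_cases h2 : (j : ℕ) + 1 < (i : ℕ)
      · obtain ⟨d, hd⟩ : ∃ d, (i : ℕ) = (j : ℕ) + d + 2 := ⟨(i : ℕ) - (j : ℕ) - 2, by omega⟩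
        rw [if_pos hlt,
          if_pos (show ((⟨(i : ℕ) + 1, by omega⟩ : Fin (N + 1)) : ℕ) > (j : ℕ) by simp; omega),
          if_pos (show ((⟨(i : ℕ) - 1, by omega⟩ : Fin (N + 1)) : ℕ) > (j : ℕ) by simp; omega),
          show (i : ℕ) - (j : ℕ) = d + 2 by omega,
          show ((⟨(i : ℕ) + 1, by omega⟩ : Fin (N + 1)) : ℕ) - (j : ℕ) = d + 3 by simp; omega,
          show ((⟨(i : ℕ) - 1, by omega⟩ : Fin (N + 1)) : ℕ) - (j : ℕ) = d + 1 by simp; omega]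
        ring
      · -- j + 1 = i
        rw [if_pos hlt,
          if_pos (show ((⟨(i : ℕ) + 1, by omega⟩ : Fin (N + 1)) : ℕ) > (j : ℕ) by simp; omega),
          if_neg (show ¬ ((j : ℕ) < ((⟨(i : ℕ) - 1, by omega⟩ : Fin (N + 1)) : ℕ)) by simp; omega),
          if_pos (show ((⟨(i : ℕ) - 1, by omega⟩ : Fin (N + 1)) : ℕ) = (j : ℕ) by simp; omega),
          show (i : ℕ) - (j : ℕ) = 1 by omega,
          show ((⟨(i : ℕ) + 1, by omega⟩ : Fin (N + 1)) : ℕ) - (j : ℕ) = 2 by simp; omega]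
        ring
    · rw [dif_neg hN', if_pos (by omega : (i : ℕ) = 0 ∨ (i : ℕ) = N)]
      simp only [hX]
      by_cases h2 : (j : ℕ) + 1 < (i : ℕ)
      · obtain ⟨d, hd⟩ : ∃ d, (i : ℕ) = (j : ℕ) + d + 2 := ⟨(i : ℕ) - (j : ℕ) - 2, by omega⟩
        rw [if_pos hlt,
          if_pos (show ((⟨(i : ℕ) - 1, by omega⟩ : Fin (N + 1)) : ℕ) > (j : ℕ) by simp; omega),
          show (i : ℕ) - (j : ℕ) = d + 2 by omega,
          show ((⟨(i : ℕ) - 1, by omega⟩ : Fin (N + 1)) : ℕ) - (j : ℕ) = d + 1 by simp; omega]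
        ring
      · rw [if_pos hlt,
          if_neg (show ¬ ((j : ℕ) < ((⟨(i : ℕ) - 1, by omega⟩ : Fin (N + 1)) : ℕ)) by simp; omega),
          if_pos (show ((⟨(i : ℕ) - 1, by omega⟩ : Fin (N + 1)) : ℕ) = (j : ℕ) by simp; omega),
          show (i : ℕ) - (j : ℕ) = 1 by omega]
        ring
  have hMup : ∀ i j : Fin (N + 1), (i : ℕ) < (j : ℕ) → M i j ≤ 0 := by
    intro i j hlt
    have hjN : (j : ℕ) < N + 1 := j.isLt
    have hiNlt : (i : ℕ) < N := by omega
    rw [hMdef, gmat_mul_apply, dif_pos hiNlt]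
    by_cases h0 : 0 < (i : ℕ)
    · rw [dif_pos h0, if_neg (by omega : ¬ ((i : ℕ) = 0 ∨ (i : ℕ) = N))]
      simp only [hX]
      rw [if_neg (by omega : ¬ (j : ℕ) < (i : ℕ)), if_neg (by omega : ¬ (i : ℕ) = (j : ℕ)),
        if_neg (show ¬ ((j : ℕ) < ((⟨(i : ℕ) - 1, by omega⟩ : Fin (N + 1)) : ℕ)) by simp; omega),
        if_neg (show ¬ (((⟨(i : ℕ) - 1, by omega⟩ : Fin (N + 1)) : ℕ) = (j : ℕ)) by simp; omega)]
      by_cases h2 : (i : ℕ) + 1 = (j : ℕ)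
      · rw [if_neg (show ¬ ((j : ℕ) < ((⟨(i : ℕ) + 1, by omega⟩ : Fin (N + 1)) : ℕ)) by simp; omega),
          if_pos (show ((⟨(i : ℕ) + 1, by omega⟩ : Fin (N + 1)) : ℕ) = (j : ℕ) by simp; omega)]
        have h3 : 0 ≤ c * (1 - r + r ^ 2) := mul_nonneg hc (by nlinarith)
        nlinarith
      · rw [if_neg (show ¬ ((j : ℕ) < ((⟨(i : ℕ) + 1, by omega⟩ : Fin (N + 1)) : ℕ)) by simp; omega),
          if_neg (show ¬ (((⟨(i : ℕ) + 1, by omega⟩ : Fin (N + 1)) : ℕ) = (j : ℕ)) by simp; omega)]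
        have h3 : 0 ≤ c * (1 - r) ^ 2 := mul_nonneg hc (sq_nonneg _)
        nlinarith
    · rw [dif_neg h0, if_pos (by omega : (i : ℕ) = 0 ∨ (i : ℕ) = N)]
      simp only [hX]
      rw [if_neg (by omega : ¬ (j : ℕ) < (i : ℕ)), if_neg (by omega : ¬ (i : ℕ) = (j : ℕ))]
      by_cases h2 : (i : ℕ) + 1 = (j : ℕ)
      · rw [if_neg (show ¬ ((j : ℕ) < ((⟨(i : ℕ) + 1, by omega⟩ : Fin (N + 1)) : ℕ)) by simp; omega),
          if_pos (show ((⟨(i : ℕ) + 1, by omega⟩ : Fin (N + 1)) : ℕ) = (j : ℕ) by simp; omega)]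
        nlinarith
      · rw [if_neg (show ¬ ((j : ℕ) < ((⟨(i : ℕ) + 1, by omega⟩ : Fin (N + 1)) : ℕ)) by simp; omega),
          if_neg (show ¬ (((⟨(i : ℕ) + 1, by omega⟩ : Fin (N + 1)) : ℕ) = (j : ℕ)) by simp; omega)]
        have h3 : 0 ≤ c * (1 - r) := mul_nonneg hc (by nlinarith)
        nlinarith
  have hMdiag : ∀ i : Fin (N + 1),
      M i i = if (i : ℕ) = 0 then 1 - r ^ 2 else 1 + r * c := by
    intro i
    have hiN : (i : ℕ) < N + 1 := i.isLt
    rw [hMdef, gmat_mul_apply]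
    by_cases h0 : (i : ℕ) = 0
    · rw [if_pos h0, dif_pos (by omega : (i : ℕ) < N), dif_neg (by omega : ¬ 0 < (i : ℕ)),
        if_pos (Or.inl h0)]
      simp only [hX, Fin.val_mk]
      rw [show (i : ℕ) + 1 - (i : ℕ) = 1 by omega]
      split_ifs <;> first | ring1 | (exfalso; omega)
    · rw [if_neg h0]
      by_cases hN' : (i : ℕ) < N
      · rw [dif_pos hN', dif_pos (by omega : 0 < (i : ℕ)),
          if_neg (by omega : ¬ ((i : ℕ) = 0 ∨ (i : ℕ) = N))]
        simp only [hX, Fin.val_mk]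
        rw [show (i : ℕ) + 1 - (i : ℕ) = 1 by omega]
        have h1 : ¬ ((i : ℕ) < (i : ℕ) - 1) := by omega
        have h2 : ¬ ((i : ℕ) - 1 = (i : ℕ)) := by omega
        split_ifs <;> first | ring1 | (exfalso; omega)
      · rw [dif_neg hN', dif_pos (by omega : 0 < (i : ℕ)),
          if_pos (by omega : (i : ℕ) = 0 ∨ (i : ℕ) = N)]
        simp only [hX, Fin.val_mk]
        have h1 : ¬ ((i : ℕ) < (i : ℕ) - 1) := by omega
        have h2 : ¬ ((i : ℕ) - 1 = (i : ℕ)) := by omega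
        split_ifs <;> first | ring1 | (exfalso; omega)
  -- assemble
  have hprod : Φ⁻¹ * X = (1 - r ^ 2)⁻¹ • M := by
    rw [hinv, hMdef, Matrix.smul_mul]
  set t : ℝ := (1 - r ^ 2)⁻¹ with htdef
  have ht0 : 0 < t := inv_pos.mpr hdetpos
  have hA : ∀ i j : Fin (N + 1), (Φ⁻¹ * X) i j = t * M i j := by
    intro i j; rw [hprod, Matrix.smul_apply, smul_eq_mul]
  have part1 : ∀ i j : Fin (N + 1), j < i → (Φ⁻¹ * X) i j = 0 := by
    intro i j hlt
    rw [hA, hMlow i j (Fin.lt_def.mp hlt), mul_zero]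
  have part2 : ∀ i j : Fin (N + 1), i ≠ j → (Φ⁻¹ * X) i j ≤ 0 := by
    intro i j hne
    rcases lt_or_gt_of_ne hne with h | h
    · rw [hA]
      exact mul_nonpos_of_nonneg_of_nonpos ht0.le (hMup i j (Fin.lt_def.mp h))
    · rw [part1 i j h]
  have part3 : ∀ i : Fin (N + 1), 0 < (Φ⁻¹ * X) i i := by
    intro i
    rw [hA, hMdiag]
    split_ifs
    · exact mul_pos ht0 hdetpos
    · have : 0 ≤ r * c := mul_nonneg hr0.le hc
      exact mul_pos ht0 (by linarith)
  refine ⟨part1, part2, part3, ?_⟩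
  -- M-matrix structure
  set s : ℝ := t * (1 + r * c) with hsdef
  have hrc : 0 ≤ r * c := mul_nonneg hr0.le hc
  have hs1 : 1 ≤ s := by
    have h1 : t * (1 - r ^ 2) = 1 := inv_mul_cancel₀ hdet
    have h2 : t * (1 - r ^ 2) ≤ t * (1 + r * c) := by
      apply mul_le_mul_of_nonneg_left _ ht0.le
      nlinarith
    linarith
  have hdiagle : ∀ i : Fin (N + 1), (Φ⁻¹ * X) i i ≤ s := by
    intro i
    rw [hA, hMdiag]
    split_ifs
    · have : t * (1 - r ^ 2) = 1 := inv_mul_cancel₀ hdet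
      linarith
    · exact le_rfl
  refine ⟨s, s • (1 : Matrix (Fin (N + 1)) (Fin (N + 1)) ℝ) - Φ⁻¹ * X, ?_, by abel, ?_⟩
  · intro i j
    rcases eq_or_ne i j with rfl | hne
    · have := hdiagle i
      simp only [Matrix.sub_apply, Matrix.smul_apply, Matrix.one_apply_eq, smul_eq_mul, mul_one]
      linarith
    · have := part2 i j hne
      simp only [Matrix.sub_apply, Matrix.smul_apply, Matrix.one_apply_ne hne, smul_eq_mul,
        mul_zero]
      linarith
  · intro μ hμ
    have hBtri : ∀ i j : Fin (N + 1), j < i →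
        (s • (1 : Matrix (Fin (N + 1)) (Fin (N + 1)) ℝ) - Φ⁻¹ * X) i j = 0 := by
      intro i j hlt
      simp only [Matrix.sub_apply, Matrix.smul_apply, Matrix.one_apply_ne (ne_of_gt hlt),
        smul_eq_mul, mul_zero, part1 i j hlt, sub_zero]
    obtain ⟨i, hi⟩ := spectrum_upper_triangular _ hBtri μ hμ
    have hBii : (s • (1 : Matrix (Fin (N + 1)) (Fin (N + 1)) ℝ) - Φ⁻¹ * X) i i
        = s - (Φ⁻¹ * X) i i := by
      simp [Matrix.sub_apply, Matrix.smul_apply, Matrix.one_apply_eq]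
    rw [hi, hBii, Complex.norm_real, Real.norm_eq_abs, abs_of_nonneg (by linarith [hdiagle i])]
    linarith [part3 i]
end

section
/- Let 0 < a < 1, c ≥ 0, δ ≥ 0, N ≥ 1, with Φ, Φ̂, Ψ̂ as above. Then the matrix Λ_δ := Φ^{-1}(Φ̂ - cΨ̂) + δΦ^{-1} is a nonsingular M-matrix; in particular, (Λ_δ + Id)^{-1} exists and is entrywise nonnegative, and (Λ_δ + Id)^{-1}Φ^{-1}𝟏 has all entries nonnegative. -/
open Matrix

section AuxLemmas
variable {n : ℕ}

/-- Weighted Gershgorin bound over ℂ. -/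
lemma spectral_aux (B : Matrix (Fin (n+1)) (Fin (n+1)) ℝ) (y : Fin (n+1) → ℝ) (s : ℝ)
    (hy : ∀ i, 0 < y i) (hB : ∀ i j, 0 ≤ B i j)
    (hcol : ∀ j, ∑ i, y i * B i j < s * y j) :
    ∀ μ ∈ spectrum ℂ (B.map (algebraMap ℝ ℂ)), ‖μ‖ < s := by
  intro μ hμ
  rw [spectrum.mem_iff] at hμ
  set M : Matrix (Fin (n+1)) (Fin (n+1)) ℂ :=
    algebraMap ℂ (Matrix (Fin (n+1)) (Fin (n+1)) ℂ) μ - B.map (algebraMap ℝ ℂ) with hM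
  have hdet : Mᵀ.det = 0 := by
    rw [Matrix.det_transpose]
    by_contra h
    exact hμ ((Matrix.isUnit_iff_isUnit_det _).2 (isUnit_iff_ne_zero.2 h))
  obtain ⟨v, hv0, hv⟩ := (Matrix.exists_mulVec_eq_zero_iff).2 hdet
  have hrow : ∀ j, μ * v j = ∑ i, (B i j : ℂ) * v i := by
    intro j
    have h1 : (Mᵀ *ᵥ v) j = 0 := by rw [hv]; rfl
    have h2 : (Mᵀ *ᵥ v) j = ∑ i, M i j * v i := by
      simp [Matrix.mulVec, dotProduct, Matrix.transpose_apply]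
    have h3 : ∀ i : Fin (n+1), M i j * v i
        = (if i = j then μ * v i else 0) - (B i j : ℂ) * v i := by
      intro i
      simp only [hM, Matrix.sub_apply, Matrix.map_apply, Matrix.algebraMap_matrix_apply]
      by_cases hij : i = j <;> simp [hij, sub_mul]
    rw [h2] at h1
    simp only [h3, Finset.sum_sub_distrib, Finset.sum_ite_eq', Finset.mem_univ, if_true] at h1
    exact sub_eq_zero.mp h1
  obtain ⟨j₀, -, hj₀⟩ := Finset.exists_max_image Finset.univ
    (fun i => ‖v i‖ / y i) ⟨0, Finset.mem_univ 0⟩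
  set m : ℝ := ‖v j₀‖ / y j₀ with hm
  have hmax : ∀ i, ‖v i‖ ≤ m * y i := by
    intro i
    have h := hj₀ i (Finset.mem_univ i)
    rw [div_le_div_iff₀ (hy i) (hy j₀)] at h
    rw [hm, div_mul_eq_mul_div, le_div_iff₀ (hy j₀)]
    linarith
  have hmpos : 0 < m := by
    obtain ⟨k, hk⟩ := Function.ne_iff.mp hv0
    have h1 : 0 < ‖v k‖ / y k :=
      div_pos (by simpa using hk) (hy k)
    exact lt_of_lt_of_le h1 (hj₀ k (Finset.mem_univ k))
  have hvj₀ : ‖v j₀‖ = m * y j₀ := by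
    rw [hm, div_mul_cancel₀ _ (ne_of_gt (hy j₀))]
  have key : ‖μ‖ * (m * y j₀) < s * (m * y j₀) := by
    calc ‖μ‖ * (m * y j₀) = ‖μ * v j₀‖ := by
          rw [norm_mul, hvj₀]
      _ = ‖∑ i, (B i j₀ : ℂ) * v i‖ := by rw [hrow j₀]
      _ ≤ ∑ i, ‖(B i j₀ : ℂ) * v i‖ := by
          exact norm_sum_le _ _
      _ = ∑ i, B i j₀ * ‖v i‖ := by
          refine Finset.sum_congr rfl fun i _ => ?_
          rw [norm_mul, Complex.norm_real, Real.norm_of_nonneg (hB i j₀)]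
      _ ≤ ∑ i, B i j₀ * (m * y i) := by
          refine Finset.sum_le_sum fun i _ => ?_
          exact mul_le_mul_of_nonneg_left (hmax i) (hB i j₀)
      _ = m * ∑ i, y i * B i j₀ := by
          rw [Finset.mul_sum]; exact Finset.sum_congr rfl fun i _ => by ring
      _ < m * (s * y j₀) := by
          exact (mul_lt_mul_iff_right₀ hmpos).2 (hcol j₀)
      _ = s * (m * y j₀) := by ring
  exact lt_of_mul_lt_mul_right key (le_of_lt (mul_pos hmpos (hy j₀)))

/-- If `Aᵀ *ᵥ x = b` with `b ≥ 0`, weighted column dominance gives `x ≥ 0`. -/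
lemma mono_aux (A : Matrix (Fin (n+1)) (Fin (n+1)) ℝ) (y : Fin (n+1) → ℝ)
    (hy : ∀ i, 0 < y i) (hZ : ∀ i j, i ≠ j → A i j ≤ 0)
    (hcol : ∀ j, 0 < ∑ i, y i * A i j)
    (x b : Fin (n+1) → ℝ) (hx : Aᵀ *ᵥ x = b) (hb : ∀ k, 0 ≤ b k) :
    ∀ k, 0 ≤ x k := by
  by_contra hcon
  push_neg at hcon
  obtain ⟨k₀, hk₀⟩ := hcon
  obtain ⟨k, -, hk⟩ := Finset.exists_min_image Finset.univ (fun i => x i / y i)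
    ⟨0, Finset.mem_univ 0⟩
  set m : ℝ := x k / y k with hm
  have hmneg : m < 0 := by
    have h1 := hk k₀ (Finset.mem_univ k₀)
    have h2 : x k₀ / y k₀ < 0 := div_neg_of_neg_of_pos hk₀ (hy k₀)
    linarith
  have hxk : x k = m * y k := by rw [hm, div_mul_cancel₀ _ (ne_of_gt (hy k))]
  have hlow : ∀ i, m * y i ≤ x i := by
    intro i
    have h := hk i (Finset.mem_univ i)
    rw [hm] at h ⊢
    rw [div_le_div_iff₀ (hy k) (hy i)] at h
    rw [div_mul_eq_mul_div, div_le_iff₀ (hy k)]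
    linarith
  have hbk : (Aᵀ *ᵥ x) k = ∑ i, A i k * x i := by
    simp [Matrix.mulVec, dotProduct, Matrix.transpose_apply]
  have hle : ∑ i, A i k * x i ≤ m * ∑ i, y i * A i k := by
    rw [Finset.mul_sum]
    refine Finset.sum_le_sum fun i _ => ?_
    by_cases hik : i = k
    · subst hik; rw [hxk]; ring_nf; exact le_refl _
    · have h1 := hZ i k hik
      have h2 := hlow i
      nlinarith
  have : b k ≤ m * ∑ i, y i * A i k := by rw [← hx, hbk]; exact hle
  have hneg : m * ∑ i, y i * A i k < 0 := mul_neg_of_neg_of_pos hmneg (hcol k)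
  exact absurd (hb k) (by linarith)

/-- Weighted strictly column-dominant Z-matrix is inverse-nonnegative. -/
lemma minv_aux (A : Matrix (Fin (n+1)) (Fin (n+1)) ℝ) (y : Fin (n+1) → ℝ)
    (hy : ∀ i, 0 < y i) (hZ : ∀ i j, i ≠ j → A i j ≤ 0)
    (hcol : ∀ j, 0 < ∑ i, y i * A i j) :
    IsUnit A.det ∧ ∀ i j, 0 ≤ A⁻¹ i j := by
  have hunit : IsUnit A.det := by
    rw [isUnit_iff_ne_zero]
    intro hdet
    have hdetT : Aᵀ.det = 0 := by rw [Matrix.det_transpose]; exact hdet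
    obtain ⟨v, hv0, hv⟩ := (Matrix.exists_mulVec_eq_zero_iff).2 hdetT
    have h1 : ∀ k, 0 ≤ v k := mono_aux A y hy hZ hcol v 0 hv (fun k => le_refl 0)
    have h2 : ∀ k, 0 ≤ (-v) k := by
      refine mono_aux A y hy hZ hcol (-v) 0 ?_ (fun k => le_refl 0)
      rw [Matrix.mulVec_neg, hv, neg_zero]
    apply hv0
    funext k
    have := h1 k; have := h2 k
    simp only [Pi.neg_apply] at this
    simp only [Pi.zero_apply]
    linarith
  refine ⟨hunit, fun i j => ?_⟩
  have hunitT : IsUnit Aᵀ.det := by rwa [Matrix.det_transpose]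
  set x : Fin (n+1) → ℝ := Aᵀ⁻¹ *ᵥ Pi.single i 1 with hxdef
  have hx : Aᵀ *ᵥ x = Pi.single i 1 := by
    rw [hxdef, Matrix.mulVec_mulVec, Matrix.mul_nonsing_inv _ hunitT, Matrix.one_mulVec]
  have hxnn : ∀ k, 0 ≤ x k :=
    mono_aux A y hy hZ hcol x _ hx (fun k => by
      by_cases hki : k = i
      · subst hki; simp
      · simp [Pi.single_apply, hki])
  have : A⁻¹ i j = x j := by
    rw [hxdef]
    have h1 : Aᵀ⁻¹ = A⁻¹ᵀ := (Matrix.transpose_nonsing_inv A).symm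
    rw [h1]
    simp [Matrix.mulVec, dotProduct, Matrix.transpose_apply, Pi.single_apply]
  rw [this]
  exact hxnn j

noncomputable def dd (N : ℕ) (ρ : ℝ) (j : ℕ) : ℝ := if j = 0 ∨ j = N then 1 else 1 + ρ^2

noncomputable def gent (N : ℕ) (ρ : ℝ) (i j : ℕ) : ℝ :=
  if i = j then dd N ρ j else if Nat.dist i j = 1 then -ρ else 0

lemma ndist_one (i j : ℕ) : Nat.dist i j = 1 ↔ i = j + 1 ∨ i + 1 = j := by
  simp [Nat.dist]; omega

lemma gent_symm (N : ℕ) (ρ : ℝ) (i j : ℕ) : gent N ρ i j = gent N ρ j i := by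
  unfold gent
  rcases eq_or_ne i j with h | h
  · subst h; rfl
  · simp [h, h.symm, Nat.dist_comm]

lemma gent_split (N : ℕ) (ρ : ℝ) (i j : ℕ) :
    gent N ρ i j = (if i = j then dd N ρ j else 0)
      + (if i = j + 1 then -ρ else 0) + (if i + 1 = j then -ρ else 0) := by
  unfold gent
  by_cases h1 : i = j
  · have h2 : ¬ i = j + 1 := by omega
    have h3 : ¬ i + 1 = j := by omega
    simp [h1, h2, h3]
  · by_cases h2 : i = j + 1
    · have hd : Nat.dist i j = 1 := (ndist_one i j).2 (Or.inl h2)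
      have h3 : ¬ i + 1 = j := by omega
      subst h2
      simp [h1, h3, hd]
    · by_cases h3 : i + 1 = j
      · have hd : Nat.dist i j = 1 := (ndist_one i j).2 (Or.inr h3)
        simp [h1, h2, h3, hd]
      · have hd : ¬ Nat.dist i j = 1 := by
          rw [ndist_one]; push_neg; exact ⟨h2, h3⟩
        simp [h1, h2, h3, hd]

lemma col_sum (N : ℕ) (ρ : ℝ) (F : ℕ → ℝ) (j : ℕ) (hj : j ≤ N) :
    ∑ k ∈ Finset.range (N+1), F k * gent N ρ k j
      = dd N ρ j * F j + (if j < N then -(ρ * F (j+1)) else 0)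
        + (if 0 < j then -(ρ * F (j-1)) else 0) := by
  have hsplit : ∀ k ∈ Finset.range (N+1), F k * gent N ρ k j
      = (if k = j then dd N ρ j * F k else 0) + (if k = j + 1 then -(ρ * F k) else 0)
        + (if k + 1 = j then -(ρ * F k) else 0) := by
    intro k _
    rw [gent_split]
    split_ifs <;> ring
  rw [Finset.sum_congr rfl hsplit, Finset.sum_add_distrib, Finset.sum_add_distrib]
  congr 1
  · congr 1
    · rw [Finset.sum_ite_eq' (Finset.range (N+1)) j (fun k => dd N ρ j * F k),
        if_pos (Finset.mem_range.2 (by omega))]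
    · rw [Finset.sum_ite_eq' (Finset.range (N+1)) (j+1) (fun k => -(ρ * F k))]
      by_cases h : j < N
      · rw [if_pos (Finset.mem_range.2 (by omega)), if_pos h]
      · rw [if_neg (by simp [Finset.mem_range]; omega), if_neg h]
  · rcases Nat.eq_zero_or_pos j with h | h
    · subst h
      rw [if_neg (by omega), Finset.sum_eq_zero]
      intro k _; rw [if_neg (by omega)]
    · obtain ⟨jj, rfl⟩ : ∃ jj, j = jj + 1 := ⟨j - 1, by omega⟩
      have hc : ∀ k ∈ Finset.range (N+1),
          (if k + 1 = jj + 1 then -(ρ * F k) else 0) = (if k = jj then -(ρ * F k) else 0) := by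
        intro k _; congr 1; simp
      rw [Finset.sum_congr rfl hc,
        Finset.sum_ite_eq' (Finset.range (N+1)) jj (fun k => -(ρ * F k)),
        if_pos (Finset.mem_range.2 (by omega)), if_pos h]
      norm_num

noncomputable def Rn (ρ c : ℝ) (j k : ℕ) : ℝ :=
  (if j < k then ρ^(k-j) else if k = j then 1 else 0) - c * (if k < j then 1 else 0)

section NatComp
variable {N : ℕ} {ρ c δ : ℝ}

/-- Φ·G = 1 at the level of natural-number indices. -/
lemma phig_nat (hN : 1 ≤ N) (i j : ℕ) (hi : i ≤ N) (hj : j ≤ N) :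
    dd N ρ j * ρ^(Nat.dist i j) + (if j < N then -(ρ * ρ^(Nat.dist i (j+1))) else 0)
      + (if 0 < j then -(ρ * ρ^(Nat.dist i (j-1))) else 0)
      = (1 - ρ^2) * (if i = j then 1 else 0) := by
  rcases lt_trichotomy i j with hij | hij | hij
  · obtain ⟨m, hm⟩ : ∃ m, j - i = m + 1 := ⟨j - i - 1, by omega⟩
    have d1 : Nat.dist i j = m + 1 := by simp [Nat.dist]; omega
    have d2 : Nat.dist i (j+1) = m + 2 := by simp [Nat.dist]; omega
    have d3 : Nat.dist i (j-1) = m := by simp [Nat.dist]; omega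
    rw [d1, d2, d3, if_pos (show 0 < j by omega), if_neg (show ¬ i = j by omega)]
    by_cases hjN : j < N
    · rw [if_pos hjN]
      have : dd N ρ j = 1 + ρ^2 := by unfold dd; rw [if_neg (by omega)]
      rw [this]; ring
    · have hjN' : j = N := by omega
      rw [if_neg hjN]
      have : dd N ρ j = 1 := by unfold dd; rw [if_pos (by omega)]
      rw [this]; ring
  · subst hij
    rw [Nat.dist_self, if_pos rfl]
    rcases Nat.eq_zero_or_pos i with h0 | h0
    · subst h0
      have d2 : Nat.dist 0 (0+1) = 1 := by simp [Nat.dist]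
      rw [d2, if_pos (by omega), if_neg (by omega)]
      have : dd N ρ 0 = 1 := by unfold dd; rw [if_pos (by omega)]
      rw [this]; ring
    · by_cases hiN : i < N
      · have d2 : Nat.dist i (i+1) = 1 := by simp [Nat.dist]
        have d3 : Nat.dist i (i-1) = 1 := by simp [Nat.dist]; omega
        rw [d2, d3, if_pos hiN, if_pos h0]
        have : dd N ρ i = 1 + ρ^2 := by unfold dd; rw [if_neg (by omega)]
        rw [this]; ring
      · have d3 : Nat.dist i (i-1) = 1 := by simp [Nat.dist]; omega
        rw [d3, if_neg hiN, if_pos h0]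
        have : dd N ρ i = 1 := by unfold dd; rw [if_pos (by omega)]
        rw [this]; ring
  · obtain ⟨m, hm⟩ : ∃ m, i - j = m + 1 := ⟨i - j - 1, by omega⟩
    have d1 : Nat.dist i j = m + 1 := by simp [Nat.dist]; omega
    have d2 : Nat.dist i (j+1) = m := by simp [Nat.dist]; omega
    rw [d1, d2, if_pos (show j < N by omega), if_neg (show ¬ i = j by omega)]
    rcases Nat.eq_zero_or_pos j with h0 | h0
    · subst h0
      rw [if_neg (by omega)]
      have : dd N ρ 0 = 1 := by unfold dd; rw [if_pos (by omega)]
      rw [this]; ring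
    · have d3 : Nat.dist i (j-1) = m + 2 := by simp [Nat.dist]; omega
      rw [d3, if_pos h0]
      have : dd N ρ j = 1 + ρ^2 := by unfold dd; rw [if_neg (by omega)]
      rw [this]; ring

/-- yᵀ·G = e_N at the level of natural-number indices. -/
lemma yg_nat (hN : 1 ≤ N) (j : ℕ) (hj : j ≤ N) :
    dd N ρ j * ρ^(N-j) + (if j < N then -(ρ * ρ^(N-(j+1))) else 0)
      + (if 0 < j then -(ρ * ρ^(N-(j-1))) else 0)
      = (1 - ρ^2) * (if j = N then 1 else 0) := by
  rcases Nat.eq_zero_or_pos j with h0 | h0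
  · subst h0
    obtain ⟨m, hm⟩ : ∃ m, N = m + 1 := ⟨N - 1, by omega⟩
    rw [if_pos (by omega), if_neg (by omega), if_neg (by omega)]
    have : dd N ρ 0 = 1 := by unfold dd; rw [if_pos (by omega)]
    rw [this, show N - (0+1) = m by omega, show N - 0 = m + 1 by omega]
    ring
  · by_cases hjN : j < N
    · obtain ⟨m, hm⟩ : ∃ m, N - j = m + 1 := ⟨N - j - 1, by omega⟩
      rw [if_pos hjN, if_pos h0]
      have : dd N ρ j = 1 + ρ^2 := by unfold dd; rw [if_neg (by omega)]
      rw [this, show N - (j+1) = m by omega, show N - (j-1) = m + 2 by omega, hm,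
        if_neg (show ¬ j = N by omega)]
      ring
    · have hjN' : j = N := by omega
      rw [if_neg (by omega), if_pos h0, if_pos hjN']
      have : dd N ρ j = 1 := by unfold dd; rw [if_pos (by omega)]
      rw [this, show N - j = 0 by omega, show N - (j-1) = 1 by omega]
      ring

/-- row sums of G are nonnegative. -/
lemma rowsum_nat (hρ0 : 0 < ρ) (hρ1 : ρ < 1) (hN : 1 ≤ N) (i : ℕ) (hi : i ≤ N) :
    0 ≤ dd N ρ i * 1 + (if i < N then -(ρ * 1) else 0) + (if 0 < i then -(ρ * 1) else 0) := by
  unfold dd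
  by_cases h0 : i = 0
  · subst h0
    rw [if_pos (by omega), if_pos (by omega), if_neg (by omega)]
    nlinarith
  · by_cases hiN : i < N
    · rw [if_neg (by omega), if_pos hiN, if_pos (by omega)]
      nlinarith
    · rw [if_pos (by omega), if_neg hiN, if_pos (by omega)]
      nlinarith
end NatComp

section ZComp
variable {N : ℕ} {ρ c δ : ℝ}

lemma dd_bounds (N : ℕ) (ρ : ℝ) (i : ℕ) : 1 ≤ dd N ρ i ∧ dd N ρ i ≤ 1 + ρ^2 := by
  unfold dd; split_ifs <;> constructor <;> nlinarith [sq_nonneg ρ]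

lemma znat (hρ0 : 0 < ρ) (hρ1 : ρ < 1) (hc : 0 ≤ c) (hδ : 0 ≤ δ) (hN : 1 ≤ N)
    (i j : ℕ) (hi : i ≤ N) (hj : j ≤ N) (hij : i ≠ j) :
    dd N ρ i * Rn ρ c j i + (if i < N then -(ρ * Rn ρ c j (i+1)) else 0)
      + (if 0 < i then -(ρ * Rn ρ c j (i-1)) else 0) + δ * gent N ρ i j ≤ 0 := by
  rcases Nat.lt_or_ge j i with hlt | hge
  · -- j < i : below diagonal
    have hR1 : Rn ρ c j i = ρ^(i-j) := by
      unfold Rn; rw [if_pos hlt, if_neg (by omega)]; ring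
    have hR2 : Rn ρ c j (i+1) = ρ^(i+1-j) := by
      unfold Rn; rw [if_pos (by omega), if_neg (by omega)]; ring
    rcases Nat.eq_or_lt_of_le (show j + 1 ≤ i by omega) with heq | hlt2
    · -- j = i - 1
      have hR3 : Rn ρ c j (i-1) = 1 := by
        unfold Rn; rw [if_neg (by omega), if_pos (by omega), if_neg (by omega)]; ring
      have hg : gent N ρ i j = -ρ := by
        unfold gent
        rw [if_neg (by omega), if_pos (by simp [Nat.dist]; omega)]
      rw [hR1, hR2, hR3, hg, if_pos (show 0 < i by omega),
        show i - j = 1 by omega, show i + 1 - j = 2 by omega]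
      by_cases hiN : i < N
      · rw [if_pos hiN]
        have : dd N ρ i = 1 + ρ^2 := by unfold dd; rw [if_neg (by omega)]
        rw [this]; nlinarith
      · rw [if_neg hiN]
        have : dd N ρ i = 1 := by unfold dd; rw [if_pos (by omega)]
        rw [this]; nlinarith
    · -- j + 2 ≤ i
      obtain ⟨m, hm⟩ : ∃ m, i - j = m + 2 := ⟨i - j - 2, by omega⟩
      have hR3 : Rn ρ c j (i-1) = ρ^(m+1) := by
        unfold Rn; rw [if_pos (by omega), if_neg (by omega),
          show i - 1 - j = m + 1 by omega]; ring
      have hg : gent N ρ i j = 0 := by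
        unfold gent
        rw [if_neg (by omega), if_neg (by simp [Nat.dist]; omega)]
      rw [hR1, hR2, hR3, hg, if_pos (show 0 < i by omega), hm,
        show i + 1 - j = m + 3 by omega]
      by_cases hiN : i < N
      · rw [if_pos hiN]
        have : dd N ρ i = 1 + ρ^2 := by unfold dd; rw [if_neg (by omega)]
        rw [this]; ring_nf; nlinarith [sq_nonneg ρ]
      · rw [if_neg hiN]
        have : dd N ρ i = 1 := by unfold dd; rw [if_pos (by omega)]
        rw [this]; ring_nf; nlinarith
  · -- i < j : above diagonal
    have hlt : i < j := by omega
    have hiN : i < N := by omega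
    have hR1 : Rn ρ c j i = -c := by
      unfold Rn; rw [if_neg (by omega), if_neg (by omega), if_pos hlt]; ring
    rcases Nat.eq_or_lt_of_le (show i + 1 ≤ j by omega) with heq | hlt2
    · -- j = i + 1
      have hR2 : Rn ρ c j (i+1) = 1 := by
        unfold Rn; rw [if_neg (by omega), if_pos (by omega), if_neg (by omega)]; ring
      have hR3 : Rn ρ c j (i-1) = -c := by
        unfold Rn; rw [if_neg (by omega), if_neg (by omega), if_pos (by omega)]; ring
      have hg : gent N ρ i j = -ρ := by
        unfold gent
        rw [if_neg (by omega), if_pos (by simp [Nat.dist]; omega)]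
      rw [hR1, hR2, hR3, hg, if_pos hiN]
      rcases Nat.eq_zero_or_pos i with h0 | h0
      · rw [if_neg (by omega)]
        have : dd N ρ i = 1 := by unfold dd; rw [if_pos (by omega)]
        rw [this]; nlinarith
      · rw [if_pos h0]
        have : dd N ρ i = 1 + ρ^2 := by unfold dd; rw [if_neg (by omega)]
        rw [this]
        have h1 : 0 ≤ c * (1 - ρ + ρ^2) := mul_nonneg hc (by nlinarith)
        nlinarith
    · -- i + 2 ≤ j
      have hR2 : Rn ρ c j (i+1) = -c := by
        unfold Rn; rw [if_neg (by omega), if_neg (by omega), if_pos (by omega)]; ring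
      have hR3 : Rn ρ c j (i-1) = -c := by
        unfold Rn; rw [if_neg (by omega), if_neg (by omega), if_pos (by omega)]; ring
      have hg : gent N ρ i j = 0 := by
        unfold gent
        rw [if_neg (by omega), if_neg (by simp [Nat.dist]; omega)]
      rw [hR1, hR2, hR3, hg, if_pos hiN]
      rcases Nat.eq_zero_or_pos i with h0 | h0
      · rw [if_neg (by omega)]
        have : dd N ρ i = 1 := by unfold dd; rw [if_pos (by omega)]
        rw [this]; nlinarith
      · rw [if_pos h0]
        have : dd N ρ i = 1 + ρ^2 := by unfold dd; rw [if_neg (by omega)]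
        rw [this]
        nlinarith [mul_nonneg hc (sq_nonneg (1-ρ))]

lemma diagnat (hρ0 : 0 < ρ) (hρ1 : ρ < 1) (hc : 0 ≤ c) (hδ : 0 ≤ δ) (hN : 1 ≤ N)
    (i : ℕ) (hi : i ≤ N) :
    dd N ρ i * Rn ρ c i i + (if i < N then -(ρ * Rn ρ c i (i+1)) else 0)
      + (if 0 < i then -(ρ * Rn ρ c i (i-1)) else 0) + δ * gent N ρ i i
      ≤ (1 + ρ^2) * (1 + δ) + c * ρ := by
  have hR1 : Rn ρ c i i = 1 := by
    unfold Rn; rw [if_neg (by omega), if_pos rfl, if_neg (by omega)]; ring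
  have hR2 : Rn ρ c i (i+1) = ρ^1 := by
    unfold Rn; rw [if_pos (by omega), if_neg (by omega), show i + 1 - i = 1 by omega]; ring
  have hg : gent N ρ i i = dd N ρ i := by unfold gent; rw [if_pos rfl]
  obtain ⟨hd1, hd2⟩ := dd_bounds N ρ i
  rw [hR1, hR2, hg]
  rcases Nat.eq_zero_or_pos i with h0 | h0
  · rw [if_neg (show ¬ 0 < i by omega), if_pos (show i < N by omega)]
    nlinarith
  · have hR3 : Rn ρ c i (i-1) = -c := by
      unfold Rn; rw [if_neg (by omega), if_neg (by omega), if_pos (by omega)]; ring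
    rw [hR3, if_pos h0]
    split_ifs <;> nlinarith
end ZComp

theorem Lambda_delta_Mmatrix (N : ℕ) (hN : 1 ≤ N)
    (a c δ : ℝ) (ha0 : 0 < a) (ha1 : a < 1) (hc : 0 ≤ c) (hδ : 0 ≤ δ)
    (Φ Φhat Ψhat : Matrix (Fin (N + 1)) (Fin (N + 1)) ℝ)
    (hΦ : ∀ i j : Fin (N + 1), Φ i j = a ^ ((|(i : ℝ) - (j : ℝ)|) / (N : ℝ)))
    (hΦhat : ∀ i j : Fin (N + 1),
      Φhat i j = if j < i then Φ i j else if i = j then 1 else 0)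
    (hΨhat : ∀ i j : Fin (N + 1), Ψhat i j = if i < j then 1 else 0)
    (Λ : Matrix (Fin (N + 1)) (Fin (N + 1)) ℝ)
    (hΛ : Λ = Φ⁻¹ * (Φhat - c • Ψhat) + δ • Φ⁻¹) :
    IsNonsingularMMatrix Λ ∧
    IsUnit (Λ + 1).det ∧
    (∀ i j : Fin (N + 1), 0 ≤ (Λ + 1)⁻¹ i j) ∧
    (∀ i : Fin (N + 1), 0 ≤ (Λ + 1)⁻¹.mulVec (Φ⁻¹.mulVec fun _ => 1) i) := by
  set ρ : ℝ := a ^ ((N:ℝ)⁻¹) with hρdef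
  have hρ0 : 0 < ρ := Real.rpow_pos_of_pos ha0 _
  have hρ1 : ρ < 1 := by
    apply Real.rpow_lt_one (le_of_lt ha0) ha1
    have : (0:ℝ) < (N:ℝ) := by exact_mod_cast Nat.pos_of_ne_zero (by omega)
    positivity
  have hden : (0:ℝ) < 1 - ρ^2 := by nlinarith
  set β : ℝ := (1 - ρ^2)⁻¹ with hβdef
  have hβ0 : 0 < β := inv_pos.2 hden
  have hβmul : β * (1 - ρ^2) = 1 := inv_mul_cancel₀ (ne_of_gt hden)
  set G : Matrix (Fin (N+1)) (Fin (N+1)) ℝ := fun i j => β * gent N ρ i.val j.val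
    with hGdef
  have hG : ∀ i j : Fin (N+1), G i j = β * gent N ρ i.val j.val := fun _ _ => rfl
  -- Φ entries
  have hΦent : ∀ i j : Fin (N+1), Φ i j = ρ ^ (Nat.dist i.val j.val) := by
    intro i j
    rw [hΦ]
    have habs : |(i : ℝ) - (j : ℝ)| = ((Nat.dist i.val j.val : ℕ) : ℝ) := by
      rcases le_total (i.val : ℕ) j.val with h | h
      · rw [show Nat.dist i.val j.val = j.val - i.val by simp [Nat.dist]; omega]
        have hc : ((j.val - i.val : ℕ) : ℝ) = (j.val : ℝ) - (i.val : ℝ) := by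
          exact Nat.cast_sub h
        rw [hc, abs_sub_comm, abs_of_nonneg (by
          have : (i.val : ℝ) ≤ (j.val : ℝ) := by exact_mod_cast h
          linarith)]
      · rw [show Nat.dist i.val j.val = i.val - j.val by simp [Nat.dist]; omega]
        have hc : ((i.val - j.val : ℕ) : ℝ) = (i.val : ℝ) - (j.val : ℝ) := by
          exact Nat.cast_sub h
        rw [hc, abs_of_nonneg (by
          have : (j.val : ℝ) ≤ (i.val : ℝ) := by exact_mod_cast h
          linarith)]
    rw [habs]
    have h2 : ((Nat.dist i.val j.val : ℕ) : ℝ) / (N:ℝ) = (N:ℝ)⁻¹ * ((Nat.dist i.val j.val : ℕ) : ℝ) := by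
      ring
    rw [h2, Real.rpow_mul (le_of_lt ha0), ← hρdef, Real.rpow_natCast]
  -- Φ * G = 1
  have hΦG : Φ * G = 1 := by
    ext i j
    rw [Matrix.mul_apply]
    have hcong : ∀ k : Fin (N+1), Φ i k * G k j
        = β * ((fun m => ρ ^ (Nat.dist i.val m) * gent N ρ m j.val) k.val) := by
      intro k
      rw [hΦent, hG]; ring
    calc ∑ k, Φ i k * G k j
        = ∑ k : Fin (N+1), β * ((fun m => ρ ^ (Nat.dist i.val m) * gent N ρ m j.val) k.val) := by
          exact Finset.sum_congr rfl fun k _ => hcong k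
      _ = β * ∑ k : Fin (N+1), (fun m => ρ ^ (Nat.dist i.val m) * gent N ρ m j.val) k.val := by
          rw [Finset.mul_sum]
      _ = β * ∑ m ∈ Finset.range (N+1), ρ ^ (Nat.dist i.val m) * gent N ρ m j.val := by
          rw [Fin.sum_univ_eq_sum_range (fun m => ρ ^ (Nat.dist i.val m) * gent N ρ m j.val)]
      _ = (1 : Matrix (Fin (N+1)) (Fin (N+1)) ℝ) i j := by
          rw [col_sum N ρ _ j.val (by omega), phig_nat hN i.val j.val (by omega) (by omega)]
          rw [Matrix.one_apply]
          rw [← mul_assoc, hβmul, one_mul]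
          congr 1
          simp [Fin.ext_iff]
  have hΦinv : Φ⁻¹ = G := Matrix.inv_eq_right_inv hΦG
  -- R = Φhat - c • Ψhat entries
  have hRe : ∀ k j : Fin (N+1), (Φhat - c • Ψhat) k j = Rn ρ c j.val k.val := by
    intro k j
    rw [Matrix.sub_apply, Matrix.smul_apply, hΦhat, hΨhat, smul_eq_mul]
    unfold Rn
    simp only [Fin.lt_def, Fin.ext_iff]
    rcases lt_trichotomy (j.val : ℕ) k.val with h | h | h
    · rw [if_pos h, if_pos h, hΦent,
        show Nat.dist k.val j.val = k.val - j.val by simp [Nat.dist]; omega]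
    · simp [show ¬ (j.val : ℕ) < k.val by omega, show (k.val : ℕ) = j.val by omega]
    · simp [show ¬ (j.val : ℕ) < k.val by omega, show ¬ (k.val : ℕ) = j.val by omega,
        show (k.val : ℕ) < j.val by omega]
  -- entrywise formula for Λ
  have hΛval : ∀ i j : Fin (N+1), Λ i j
      = β * (dd N ρ i.val * Rn ρ c j.val i.val
        + (if i.val < N then -(ρ * Rn ρ c j.val (i.val+1)) else 0)
        + (if 0 < i.val then -(ρ * Rn ρ c j.val (i.val-1)) else 0)
        + δ * gent N ρ i.val j.val) := by
    intro i j
    rw [hΛ, hΦinv, Matrix.add_apply, Matrix.smul_apply, Matrix.mul_apply, smul_eq_mul]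
    have hcong : ∀ k : Fin (N+1), G i k * (Φhat - c • Ψhat) k j
        = β * ((fun m => Rn ρ c j.val m * gent N ρ m i.val) k.val) := by
      intro k
      rw [hG, hRe, gent_symm]; ring
    rw [Finset.sum_congr rfl (fun k _ => hcong k), ← Finset.mul_sum,
      Fin.sum_univ_eq_sum_range (fun m => Rn ρ c j.val m * gent N ρ m i.val),
      col_sum N ρ _ i.val (by omega), hG]
    ring
  -- Z-matrix property
  have hZfin : ∀ i j : Fin (N+1), i ≠ j → Λ i j ≤ 0 := by
    intro i j hij
    rw [hΛval]
    have := znat hρ0 hρ1 hc hδ hN i.val j.val (by omega) (by omega)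
      (by simpa [Fin.ext_iff] using hij)
    nlinarith
  -- diagonal bound
  set s : ℝ := β * ((1 + ρ^2) * (1 + δ) + c * ρ) + 1 with hsdef
  have hdiagfin : ∀ i : Fin (N+1), Λ i i ≤ s - 1 := by
    intro i
    rw [hΛval, hsdef]
    have := diagnat hρ0 hρ1 hc hδ hN i.val (by omega)
    have h2 : β * (dd N ρ i.val * Rn ρ c i.val i.val
        + (if i.val < N then -(ρ * Rn ρ c i.val (i.val+1)) else 0)
        + (if 0 < i.val then -(ρ * Rn ρ c i.val (i.val-1)) else 0)
        + δ * gent N ρ i.val i.val) ≤ β * ((1 + ρ^2) * (1 + δ) + c * ρ) :=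
      mul_le_mul_of_nonneg_left this (le_of_lt hβ0)
    linarith
  -- weight vector
  set y : Fin (N+1) → ℝ := fun i => ρ ^ (N - i.val) with hydef
  have hy : ∀ i, 0 < y i := fun i => pow_pos hρ0 _
  -- y ᵀ G = e_N
  have hyG : ∀ j : Fin (N+1), ∑ i, y i * G i j = if j.val = N then 1 else 0 := by
    intro j
    have hcong : ∀ i : Fin (N+1), y i * G i j
        = β * ((fun m => ρ ^ (N - m) * gent N ρ m j.val) i.val) := by
      intro i
      rw [hG, hydef]; ring
    rw [Finset.sum_congr rfl (fun i _ => hcong i), ← Finset.mul_sum,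
      Fin.sum_univ_eq_sum_range (fun m => ρ ^ (N - m) * gent N ρ m j.val),
      col_sum N ρ _ j.val (by omega), yg_nat hN j.val (by omega),
      ← mul_assoc, hβmul, one_mul]
  -- weighted column sums of Λ
  have hw : ∀ j : Fin (N+1), ∑ i, y i * Λ i j
      = Rn ρ c j.val N + δ * (if j.val = N then 1 else 0) := by
    intro j
    have h1 : ∀ i : Fin (N+1), y i * Λ i j
        = (∑ k, y i * (G i k * (Φhat - c • Ψhat) k j)) + δ * (y i * G i j) := by
      intro i
      rw [hΛ, hΦinv, Matrix.add_apply, Matrix.smul_apply, Matrix.mul_apply, smul_eq_mul,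
        ← Finset.mul_sum]
      ring
    rw [Finset.sum_congr rfl (fun i _ => h1 i), Finset.sum_add_distrib]
    have h2 : ∑ i : Fin (N+1), δ * (y i * G i j) = δ * (if j.val = N then 1 else 0) := by
      rw [← Finset.mul_sum, hyG]
    rw [h2]
    congr 1
    rw [Finset.sum_comm]
    have h3 : ∀ k : Fin (N+1), ∑ i : Fin (N+1), y i * (G i k * (Φhat - c • Ψhat) k j)
        = (∑ i, y i * G i k) * (Φhat - c • Ψhat) k j := by
      intro k
      rw [Finset.sum_mul]
      exact Finset.sum_congr rfl fun i _ => by ring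
    rw [Finset.sum_congr rfl (fun k _ => h3 k)]
    have h4 : ∀ k : Fin (N+1), (∑ i, y i * G i k) * (Φhat - c • Ψhat) k j
        = if k = (⟨N, by omega⟩ : Fin (N+1)) then Rn ρ c j.val k.val else 0 := by
      intro k
      rw [hyG, hRe]
      by_cases hk : k.val = N
      · rw [if_pos hk, if_pos (by rw [Fin.ext_iff]; exact hk), one_mul]
      · rw [if_neg hk, if_neg (by rw [Fin.ext_iff]; exact hk), zero_mul]
    rw [Finset.sum_congr rfl (fun k _ => h4 k), Finset.sum_ite_eq',
      if_pos (Finset.mem_univ _)]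
  have hwpos : ∀ j : Fin (N+1), 0 < ∑ i, y i * Λ i j := by
    intro j
    rw [hw]
    have hR : 0 < Rn ρ c j.val N := by
      unfold Rn
      rw [if_neg (show ¬ N < (j.val : ℕ) by omega), mul_zero, sub_zero]
      by_cases hjN : (j.val : ℕ) = N
      · rw [if_neg (show ¬ (j.val : ℕ) < N by omega), if_pos (show N = (j.val : ℕ) by omega)]
        norm_num
      · rw [if_pos (show (j.val : ℕ) < N by omega)]
        exact pow_pos hρ0 _
    by_cases hjN : j.val = N
    · rw [if_pos hjN]; nlinarith
    · rw [if_neg hjN]; nlinarith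
  -- the M-matrix structure
  set B : Matrix (Fin (N+1)) (Fin (N+1)) ℝ := s • (1 : Matrix (Fin (N+1)) (Fin (N+1)) ℝ) - Λ
    with hBdef
  have hBe : ∀ i j : Fin (N+1), B i j = s * (if i = j then 1 else 0) - Λ i j := by
    intro i j
    rw [hBdef, Matrix.sub_apply, Matrix.smul_apply, Matrix.one_apply, smul_eq_mul]
  have hs1 : (1:ℝ) ≤ s := by
    have h1 : 0 ≤ (1 + ρ^2) * (1 + δ) + c * ρ := by nlinarith
    have := mul_nonneg (le_of_lt hβ0) h1
    rw [hsdef]; linarith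
  have hBnn : ∀ i j : Fin (N+1), 0 ≤ B i j := by
    intro i j
    rw [hBe]
    by_cases hij : i = j
    · rw [if_pos hij]
      have := hdiagfin i
      rw [hij] at this ⊢
      linarith
    · rw [if_neg hij]
      have := hZfin i j hij
      linarith
  have hBcol : ∀ j, ∑ i, y i * B i j < s * y j := by
    intro j
    have h1 : ∀ i : Fin (N+1), y i * B i j
        = (if i = j then s * y i else 0) - y i * Λ i j := by
      intro i
      rw [hBe]
      by_cases hij : i = j
      · rw [if_pos hij, if_pos hij]; ring
      · rw [if_neg hij, if_neg hij]; ring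
    rw [Finset.sum_congr rfl (fun i _ => h1 i), Finset.sum_sub_distrib,
      Finset.sum_ite_eq', if_pos (Finset.mem_univ _)]
    have := hwpos j
    linarith
  have hspec : ∀ μ ∈ spectrum ℂ (B.map (algebraMap ℝ ℂ)), ‖μ‖ < s :=
    spectral_aux B y s hy hBnn hBcol
  have hMM : IsNonsingularMMatrix Λ := by
    refine ⟨s, B, hBnn, ?_, hspec⟩
    rw [hBdef, sub_sub_cancel]
  -- Λ + 1
  have hZ1 : ∀ i j : Fin (N+1), i ≠ j → (Λ + 1) i j ≤ 0 := by
    intro i j hij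
    rw [Matrix.add_apply, Matrix.one_apply, if_neg hij, add_zero]
    exact hZfin i j hij
  have hcol1 : ∀ j, 0 < ∑ i, y i * (Λ + 1) i j := by
    intro j
    have h1 : ∀ i : Fin (N+1), y i * (Λ + 1) i j
        = y i * Λ i j + (if i = j then y i else 0) := by
      intro i
      rw [Matrix.add_apply, Matrix.one_apply]
      by_cases hij : i = j
      · rw [if_pos hij, if_pos hij]; ring
      · rw [if_neg hij, if_neg hij]; ring
    rw [Finset.sum_congr rfl (fun i _ => h1 i), Finset.sum_add_distrib,
      Finset.sum_ite_eq', if_pos (Finset.mem_univ _)]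
    have := hwpos j
    have := hy j
    linarith
  obtain ⟨hunit1, hinv1⟩ := minv_aux (Λ + 1) y hy hZ1 hcol1
  refine ⟨hMM, hunit1, hinv1, ?_⟩
  -- final: (Λ+1)⁻¹ *ᵥ (Φ⁻¹ *ᵥ 1) ≥ 0
  have hG1 : ∀ j : Fin (N+1), 0 ≤ (Φ⁻¹.mulVec fun _ => (1:ℝ)) j := by
    intro j
    rw [hΦinv, Matrix.mulVec]
    have hcong : ∀ k : Fin (N+1), G j k * (1:ℝ)
        = β * ((fun m => (1:ℝ) * gent N ρ m j.val) k.val) := by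
      intro k
      rw [hG, gent_symm]; ring
    have : (fun k => G j k) ⬝ᵥ (fun _ => (1:ℝ)) = ∑ k, G j k * 1 := rfl
    rw [dotProduct]
    rw [Finset.sum_congr rfl (fun k _ => hcong k), ← Finset.mul_sum,
      Fin.sum_univ_eq_sum_range (fun m => (1:ℝ) * gent N ρ m j.val)]
    have hcs : ∑ m ∈ Finset.range (N+1), (1:ℝ) * gent N ρ m j.val
        = dd N ρ j.val * 1 + (if j.val < N then -(ρ * 1) else 0)
          + (if 0 < j.val then -(ρ * 1) else 0) :=
      col_sum N ρ (fun _ => (1:ℝ)) j.val (by omega)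
    rw [hcs]
    exact mul_nonneg (le_of_lt hβ0) (rowsum_nat hρ0 hρ1 hN j.val (by omega))
  intro i
  rw [Matrix.mulVec, dotProduct]
  exact Finset.sum_nonneg fun j _ => mul_nonneg (hinv1 i j) (hG1 j)
end AuxLemmas
end

section
/- Let G(t) = λe^{-ρt} + γ with λ, ρ > 0, γ ≥ 0, and define w = ((Γ_θ - Γ~)^{-1}𝟏)/(𝟏^T(Γ_θ - Γ~)^{-1}𝟏) on the equidistant grid with N+1 points. If θ ≥ (λ+γ)/4, then all components of w are nonnegative, for all N and ρ. -/
open Matrix Finset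

/-- Backward substitution sequence: index k counts distance from the last row.
Components: (x, u, v) where u = ∑ a^m x_{k-m}, v = ∑ x_{k-m}. -/
noncomputable def ocSeq (d lam γ a : ℝ) : ℕ → ℝ × ℝ × ℝ
  | 0 => (1 / d, 1 / d, 1 / d)
  | k + 1 =>
    let p := ocSeq d lam γ a k
    let x := (1 - lam * a * p.2.1 - γ * p.2.2) / d
    (x, x + a * p.2.1, x + p.2.2)

lemma ocSeq_succ_fst (d lam γ a : ℝ) (k : ℕ) :
    (ocSeq d lam γ a (k + 1)).1 =
      (1 - lam * a * (ocSeq d lam γ a k).2.1 - γ * (ocSeq d lam γ a k).2.2) / d := rfl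

lemma ocSeq_succ_snd (d lam γ a : ℝ) (k : ℕ) :
    (ocSeq d lam γ a (k + 1)).2.1 =
      (ocSeq d lam γ a (k + 1)).1 + a * (ocSeq d lam γ a k).2.1 := rfl

lemma ocSeq_succ_trd (d lam γ a : ℝ) (k : ℕ) :
    (ocSeq d lam γ a (k + 1)).2.2 =
      (ocSeq d lam γ a (k + 1)).1 + (ocSeq d lam γ a k).2.2 := rfl

lemma ocSeq_inv {d lam γ a : ℝ} (hlam : 0 < lam) (hγ : 0 ≤ γ) (ha : 0 < a)
    (ha1 : a ≤ 1) (hd : lam + γ ≤ d) (k : ℕ) :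
    0 ≤ (ocSeq d lam γ a k).1 ∧ 0 ≤ (ocSeq d lam γ a k).2.1 ∧
      0 ≤ (ocSeq d lam γ a k).2.2 ∧
      lam * (ocSeq d lam γ a k).2.1 + γ * (ocSeq d lam γ a k).2.2 ≤ 1 ∧
      (d - lam - γ) * (ocSeq d lam γ a k).1 + lam * (ocSeq d lam γ a k).2.1
        + γ * (ocSeq d lam γ a k).2.2 = 1 := by
  have hd0 : 0 < d := lt_of_lt_of_le (by linarith) hd
  induction k with
  | zero =>
    simp only [ocSeq]
    refine ⟨by positivity, by positivity, by positivity, ?_, ?_⟩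
    · rw [mul_one_div, mul_one_div, ← add_div, div_le_one hd0]
      exact hd
    · field_simp
      ring
  | succ k ih =>
    obtain ⟨hx, hu, hv, hle, heq⟩ := ih
    set x := (ocSeq d lam γ a k).1
    set u := (ocSeq d lam γ a k).2.1
    set v := (ocSeq d lam γ a k).2.2
    rw [ocSeq_succ_snd, ocSeq_succ_trd, ocSeq_succ_fst]
    have hau : lam * a * u ≤ lam * u := by
      nlinarith [mul_nonneg (mul_nonneg hlam.le (sub_nonneg.mpr ha1)) hu]
    have hnum : 0 ≤ 1 - lam * a * u - γ * v := by nlinarith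
    have hx' : 0 ≤ (1 - lam * a * u - γ * v) / d := div_nonneg hnum hd0.le
    have hdx : d * ((1 - lam * a * u - γ * v) / d) = 1 - lam * a * u - γ * v :=
      mul_div_cancel₀ _ hd0.ne'
    refine ⟨hx', by positivity, by positivity, by nlinarith, by nlinarith⟩

lemma ocSeq_sum (d lam γ a : ℝ) (k : ℕ) :
    (ocSeq d lam γ a k).2.1 =
      ∑ m ∈ range (k + 1), a ^ m * (ocSeq d lam γ a (k - m)).1 ∧
    (ocSeq d lam γ a k).2.2 =
      ∑ m ∈ range (k + 1), (ocSeq d lam γ a (k - m)).1 := by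
  induction k with
  | zero => simp [ocSeq]
  | succ k ih =>
    obtain ⟨ih1, ih2⟩ := ih
    constructor
    · rw [Finset.sum_range_succ']
      simp only [Nat.succ_sub_succ, Nat.sub_zero, pow_zero, one_mul, pow_succ']
      rw [ocSeq_succ_snd, ih1, Finset.mul_sum, add_comm]
      congr 1
      exact Finset.sum_congr rfl fun m _ => by ring
    · rw [Finset.sum_range_succ']
      simp only [Nat.succ_sub_succ, Nat.sub_zero]
      rw [ocSeq_succ_trd, ih2]
      ring

lemma ocSeq_row {d lam γ a : ℝ} (hlam : 0 < lam) (hγ : 0 ≤ γ) (ha : 0 < a)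
    (ha1 : a ≤ 1) (hd : lam + γ ≤ d) (N i : ℕ) (hi : i ≤ N) :
    ∑ j ∈ range (N + 1),
      (if j < i then 0 else if j = i then d else lam * a ^ (j - i) + γ) *
        (ocSeq d lam γ a (N - j)).1 = 1 := by
  rw [Finset.range_eq_Ico,
    ← Finset.sum_Ico_consecutive _ (Nat.zero_le i) (by omega : i ≤ N + 1)]
  have h1 : ∑ j ∈ Finset.Ico 0 i,
      (if j < i then 0 else if j = i then d else lam * a ^ (j - i) + γ) *
        (ocSeq d lam γ a (N - j)).1 = 0 := by
    apply Finset.sum_eq_zero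
    intro j hj
    simp only [Finset.mem_Ico] at hj
    rw [if_pos hj.2, zero_mul]
  rw [h1, zero_add, Finset.sum_Ico_eq_sum_range]
  have hk : N + 1 - i = (N - i) + 1 := by omega
  rw [hk]
  set k := N - i with hkdef
  have h2 : ∀ m ∈ range (k + 1),
      (if i + m < i then 0 else if i + m = i then d else lam * a ^ (i + m - i) + γ) *
          (ocSeq d lam γ a (N - (i + m))).1 =
        (lam * a ^ m * (ocSeq d lam γ a (k - m)).1
          + γ * (ocSeq d lam γ a (k - m)).1)
          + (if m = 0 then (d - lam - γ) * (ocSeq d lam γ a k).1 else 0) := by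
    intro m _
    have hN : N - (i + m) = k - m := by omega
    rw [hN]
    by_cases hm : m = 0
    · subst hm
      simp only [Nat.add_zero, lt_irrefl, if_false, if_pos rfl, if_true, Nat.sub_zero,
        pow_zero]
      ring
    · have h3 : ¬ (i + m < i) := by omega
      have h4 : ¬ (i + m = i) := by omega
      rw [if_neg h3, if_neg h4, if_neg hm]
      have : i + m - i = m := by omega
      rw [this]
      ring
  rw [Finset.sum_congr rfl h2]
  rw [Finset.sum_add_distrib, Finset.sum_add_distrib]
  have h5 : ∑ m ∈ range (k + 1),
      (if m = 0 then (d - lam - γ) * (ocSeq d lam γ a k).1 else 0) =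
      (d - lam - γ) * (ocSeq d lam γ a k).1 := by
    rw [Finset.sum_ite_eq' (range (k + 1)) 0 (fun _ => (d - lam - γ) * (ocSeq d lam γ a k).1)]
    simp
  obtain ⟨hs1, hs2⟩ := ocSeq_sum d lam γ a k
  obtain ⟨_, _, _, _, heq⟩ := ocSeq_inv hlam hγ ha ha1 hd k
  have e1 : ∑ m ∈ range (k + 1), lam * a ^ m * (ocSeq d lam γ a (k - m)).1 =
      lam * (ocSeq d lam γ a k).2.1 := by
    rw [hs1, Finset.mul_sum]
    apply Finset.sum_congr rfl
    intro m _
    ring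
  have e2 : ∑ m ∈ range (k + 1), γ * (ocSeq d lam γ a (k - m)).1 =
      γ * (ocSeq d lam γ a k).2.2 := by
    rw [hs2, Finset.mul_sum]
  rw [h5, e1, e2]
  linarith

theorem w_nonneg_of_large_transaction_costs (lam γ θ T : ℝ)
    (hlam : 0 < lam) (hγ : 0 ≤ γ) (hT : 0 < T)
    (hθ : (lam + γ) / 4 ≤ θ) :
    ∀ (N : ℕ), 0 < N → ∀ (ρ : ℝ), 0 < ρ →
    ∀ (Γ Γθ Γt : Matrix (Fin (N + 1)) (Fin (N + 1)) ℝ)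
      (w : Fin (N + 1) → ℝ),
      (∀ i j : Fin (N + 1), Γ i j =
        lam * Real.exp (-ρ * |(i : ℝ) * T / N - (j : ℝ) * T / N|) + γ) →
      Γθ = Γ + (2 * θ) • (1 : Matrix (Fin (N + 1)) (Fin (N + 1)) ℝ) →
      (∀ i j : Fin (N + 1),
        Γt i j = if j < i then Γ i j else if i = j then Γ i i / 2 else 0) →
      w = (1 / ((fun _ : Fin (N + 1) => (1 : ℝ)) ⬝ᵥ
            (Γθ - Γt)⁻¹.mulVec (fun _ => 1))) •
          (Γθ - Γt)⁻¹.mulVec (fun _ => 1) →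
      ∀ i : Fin (N + 1), 0 ≤ w i := by
  intro N hN ρ hρ Γ Γθ Γt w hΓ hΓθ hΓt hw
  have hNR : (0 : ℝ) < N := by exact_mod_cast hN
  set hstep := T / N with hhdef
  have hh0 : 0 < hstep := div_pos hT hNR
  set a := Real.exp (-ρ * hstep) with hadef
  have ha : 0 < a := Real.exp_pos _
  have ha1 : a ≤ 1 := by
    calc a = Real.exp (-ρ * hstep) := hadef
      _ ≤ Real.exp 0 := Real.exp_le_exp.mpr (by nlinarith)
      _ = 1 := Real.exp_zero
  set d := (lam + γ) / 2 + 2 * θ with hddef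
  have hd : lam + γ ≤ d := by
    rw [hddef]; linarith
  have hd0 : 0 < d := lt_of_lt_of_le (by linarith) hd
  set M := Γθ - Γt with hMdef
  -- compute diagonal of Γ
  have hΓdiag : ∀ i : Fin (N + 1), Γ i i = lam + γ := by
    intro i
    rw [hΓ i i, sub_self, abs_zero, mul_zero, Real.exp_zero, mul_one]
  -- entries of M
  have hMe : ∀ i j : Fin (N + 1), M i j =
      if (j : ℕ) < (i : ℕ) then 0 else if (j : ℕ) = (i : ℕ) then d
        else lam * a ^ ((j : ℕ) - (i : ℕ)) + γ := by
    intro i j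
    have hM1 : M i j = Γ i j + (2 * θ) * (if i = j then (1 : ℝ) else 0) - Γt i j := by
      rw [hMdef, Matrix.sub_apply, hΓθ, Matrix.add_apply, Matrix.smul_apply,
        Matrix.one_apply, smul_eq_mul]
    rcases lt_trichotomy ((j : ℕ)) ((i : ℕ)) with hji | hji | hji
    · rw [if_pos hji]
      have hne : i ≠ j := by
        intro hij; rw [hij] at hji; omega
      have hlt : j < i := hji
      rw [hM1, hΓt i j, if_pos hlt, if_neg hne, mul_zero, add_zero, sub_self]
    · rw [if_neg (by omega), if_pos hji]
      have hij : i = j := Fin.ext hji.symm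
      subst hij
      rw [hM1, hΓt i i, if_neg (lt_irrefl i), if_pos rfl, if_pos rfl, mul_one,
        hΓdiag i, hddef]
      ring
    · rw [if_neg (by omega), if_neg (by omega)]
      have hne : i ≠ j := by
        intro hij; rw [hij] at hji; omega
      have hnlt : ¬ j < i := by
        rw [Fin.lt_def]; omega
      rw [hM1, hΓt i j]
      simp only [if_neg hne, if_neg hnlt, mul_zero, add_zero, sub_zero]
      rw [hΓ i j]
      congr 1
      congr 1
      have habs : |(i : ℝ) * T / N - (j : ℝ) * T / N| =
          (((j : ℕ) - (i : ℕ) : ℕ) : ℝ) * hstep := by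
        have hcast : (((j : ℕ) - (i : ℕ) : ℕ) : ℝ) = ((j : ℕ) : ℝ) - ((i : ℕ) : ℝ) := by
          rw [Nat.cast_sub (le_of_lt hji)]
        rw [hcast, abs_of_nonpos, hhdef]
        · field_simp
          ring
        · have : ((i : ℕ) : ℝ) ≤ ((j : ℕ) : ℝ) := by exact_mod_cast le_of_lt hji
          have hTN : 0 ≤ T / N := le_of_lt (div_pos hT hNR)
          have : (i : ℝ) * T / N - (j : ℝ) * T / N = (((i : ℕ) : ℝ) - ((j : ℕ) : ℝ)) * (T / N) := by
            ring
          rw [this]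
          apply mul_nonpos_of_nonpos_of_nonneg <;> linarith
      rw [habs, hadef, ← Real.exp_nat_mul]
      congr 1
      ring
  -- the explicit solution
  set xvec : Fin (N + 1) → ℝ := fun j => (ocSeq d lam γ a (N - (j : ℕ))).1 with hxdef
  have hxnn : ∀ j, 0 ≤ xvec j := by
    intro j
    exact (ocSeq_inv hlam hγ ha ha1 hd (N - (j : ℕ))).1
  have hMx : M.mulVec xvec = fun _ => 1 := by
    funext i
    simp only [Matrix.mulVec, dotProduct]
    have hrow := ocSeq_row hlam hγ ha ha1 hd N (i : ℕ) (Nat.lt_succ_iff.mp i.isLt)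
    rw [← hrow, ← Fin.sum_univ_eq_sum_range (fun j =>
      (if j < (i : ℕ) then 0 else if j = (i : ℕ) then d
        else lam * a ^ (j - (i : ℕ)) + γ) * (ocSeq d lam γ a (N - j)).1) (N + 1)]
    apply Finset.sum_congr rfl
    intro j _
    rw [hMe i j]
  have hdet : IsUnit M.det := by
    have htri : M.BlockTriangular id := by
      intro i j hij
      have hji : (j : ℕ) < (i : ℕ) := hij
      rw [hMe i j, if_pos hji]
    rw [Matrix.det_of_upperTriangular htri]
    have hdiag : ∀ i : Fin (N + 1), M i i = d := by
      intro i
      rw [hMe i i, if_neg (lt_irrefl _), if_pos rfl]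
    rw [Finset.prod_congr rfl (fun i _ => hdiag i), Finset.prod_const]
    exact isUnit_iff_ne_zero.mpr (pow_ne_zero _ hd0.ne')
  have hinv : M⁻¹.mulVec (fun _ => 1) = xvec := by
    rw [← hMx, Matrix.mulVec_mulVec, Matrix.nonsing_inv_mul M hdet, Matrix.one_mulVec]
  have hS : 0 ≤ (fun _ : Fin (N + 1) => (1 : ℝ)) ⬝ᵥ M⁻¹.mulVec (fun _ => 1) := by
    rw [hinv]
    simp only [dotProduct, one_mul]
    exact Finset.sum_nonneg fun j _ => hxnn j
  intro i
  rw [hw]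
  simp only [Pi.smul_apply, smul_eq_mul]
  apply mul_nonneg
  · exact one_div_nonneg.mpr hS
  · rw [hinv]
    exact hxnn i
end

section
/- In the two-agent market impact game with cost functional E[C(ξ|η)] = E[(1/2)ξ^T Γ_θ ξ + ξ^T Γ~ η] over deterministic strategies summing to X_0 and Y_0 respectively, the pair (ξ*, η*) with ξ* = ((X_0+Y_0)/2)v + ((X_0-Y_0)/2)w and η* = ((X_0+Y_0)/2)v - ((X_0-Y_0)/2)w, where v and w are the normalized vectors (Γ_θ + Γ~)^{-1}𝟏 and (Γ_θ - Γ~)^{-1}𝟏 respectively, is a Nash equilibrium: ξ* minimizes (1/2)ξ^T Γ_θ ξ + ξ^T Γ~ η* over {ξ ∈ R^{N+1} : 𝟏^T ξ = X_0}, and symmetrically for η*. -/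
open Matrix

lemma det_ne_of_quadpos {n : ℕ} (A : Matrix (Fin n) (Fin n) ℝ)
    (h : ∀ x : Fin n → ℝ, x ≠ 0 → 0 < x ⬝ᵥ A.mulVec x) : A.det ≠ 0 := by
  intro hdet
  obtain ⟨x, hx, hx0⟩ := (Matrix.exists_mulVec_eq_zero_iff).2 hdet
  have h2 := h x hx
  rw [hx0, dotProduct_zero] at h2
  exact lt_irrefl 0 h2

theorem nash_equilibrium (N : ℕ) (θ X₀ Y₀ : ℝ) (hθ : 0 ≤ θ)
    (Γ Γθm Γt : Matrix (Fin (N + 1)) (Fin (N + 1)) ℝ)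
    (hsymm : Γ.IsSymm)
    (hdiag : ∀ i j : Fin (N + 1), Γ i i = Γ j j)
    (hpd : ∀ x : Fin (N + 1) → ℝ, x ≠ 0 → 0 < x ⬝ᵥ Γ.mulVec x)
    (hΓθ : Γθm = Γ + (2 * θ) • (1 : Matrix (Fin (N + 1)) (Fin (N + 1)) ℝ))
    (hΓt : ∀ i j : Fin (N + 1),
      Γt i j = if j < i then Γ i j else if i = j then Γ i i / 2 else 0)
    (v w ξs ηs : Fin (N + 1) → ℝ)
    (hv : v = (1 / ((fun _ : Fin (N + 1) => (1 : ℝ)) ⬝ᵥ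
        (Γθm + Γt)⁻¹.mulVec fun _ => 1)) • (Γθm + Γt)⁻¹.mulVec fun _ => 1)
    (hw : w = (1 / ((fun _ : Fin (N + 1) => (1 : ℝ)) ⬝ᵥ
        (Γθm - Γt)⁻¹.mulVec fun _ => 1)) • (Γθm - Γt)⁻¹.mulVec fun _ => 1)
    (hξs : ξs = ((X₀ + Y₀) / 2) • v + ((X₀ - Y₀) / 2) • w)
    (hηs : ηs = ((X₀ + Y₀) / 2) • v - ((X₀ - Y₀) / 2) • w) :
    (∑ i, ξs i = X₀) ∧ (∑ i, ηs i = Y₀) ∧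
    (∀ ξ : Fin (N + 1) → ℝ, (∑ i, ξ i = X₀) →
      (1 / 2) * (ξs ⬝ᵥ Γθm.mulVec ξs) + ξs ⬝ᵥ Γt.mulVec ηs ≤
      (1 / 2) * (ξ ⬝ᵥ Γθm.mulVec ξ) + ξ ⬝ᵥ Γt.mulVec ηs) ∧
    (∀ η : Fin (N + 1) → ℝ, (∑ i, η i = Y₀) →
      (1 / 2) * (ηs ⬝ᵥ Γθm.mulVec ηs) + ηs ⬝ᵥ Γt.mulVec ξs ≤
      (1 / 2) * (η ⬝ᵥ Γθm.mulVec η) + η ⬝ᵥ Γt.mulVec ξs) := by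
  set a : ℝ := (X₀ + Y₀) / 2 with ha
  set b : ℝ := (X₀ - Y₀) / 2 with hb
  set one : Fin (N + 1) → ℝ := fun _ => 1 with hone
  -- Γt + Γtᵀ = Γ
  have hTsum : Γt + Γtᵀ = Γ := by
    ext i j
    have hs : Γ j i = Γ i j := congrFun (congrFun hsymm.eq i) j
    rcases lt_trichotomy i j with h | h | h
    · simp [Matrix.add_apply, Matrix.transpose_apply, hΓt, h, not_lt.2 h.le, h.ne, h.ne', hs]
    · subst h
      simp [Matrix.add_apply, Matrix.transpose_apply, hΓt]
    · simp [Matrix.add_apply, Matrix.transpose_apply, hΓt, h, not_lt.2 h.le, h.ne, h.ne']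
  -- quadratic form of Γt is half that of Γ
  have hquadT : ∀ x : Fin (N + 1) → ℝ, x ⬝ᵥ Γt.mulVec x = (x ⬝ᵥ Γ.mulVec x) / 2 := by
    intro x
    have h1 : x ⬝ᵥ (Γt + Γtᵀ).mulVec x = x ⬝ᵥ Γ.mulVec x := by rw [hTsum]
    rw [add_mulVec, dotProduct_add] at h1
    have h2 : x ⬝ᵥ Γtᵀ.mulVec x = x ⬝ᵥ Γt.mulVec x := by
      rw [mulVec_transpose, dotProduct_comm, ← dotProduct_mulVec]
    linarith
  -- Γθm is symmetric
  have hGsymm : Γθmᵀ = Γθm := by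
    rw [hΓθ]
    simp [Matrix.transpose_add, Matrix.transpose_smul, hsymm.eq]
  have hGdot : ∀ u r : Fin (N + 1) → ℝ, u ⬝ᵥ Γθm.mulVec r = r ⬝ᵥ Γθm.mulVec u := by
    intro u r
    rw [dotProduct_mulVec, ← mulVec_transpose, hGsymm, dotProduct_comm]
  -- quadratic form of Γθm
  have hquadG : ∀ x : Fin (N + 1) → ℝ,
      x ⬝ᵥ Γθm.mulVec x = x ⬝ᵥ Γ.mulVec x + 2 * θ * (x ⬝ᵥ x) := by
    intro x
    rw [hΓθ, add_mulVec, smul_mulVec, one_mulVec, dotProduct_add, dotProduct_smul]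
    simp [smul_eq_mul]
  have hself : ∀ x : Fin (N + 1) → ℝ, 0 ≤ x ⬝ᵥ x := fun x =>
    Finset.sum_nonneg fun i _ => mul_self_nonneg (x i)
  have hGpos : ∀ x : Fin (N + 1) → ℝ, x ≠ 0 → 0 < x ⬝ᵥ Γθm.mulVec x := by
    intro x hx
    have := hpd x hx
    have h2 := hself x
    rw [hquadG]
    nlinarith
  -- positivity of the quadratic forms of A = Γθm + Γt and B = Γθm - Γt
  have hApos : ∀ x : Fin (N + 1) → ℝ, x ≠ 0 → 0 < x ⬝ᵥ (Γθm + Γt).mulVec x := by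
    intro x hx
    rw [add_mulVec, dotProduct_add, hquadT, hquadG]
    have := hpd x hx
    have h2 := hself x
    nlinarith
  have hBpos : ∀ x : Fin (N + 1) → ℝ, x ≠ 0 → 0 < x ⬝ᵥ (Γθm - Γt).mulVec x := by
    intro x hx
    rw [sub_mulVec, dotProduct_sub, hquadT, hquadG]
    have := hpd x hx
    have h2 := hself x
    nlinarith
  -- general facts about such matrices
  have hInv : ∀ M : Matrix (Fin (N + 1)) (Fin (N + 1)) ℝ,
      (∀ x : Fin (N + 1) → ℝ, x ≠ 0 → 0 < x ⬝ᵥ M.mulVec x) →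
      M.mulVec (M⁻¹.mulVec one) = one ∧ 0 < one ⬝ᵥ M⁻¹.mulVec one := by
    intro M hM
    have hdet := det_ne_of_quadpos M hM
    have h1 : M * M⁻¹ = 1 := Matrix.mul_nonsing_inv M (Ne.isUnit hdet)
    have h2 : M.mulVec (M⁻¹.mulVec one) = one := by
      rw [Matrix.mulVec_mulVec, h1, Matrix.one_mulVec]
    refine ⟨h2, ?_⟩
    have hy : M⁻¹.mulVec one ≠ 0 := by
      intro h0
      rw [h0, Matrix.mulVec_zero] at h2
      have := congrFun h2 0
      simp [hone] at this
    have h3 : one ⬝ᵥ M⁻¹.mulVec one = (M⁻¹.mulVec one) ⬝ᵥ M.mulVec (M⁻¹.mulVec one) := by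
      rw [h2]
      exact dotProduct_comm _ _
    rw [h3]
    exact hM _ hy
  obtain ⟨hAone, hAc⟩ := hInv (Γθm + Γt) hApos
  obtain ⟨hBone, hBc⟩ := hInv (Γθm - Γt) hBpos
  set cA : ℝ := one ⬝ᵥ (Γθm + Γt)⁻¹.mulVec one with hcA
  set cB : ℝ := one ⬝ᵥ (Γθm - Γt)⁻¹.mulVec one with hcB
  have hcA0 : cA ≠ 0 := ne_of_gt hAc
  have hcB0 : cB ≠ 0 := ne_of_gt hBc
  -- A v = (1/cA) • 1, B w = (1/cB) • 1
  have hAv : (Γθm + Γt).mulVec v = (1 / cA) • one := by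
    rw [hv, mulVec_smul, hAone]
  have hBw : (Γθm - Γt).mulVec w = (1 / cB) • one := by
    rw [hw, mulVec_smul, hBone]
  -- sums of v and w are 1
  have hsv : ∑ i, v i = 1 := by
    have : ∑ i, v i = (1 / cA) * cA := by
      rw [hv]
      simp only [Pi.smul_apply, smul_eq_mul, ← Finset.mul_sum]
      congr 1
      simp [hcA, dotProduct, hone]
    rw [this]
    field_simp
  have hsw : ∑ i, w i = 1 := by
    have : ∑ i, w i = (1 / cB) * cB := by
      rw [hw]
      simp only [Pi.smul_apply, smul_eq_mul, ← Finset.mul_sum]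
      congr 1
      simp [hcB, dotProduct, hone]
    rw [this]
    field_simp
  -- sums of ξs and ηs
  have hsξ : ∑ i, ξs i = X₀ := by
    rw [hξs]
    simp only [Pi.add_apply, Pi.smul_apply, smul_eq_mul, Finset.sum_add_distrib,
      ← Finset.mul_sum, hsv, hsw, ha, hb]
    ring
  have hsη : ∑ i, ηs i = Y₀ := by
    rw [hηs]
    simp only [Pi.sub_apply, Pi.smul_apply, smul_eq_mul, Finset.sum_sub_distrib,
      ← Finset.mul_sum, hsv, hsw, ha, hb]
    ring
  -- stationarity conditions
  have hstat1 : Γθm.mulVec ξs + Γt.mulVec ηs = (a / cA + b / cB) • one := by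
    funext i
    have f1 := congrFun hAv i
    have f2 := congrFun hBw i
    simp only [add_mulVec, sub_mulVec, Pi.add_apply, Pi.sub_apply, Pi.smul_apply,
      smul_eq_mul, hone] at f1 f2
    rw [hξs, hηs]
    simp only [mulVec_add, mulVec_sub, mulVec_smul, Pi.add_apply, Pi.sub_apply,
      Pi.smul_apply, smul_eq_mul, hone]
    rw [mul_one] at f1 f2 ⊢
    field_simp at f1 f2 ⊢
    linear_combination (a * cB) * f1 + (b * cA) * f2
  have hstat2 : Γθm.mulVec ηs + Γt.mulVec ξs = (a / cA - b / cB) • one := by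
    funext i
    have f1 := congrFun hAv i
    have f2 := congrFun hBw i
    simp only [add_mulVec, sub_mulVec, Pi.add_apply, Pi.sub_apply, Pi.smul_apply,
      smul_eq_mul, hone] at f1 f2
    rw [hξs, hηs]
    simp only [mulVec_add, mulVec_sub, mulVec_smul, Pi.add_apply, Pi.sub_apply,
      Pi.smul_apply, smul_eq_mul, hone]
    rw [mul_one] at f1 f2 ⊢
    field_simp at f1 f2 ⊢
    linear_combination (a * cB) * f1 - (b * cA) * f2
  -- the general optimality argument
  have opt : ∀ (xs z : Fin (N + 1) → ℝ) (lam : ℝ),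
      Γθm.mulVec xs + Γt.mulVec z = lam • one →
      ∀ x : Fin (N + 1) → ℝ, ∑ i, x i = ∑ i, xs i →
      (1 / 2) * (xs ⬝ᵥ Γθm.mulVec xs) + xs ⬝ᵥ Γt.mulVec z ≤
      (1 / 2) * (x ⬝ᵥ Γθm.mulVec x) + x ⬝ᵥ Γt.mulVec z := by
    intro xs z lam hst x hx
    set d : Fin (N + 1) → ℝ := x - xs with hd
    have hxd : x = xs + d := by simp [hd]
    have hdsum : ∑ i, d i = 0 := by
      simp only [hd, Pi.sub_apply, Finset.sum_sub_distrib, hx, sub_self]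
    have expand : (1 / 2) * (x ⬝ᵥ Γθm.mulVec x) + x ⬝ᵥ Γt.mulVec z
        = (1 / 2) * (xs ⬝ᵥ Γθm.mulVec xs) + xs ⬝ᵥ Γt.mulVec z
          + (1 / 2) * (d ⬝ᵥ Γθm.mulVec d) + d ⬝ᵥ (Γθm.mulVec xs + Γt.mulVec z) := by
      rw [hxd]
      simp only [mulVec_add, dotProduct_add, add_dotProduct]
      have hsy := hGdot xs d
      linarith
    have h0 : d ⬝ᵥ (lam • one) = 0 := by
      have : d ⬝ᵥ (lam • one) = lam * ∑ i, d i := by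
        simp [dotProduct, hone, Finset.mul_sum, mul_comm]
      rw [this, hdsum, mul_zero]
    have hq : 0 ≤ d ⬝ᵥ Γθm.mulVec d := by
      rcases eq_or_ne d 0 with h | h
      · simp [h]
      · exact (hGpos d h).le
    rw [expand, hst, h0]
    linarith
  refine ⟨hsξ, hsη, ?_, ?_⟩
  · intro ξ hξ
    exact opt ξs ηs _ hstat1 ξ (by rw [hξ, hsξ])
  · intro η hη
    exact opt ηs ξs _ hstat2 η (by rw [hη, hsη])
end
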